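/- arXiv:2305.11730 — 6 statements merged into one kernel-verified Lean document; each statement's English description precedes it below -/
import Mathlib

section
/- Let A and B be N×N mutually inverse matrices over a commutative ring, and let (σ, σ') and (τ, τ') be pairs of complementary ordered subsets of {1,...,N} with |σ| = |τ|. Then det(A^σ_τ) = ε · det(A) · det(B^{τ'}_{σ'}), where A^σ_τ denotes the submatrix of A with rows indexed by σ and columns by τ, and ε is the product of the signs of the permutations formed by concatenating σσ' and ττ'. -/
open Matrix

lemma core_blocks {R : Type*} [CommRing R] {m n : Type*} [Fintype m] [Fintype n]
    [DecidableEq m] [DecidableEq n]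
    (A B : Matrix (m ⊕ n) (m ⊕ n) R) (hAB : A * B = 1) :
    (A.toBlocks₁₁).det = A.det * (B.toBlocks₂₂).det := by
  have hAB' : fromBlocks (A.toBlocks₁₁ * B.toBlocks₁₁ + A.toBlocks₁₂ * B.toBlocks₂₁)
      (A.toBlocks₁₁ * B.toBlocks₁₂ + A.toBlocks₁₂ * B.toBlocks₂₂)
      (A.toBlocks₂₁ * B.toBlocks₁₁ + A.toBlocks₂₂ * B.toBlocks₂₁)
      (A.toBlocks₂₁ * B.toBlocks₁₂ + A.toBlocks₂₂ * B.toBlocks₂₂)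
      = fromBlocks 1 0 0 1 := by
    rw [← fromBlocks_multiply, fromBlocks_toBlocks, fromBlocks_toBlocks, hAB, fromBlocks_one]
  rw [fromBlocks_inj] at hAB'
  obtain ⟨-, h12, -, h22⟩ := hAB'
  have hC : A * fromBlocks 1 B.toBlocks₁₂ 0 B.toBlocks₂₂
      = fromBlocks A.toBlocks₁₁ 0 A.toBlocks₂₁ 1 := by
    conv_lhs => rw [← fromBlocks_toBlocks A]
    rw [fromBlocks_multiply]
    congr 1 <;> simp [h12, h22]
  have := congrArg Matrix.det hC
  rw [det_mul, det_fromBlocks_zero₂₁, det_fromBlocks_zero₁₂, det_one, det_one,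
    one_mul, mul_one] at this
  exact this.symm

/-- **Complementary cofactor lemma.**
Let `A` and `B` be mutually inverse `N × N` matrices over a commutative ring.
An ordered subset `σ` of `{1,…,N}` of size `s`, together with its complement `σ'`
listed in increasing order, is encoded by a permutation `π` of `Fin N`:
`σ = (π 0, …, π (s-1))` and `σ' = (π s, …, π (N-1))`, where `π` is strictly
increasing on the last `N - s` indices (so the complement is in increasing order).
Similarly `τ, τ'` are encoded by `ρ`.  Then
`det (A^σ_τ) = ε · det A · det (B^{τ'}_{σ'})` where `ε = sign π · sign ρ`. -/
theorem stmt1 {R : Type*} [CommRing R] (N s : ℕ) (hs : s ≤ N)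
    (A B : Matrix (Fin N) (Fin N) R) (hAB : A * B = 1) (hBA : B * A = 1)
    (π ρ : Equiv.Perm (Fin N))
    (hπ : ∀ i j : Fin N, s ≤ (i : ℕ) → i < j → π i < π j)
    (hρ : ∀ i j : Fin N, s ≤ (i : ℕ) → i < j → ρ i < ρ j) :
    (A.submatrix (fun i : Fin s => π (Fin.castLE hs i))
        (fun j : Fin s => ρ (Fin.castLE hs j))).det
      = (((Equiv.Perm.sign π : ℤ) * (Equiv.Perm.sign ρ : ℤ) : ℤ) : R) *
        (A.det * (B.submatrix
            (fun i : Fin (N - s) => ρ ⟨s + (i : ℕ), by have := i.isLt; omega⟩)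
            (fun j : Fin (N - s) => π ⟨s + (j : ℕ), by have := j.isLt; omega⟩)).det) := by
  have hNs : s + (N - s) = N := by omega
  set e : Fin s ⊕ Fin (N - s) ≃ Fin N := finSumFinEquiv.trans (finCongr hNs) with he
  set f : Fin s ⊕ Fin (N - s) ≃ Fin N := e.trans π with hf
  set g : Fin s ⊕ Fin (N - s) ≃ Fin N := e.trans ρ with hg
  set A' : Matrix _ _ R := A.submatrix f g with hA'
  set B' : Matrix _ _ R := B.submatrix g f with hB'
  have hmul : A' * B' = 1 := by
    rw [hA', hB', submatrix_mul_equiv, hAB, submatrix_one_equiv]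
  have key := core_blocks A' B' hmul
  have h11 : A'.toBlocks₁₁ = A.submatrix (fun i : Fin s => π (Fin.castLE hs i))
      (fun j : Fin s => ρ (Fin.castLE hs j)) := by
    ext i j
    show A (f (Sum.inl i)) (g (Sum.inl j)) = _
    have h1 : e (Sum.inl i) = Fin.castLE hs i := Fin.ext (by simp [he])
    have h2 : e (Sum.inl j) = Fin.castLE hs j := Fin.ext (by simp [he])
    simp [hf, hg, h1, h2]
  have h22 : B'.toBlocks₂₂ = B.submatrix
      (fun i : Fin (N - s) => ρ ⟨s + (i : ℕ), by have := i.isLt; omega⟩)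
      (fun j : Fin (N - s) => π ⟨s + (j : ℕ), by have := j.isLt; omega⟩) := by
    ext i j
    show B (g (Sum.inr i)) (f (Sum.inr j)) = _
    have h1 : e (Sum.inr i) = (⟨s + (i : ℕ), by have := i.isLt; omega⟩ : Fin N) :=
      Fin.ext (by simp [he])
    have h2 : e (Sum.inr j) = (⟨s + (j : ℕ), by have := j.isLt; omega⟩ : Fin N) :=
      Fin.ext (by simp [he])
    simp [hf, hg, h1, h2]
  have hdetA' : A'.det = ((Equiv.Perm.sign π : ℤ) : R) * ((Equiv.Perm.sign ρ : ℤ) : R) * A.det := by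
    have : A' = (A.submatrix π ρ).submatrix e e := by
      rw [hA', submatrix_submatrix]; rfl
    rw [this, det_submatrix_equiv_self]
    have : A.submatrix π ρ = (A.submatrix id ρ).submatrix π id := by
      rw [submatrix_submatrix]; rfl
    rw [this, det_permute, det_permute']
    push_cast
    ring
  rw [h11, h22] at key
  rw [key, hdetA']
  push_cast
  ring
end

section
/- For non-negative integers m, N, an integer k, and a parameter t, the N×N matrix E with (i,j)-entry e_{i-j}(X) + [j < m + ⌈k/2⌉] · t · e_{i+j-2m-k}(X) and the N×N matrix H with (i,j)-entry (-1)^{i-j}(h_{i-j}(X) - [i > m + ⌊k/2⌋] · (-1)^k · t · h_{2m-i-j+k}(X)) are both lower-unitriangular and are mutually inverse (E·H = H·E = I). -/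
/-- The ring of formal power series in countably many variables `x_1, x_2, …`,
in which symmetric functions in a countable alphabet live. -/
noncomputable abbrev SFRing : Type := MvPowerSeries ℕ ℤ

/-- Elementary symmetric function `e_r`; `0` for `r < 0`, `1` for `r = 0`. -/
noncomputable def esf (r : ℤ) : SFRing :=
  fun d => if (∀ i ∈ d.support, d i = 1) ∧ (d.sum fun _ e => (e : ℤ)) = r then 1 else 0

/-- Complete homogeneous symmetric function `h_r`; `0` for `r < 0`, `1` for `r = 0`. -/
noncomputable def hsf (r : ℤ) : SFRing :=
  fun d => if (d.sum fun _ e => (e : ℤ)) = r then 1 else 0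

/- ### weight -/

def wt (d : ℕ →₀ ℕ) : ℤ := d.sum fun _ e => (e : ℤ)

lemma wt_nonneg (d : ℕ →₀ ℕ) : 0 ≤ wt d :=
  Finset.sum_nonneg fun _ _ => Int.natCast_nonneg _

lemma wt_eq_zero_iff (d : ℕ →₀ ℕ) : wt d = 0 ↔ d = 0 := by
  constructor
  · intro h
    have h2 : ∀ i ∈ d.support, (d i : ℤ) = 0 := by
      rw [← Finset.sum_eq_zero_iff_of_nonneg (fun _ _ => Int.natCast_nonneg _)]
      exact h
    ext i
    by_cases hi : i ∈ d.support
    · exact_mod_cast h2 i hi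
    · simpa using Finsupp.notMem_support_iff.mp hi
  · rintro rfl; simp [wt]

lemma coeff_hsf (d : ℕ →₀ ℕ) (r : ℤ) :
    MvPowerSeries.coeff d (hsf r) = if wt d = r then 1 else 0 := rfl

lemma coeff_esf (d : ℕ →₀ ℕ) (r : ℤ) :
    MvPowerSeries.coeff d (esf r) =
      if (∀ i ∈ d.support, d i = 1) ∧ wt d = r then 1 else 0 := rfl

lemma hsf_neg (r : ℤ) (h : r < 0) : hsf r = 0 := by
  ext d
  rw [coeff_hsf, if_neg (by have := wt_nonneg d; omega), map_zero]

lemma esf_neg (r : ℤ) (h : r < 0) : esf r = 0 := by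
  ext d
  rw [coeff_esf, if_neg (fun hc => by have := wt_nonneg d; omega), map_zero]

lemma hsf_zero : hsf 0 = 1 := by
  ext d
  rw [MvPowerSeries.coeff_one, coeff_hsf, if_congr (wt_eq_zero_iff d) rfl rfl]

lemma esf_zero : esf 0 = 1 := by
  ext d
  rw [MvPowerSeries.coeff_one, coeff_esf]
  congr 1
  simp only [eq_iff_iff]
  constructor
  · rintro ⟨-, h⟩; exact (wt_eq_zero_iff d).mp h
  · rintro rfl; simp [wt]

lemma wt_add (a b : ℕ →₀ ℕ) : wt (a + b) = wt a + wt b := by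
  unfold wt
  exact Finsupp.sum_add_index' (fun _ => rfl) (fun _ x y => by push_cast; ring)

lemma wt_single (i v : ℕ) : wt (Finsupp.single i v) = v := by
  simp [wt, Finsupp.sum_single_index]

lemma wt_update (a : ℕ →₀ ℕ) (i v : ℕ) : wt (a.update i v) = wt a - a i + v := by
  have h1 := wt_add (Finsupp.single i v) (Finsupp.erase i a)
  rw [← Finsupp.update_eq_single_add_erase] at h1
  have h2 := wt_add (Finsupp.single i (a i)) (Finsupp.erase i a)
  rw [Finsupp.single_add_erase] at h2
  rw [wt_single] at h1 h2
  omega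

/- ### signs -/

def Sg (n : ℤ) : ℤ := if Even n then 1 else -1

lemma Sg_add_one (n : ℤ) : Sg (n + 1) = - Sg n := by
  simp only [Sg, Int.even_add_one]
  by_cases h : Even n <;> simp [h]

lemma Sg_eq_of_even_sub {a b : ℤ} (h : Even (a - b)) : Sg a = Sg b := by
  unfold Sg
  rw [Int.even_sub] at h
  by_cases ha : Even a
  · rw [if_pos ha, if_pos (h.mp ha)]
  · rw [if_neg ha, if_neg (fun hb => ha (h.mpr hb))]

lemma Sg_sub (a b : ℤ) : Sg (a - b) = Sg a * Sg b := by
  unfold Sg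
  by_cases ha : Even a <;> by_cases hb : Even b <;>
    simp [Int.even_sub, ha, hb]

lemma Sg_add (a b : ℤ) : Sg (a + b) = Sg a * Sg b := by
  rw [Sg_eq_of_even_sub (show Even (a + b - (a - b)) from ⟨b, by ring⟩), Sg_sub]

noncomputable def SgR (n : ℤ) : SFRing := ((Sg n : ℤ) : SFRing)

lemma SgR_natAbs (n : ℤ) : (-1 : SFRing) ^ n.natAbs = SgR n := by
  unfold SgR Sg
  by_cases h : Even n
  · rw [if_pos h, (Int.natAbs_even.mpr h).neg_one_pow]; norm_num
  · rw [if_neg h, (Int.natAbs_odd.mpr (Int.not_even_iff_odd.mp h)).neg_one_pow]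
    norm_num

lemma neg_one_pow_nat (a b : ℕ) : (-1 : SFRing) ^ (a + b) = SgR ((a : ℤ) + (b : ℤ)) := by
  rw [show (a : ℤ) + (b : ℤ) = ((a + b : ℕ) : ℤ) by push_cast; ring, ← SgR_natAbs,
    Int.natAbs_natCast]

lemma SgR_smul (n : ℤ) (x : SFRing) : Sg n • x = SgR n * x := by
  rw [zsmul_eq_mul]; rfl

lemma SgR_eq_of_even_sub {a b : ℤ} (h : Even (a - b)) : SgR a = SgR b := by
  unfold SgR; rw [Sg_eq_of_even_sub h]

lemma SgR_mul (a b : ℤ) : SgR a * SgR b = SgR (a + b) := by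
  unfold SgR; rw [Sg_add]; push_cast; ring

/- ### the involution -/

lemma claim (d : ℕ →₀ ℕ) (hd : d ≠ 0) :
    ∑ p ∈ Finset.HasAntidiagonal.antidiagonal d,
      (if ∀ x ∈ p.1.support, p.1 x = 1 then Sg (wt p.1) else 0) = 0 := by
  rw [Finset.sum_ite, Finset.sum_const_zero, add_zero]
  obtain ⟨i0, hi0⟩ : d.support.Nonempty := Finsupp.support_nonempty_iff.mpr hd
  have hdi0 : 1 ≤ d i0 := Nat.one_le_iff_ne_zero.mpr (Finsupp.mem_support_iff.mp hi0)
  set s := Finset.filter (fun p : (ℕ →₀ ℕ) × (ℕ →₀ ℕ) => ∀ x ∈ p.1.support, p.1 x = 1)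
      (Finset.HasAntidiagonal.antidiagonal d) with hs
  have key : ∀ p ∈ s, p.1 + p.2 = d ∧ p.1 i0 ≤ 1 := by
    intro p hp
    rw [hs, Finset.mem_filter, Finset.HasAntidiagonal.mem_antidiagonal] at hp
    refine ⟨hp.1, ?_⟩
    by_cases h : p.1 i0 = 0
    · omega
    · exact le_of_eq (hp.2 i0 (Finsupp.mem_support_iff.mpr h))
  refine Finset.sum_involution
    (fun p _ => (p.1.update i0 (1 - p.1 i0), p.2.update i0 (d i0 - (1 - p.1 i0)))) ?_ ?_ ?_ ?_
  · intro p hp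
    obtain ⟨hpd, hple⟩ := key p hp
    have hab : p.1 i0 + p.2 i0 = d i0 := by
      have := DFunLike.congr_fun hpd i0; simpa using this
    rw [wt_update]
    rcases Nat.le_one_iff_eq_zero_or_eq_one.mp hple with h | h
    · rw [h]; push_cast
      rw [show wt p.1 - 0 + 1 = wt p.1 + 1 by ring, Sg_add_one]; ring
    · rw [h]; push_cast
      rw [show wt p.1 = (wt p.1 - 1 + 0) + 1 by ring, Sg_add_one]; ring
  · intro p hp _
    obtain ⟨-, hple⟩ := key p hp
    intro hcontra
    have := congrArg (fun q => q.1 i0) hcontra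
    simp only [Finsupp.coe_update, Function.update_self] at this
    omega
  · intro p hp
    obtain ⟨hpd, hple⟩ := key p hp
    have hab : p.1 i0 + p.2 i0 = d i0 := by
      have := DFunLike.congr_fun hpd i0; simpa using this
    rw [hs, Finset.mem_filter, Finset.HasAntidiagonal.mem_antidiagonal]
    constructor
    · ext x
      by_cases hx : x = i0
      · subst hx
        simp only [Finsupp.add_apply, Finsupp.coe_update, Function.update_self]
        omega
      · simp only [Finsupp.add_apply, Finsupp.coe_update, Function.update_of_ne hx]
        have := DFunLike.congr_fun hpd x; simpa using this
    · intro x hx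
      by_cases hxx : x = i0
      · subst hxx
        rw [Finsupp.mem_support_iff] at hx
        simp only [Finsupp.coe_update, Function.update_self] at hx ⊢
        omega
      · rw [Finsupp.mem_support_iff] at hx
        simp only [Finsupp.coe_update, Function.update_of_ne hxx] at hx ⊢
        rw [hs, Finset.mem_filter] at hp
        exact hp.2 x (Finsupp.mem_support_iff.mpr hx)
  · intro p hp
    obtain ⟨hpd, hple⟩ := key p hp
    have hab : p.1 i0 + p.2 i0 = d i0 := by
      have := DFunLike.congr_fun hpd i0; simpa using this
    have h1 : (p.1.update i0 (1 - p.1 i0)) i0 = 1 - p.1 i0 := by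
      simp [Finsupp.coe_update]
    ext x
    · simp only [Finsupp.coe_update, h1]
      by_cases hx : x = i0
      · subst hx; simp [Function.update_self]; omega
      · simp [Function.update_of_ne hx]
    · simp only [Finsupp.coe_update, h1]
      by_cases hx : x = i0
      · subst hx; simp [Function.update_self]; omega
      · simp [Function.update_of_ne hx]

/- ### the convolution identity -/

lemma conv (N : ℕ) (i j : ℤ) (hi : i < N) (hj : 0 ≤ j) :
    ∑ l ∈ Finset.range N, Sg ((l : ℤ) + j) • (esf (i - l) * hsf ((l : ℤ) - j)) =
      if i = j then 1 else 0 := by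
  ext d
  rw [map_sum, apply_ite (MvPowerSeries.coeff d), map_zero, MvPowerSeries.coeff_one]
  have hdecomp : ∀ l ∈ Finset.range N,
      (MvPowerSeries.coeff d) (Sg ((l : ℤ) + j) • (esf (i - l) * hsf ((l : ℤ) - j))) =
      ∑ p ∈ Finset.HasAntidiagonal.antidiagonal d, Sg ((l : ℤ) + j) *
        ((if (∀ x ∈ p.1.support, p.1 x = 1) ∧ wt p.1 = i - l then 1 else 0) *
         (if wt p.2 = (l : ℤ) - j then 1 else 0)) := by
    intro l _
    rw [map_zsmul, smul_eq_mul, MvPowerSeries.coeff_mul, Finset.mul_sum]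
    refine Finset.sum_congr rfl fun p _ => ?_
    rw [coeff_esf, coeff_hsf]
  rw [Finset.sum_congr rfl hdecomp, Finset.sum_comm]
  have hcollapse : ∀ p ∈ Finset.HasAntidiagonal.antidiagonal d,
      (∑ l ∈ Finset.range N, Sg ((l : ℤ) + j) *
        ((if (∀ x ∈ p.1.support, p.1 x = 1) ∧ wt p.1 = i - l then 1 else 0) *
         (if wt p.2 = (l : ℤ) - j then 1 else 0))) =
      if (∀ x ∈ p.1.support, p.1 x = 1) ∧ wt d = i - j then Sg (i - j) * Sg (wt p.1)
        else 0 := by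
    intro p hp
    rw [Finset.HasAntidiagonal.mem_antidiagonal] at hp
    have hwd : wt p.1 + wt p.2 = wt d := by rw [← wt_add, hp]
    by_cases hcond : (∀ x ∈ p.1.support, p.1 x = 1) ∧ wt d = i - j
    · rw [if_pos hcond]
      have hl0nn : 0 ≤ j + wt p.2 := by have := wt_nonneg p.2; omega
      set l0 : ℕ := (j + wt p.2).toNat with hl0
      have hl0' : (l0 : ℤ) = j + wt p.2 := Int.toNat_of_nonneg hl0nn
      have hl0i : (l0 : ℤ) = i - wt p.1 := by omega
      have hl0N : l0 ∈ Finset.range N := by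
        rw [Finset.mem_range]
        have := wt_nonneg p.1
        omega
      rw [Finset.sum_eq_single_of_mem l0 hl0N ?_]
      · rw [if_pos ⟨hcond.1, by omega⟩, if_pos (by omega)]
        rw [Sg_eq_of_even_sub (a := (l0 : ℤ) + j) (b := (i - j) + wt p.1)
          ⟨j - wt p.1, by omega⟩, Sg_add]
        ring
      · intro b _ hne
        by_cases h1 : (∀ x ∈ p.1.support, p.1 x = 1) ∧ wt p.1 = i - b
        · by_cases h2 : wt p.2 = (b : ℤ) - j
          · exfalso
            apply hne
            have : (b : ℤ) = (l0 : ℤ) := by omega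
            exact_mod_cast this
          · rw [if_neg h2]; ring
        · rw [if_neg h1]; ring
    · rw [if_neg hcond]
      apply Finset.sum_eq_zero
      intro l _
      by_cases h1 : (∀ x ∈ p.1.support, p.1 x = 1) ∧ wt p.1 = i - l
      · by_cases h2 : wt p.2 = (l : ℤ) - j
        · exact absurd ⟨h1.1, by omega⟩ hcond
        · rw [if_neg h2]; ring
      · rw [if_neg h1]; ring
  rw [Finset.sum_congr rfl hcollapse]
  by_cases hwd : wt d = i - j
  · have hsum : (∑ p ∈ Finset.HasAntidiagonal.antidiagonal d,
        if (∀ x ∈ p.1.support, p.1 x = 1) ∧ wt d = i - j then Sg (i - j) * Sg (wt p.1)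
          else 0) =
        Sg (i - j) * ∑ p ∈ Finset.HasAntidiagonal.antidiagonal d,
          (if ∀ x ∈ p.1.support, p.1 x = 1 then Sg (wt p.1) else 0) := by
      rw [Finset.mul_sum]
      refine Finset.sum_congr rfl fun p _ => ?_
      by_cases h1 : ∀ x ∈ p.1.support, p.1 x = 1
      · rw [if_pos ⟨h1, hwd⟩, if_pos h1]
      · rw [if_neg (fun hc => h1 hc.1), if_neg h1, mul_zero]
    rw [hsum]
    by_cases hd : d = 0
    · subst hd
      have hw0 : wt (0 : ℕ →₀ ℕ) = 0 := by simp [wt]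
      have hij : i = j := by omega
      rw [if_pos hij, if_pos rfl, Finsupp.antidiagonal_zero, Finset.sum_singleton,
        if_pos (by simp), hw0]
      have h0 : Sg 0 = 1 := by unfold Sg; simp
      rw [show i - j = 0 by omega, h0]
      ring
    · rw [claim d hd, mul_zero, if_neg hd]
      by_cases hij : i = j <;> simp [hij]
  · rw [Finset.sum_eq_zero (fun p _ => if_neg (fun hc => hwd hc.2))]
    by_cases hij : i = j
    · rw [if_pos hij, if_neg (fun hc => hwd (by subst hc hij; simp [wt]))]
    · rw [if_neg hij]

/- ### the correction terms and their cancellation -/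

noncomputable def CEf (m : ℕ) (k : ℤ) (t : SFRing) (l : ℤ) : SFRing :=
  if l + 1 < (m : ℤ) + Int.fdiv (k + 1) 2 then t else 0

noncomputable def CHf (m : ℕ) (k : ℤ) (t : SFRing) (l : ℤ) : SFRing :=
  if (m : ℤ) + Int.fdiv k 2 < l + 1 then SgR k * t else 0

/-- the two correction parts of the `(i,j)` entry of the product, as a function of
the summation index `l`. -/
noncomputable def f2 (m : ℕ) (k : ℤ) (t : SFRing) (i j : ℤ) (l : ℤ) : SFRing :=
  -(SgR (l + j) * (esf (i - l) * (CHf m k t l * hsf (2 * (m : ℤ) + k - 2 - l - j))))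
  + SgR (l + j) * (CEf m k t l * (esf (i - (2 * (m : ℤ) + k - 2 - l)) * hsf (l - j)))

lemma key2 (N m : ℕ) (k : ℤ) (t : SFRing) (i j : ℤ) (hiN : i < N) (hj : 0 ≤ j) :
    ∑ l ∈ Finset.range N, f2 m k t i j (l : ℤ) = 0 := by
  have hq0 : Int.fdiv k 2 = k / 2 := Int.fdiv_eq_ediv_of_nonneg _ (by norm_num)
  have hq1 : Int.fdiv (k + 1) 2 = (k + 1) / 2 := Int.fdiv_eq_ediv_of_nonneg _ (by norm_num)
  set c : ℤ := 2 * (m : ℤ) + k - 2 with hc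
  set G : ℤ → SFRing := fun l =>
    (if 0 ≤ l ∧ l < (N : ℤ) then (1 : SFRing) else 0) * f2 m k t i j l with hG
  -- the key pointwise symmetry
  have hsym : ∀ a b : ℤ, a + b = c →
      (if 0 ≤ b ∧ b < (N : ℤ) then (1 : SFRing) else 0) *
        (SgR (b + j) * (esf (i - b) * (CHf m k t b * hsf (a - j)))) =
      (if 0 ≤ a ∧ a < (N : ℤ) then (1 : SFRing) else 0) *
        (SgR (a + j) * (CEf m k t a * (esf (i - b) * hsf (a - j)))) := by
    intro a b hab
    by_cases hcnd : a + 1 < (m : ℤ) + Int.fdiv (k + 1) 2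
    · have hcnd' : (m : ℤ) + Int.fdiv k 2 < b + 1 := by rw [hq0]; rw [hq1] at hcnd; omega
      rw [CHf, CEf, if_pos hcnd', if_pos hcnd]
      have hsgn : SgR (b + j) * SgR k = SgR (a + j) := by
        rw [SgR_mul]
        exact SgR_eq_of_even_sub ⟨(m : ℤ) + k - 1 - a, by omega⟩
      by_cases hbr : 0 ≤ b ∧ b < (N : ℤ)
      · by_cases har : 0 ≤ a ∧ a < (N : ℤ)
        · rw [if_pos hbr, if_pos har, ← hsgn]; ring
        · -- a out of range, b in range: the left side must vanish
          rw [if_pos hbr, if_neg har]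
          rcases (by omega : a < 0 ∨ (N : ℤ) ≤ a) with ha | ha
          · rw [hsf_neg (a - j) (by omega)]; ring
          · exfalso
            rw [hq1] at hcnd
            omega
      · rw [if_neg hbr]
        by_cases har : 0 ≤ a ∧ a < (N : ℤ)
        · rw [if_pos har]
          rcases (by omega : b < 0 ∨ (N : ℤ) ≤ b) with hb | hb
          · exfalso
            rw [hq1] at hcnd
            omega
          · rw [esf_neg (i - b) (by omega)]; ring
        · rw [if_neg har]; ring
    · have hcnd' : ¬ ((m : ℤ) + Int.fdiv k 2 < b + 1) := by
        rw [hq0]; rw [hq1] at hcnd; omega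
      rw [CHf, CEf, if_neg hcnd', if_neg hcnd]
      ring
  -- reduce the range-N sum to a sum over a symmetric interval
  have hstep1 : ∑ l ∈ Finset.range N, f2 m k t i j (l : ℤ) =
      ∑ l ∈ Finset.range N, G (l : ℤ) := by
    refine Finset.sum_congr rfl fun l hl => ?_
    rw [Finset.mem_range] at hl
    rw [hG]
    dsimp only
    rw [if_pos ⟨Int.natCast_nonneg l, by exact_mod_cast hl⟩, one_mul]
  set J : Finset ℤ := Finset.Icc (min 0 (c - ((N : ℤ) - 1))) (max ((N : ℤ) - 1) c) with hJ
  have hstep2 : ∑ l ∈ Finset.range N, G (l : ℤ) = ∑ l ∈ J, G l := by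
    rw [show ∑ l ∈ Finset.range N, G (l : ℤ) = ∑ l ∈ Finset.Ico (0 : ℤ) (N : ℤ), G l from
      Finset.sum_nbij' (fun n => (n : ℤ)) Int.toNat
        (fun a ha => by simp only [Finset.mem_Ico]; rw [Finset.mem_range] at ha; omega)
        (fun a ha => by rw [Finset.mem_Ico] at ha; rw [Finset.mem_range]; omega)
        (fun a _ => by simp)
        (fun a ha => by rw [Finset.mem_Ico] at ha; exact Int.toNat_of_nonneg ha.1)
        (fun a _ => rfl)]
    refine Finset.sum_subset ?_ ?_
    · intro x hx
      rw [Finset.mem_Ico] at hx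
      rw [hJ, Finset.mem_Icc]
      omega
    · intro x _ hx
      rw [Finset.mem_Ico] at hx
      rw [hG]
      dsimp only
      rw [if_neg (by omega), zero_mul]
  rw [hstep1, hstep2]
  -- now cancel by the reflection l ↦ c - l
  refine Finset.sum_involution (fun l _ => c - l) ?_ ?_ ?_ ?_
  · intro l hl
    have h1 := hsym l (c - l) (by ring)
    have h2 := hsym (c - l) l (by ring)
    rw [hG]
    dsimp only
    rw [f2, f2, ← hc]
    rw [show c - (c - l) - j = l - j by ring, show i - (c - (c - l)) = i - l by ring]
    linear_combination -h1 - h2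
  · intro l hl hGl hfix
    apply hGl
    have hk : c = l + l := by omega
    have hf : f2 m k t i j l = 0 := by
      rw [f2, CEf, CHf,
        if_neg (show ¬ (l + 1 < (m : ℤ) + Int.fdiv (k + 1) 2) by rw [hq1]; omega),
        if_neg (show ¬ ((m : ℤ) + Int.fdiv k 2 < l + 1) by rw [hq0]; omega)]
      ring
    rw [hG]
    dsimp only
    rw [hf, mul_zero]
  · intro l hl
    simp only [hJ, Finset.mem_Icc] at hl ⊢
    omega
  · intro l _
    ring

/-- The matrix `𝓔(N, m, k; t)` with `(i,j)` entry (indices `1 ≤ i, j ≤ N`)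
`e_{i-j} + [j < m + ⌈k/2⌉] · t · e_{i+j-2m-k}`. -/
noncomputable def Emat (N m : ℕ) (k : ℤ) (t : SFRing) : Matrix (Fin N) (Fin N) SFRing :=
  Matrix.of fun i j =>
    esf ((i : ℤ) - (j : ℤ)) +
      (if ((j : ℤ) + 1) < (m : ℤ) + Int.fdiv (k + 1) 2 then t else 0) *
        esf (((i : ℤ) + 1) + ((j : ℤ) + 1) - 2 * (m : ℤ) - k)

/-- The matrix `𝓗(N, m, k; t)` with `(i,j)` entry (indices `1 ≤ i, j ≤ N`)
`(-1)^{i-j} (h_{i-j} - [i > m + ⌊k/2⌋] · (-1)^k · t · h_{2m-i-j+k})`. -/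
noncomputable def Hmat (N m : ℕ) (k : ℤ) (t : SFRing) : Matrix (Fin N) (Fin N) SFRing :=
  Matrix.of fun i j =>
    (-1 : SFRing) ^ ((i : ℕ) + (j : ℕ)) *
      (hsf ((i : ℤ) - (j : ℤ)) -
        (if (m : ℤ) + Int.fdiv k 2 < (i : ℤ) + 1 then
            (-1 : SFRing) ^ k.natAbs * t else 0) *
          hsf (2 * (m : ℤ) - ((i : ℤ) + 1) - ((j : ℤ) + 1) + k))

lemma Emat_corr {N m : ℕ} {k : ℤ} {t : SFRing} (i j : Fin N) (hij : (i : ℤ) ≤ (j : ℤ)) :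
    (if ((j : ℤ) + 1) < (m : ℤ) + Int.fdiv (k + 1) 2 then t else 0) *
        esf (((i : ℤ) + 1) + ((j : ℤ) + 1) - 2 * (m : ℤ) - k) = 0 := by
  have hq1 : Int.fdiv (k + 1) 2 = (k + 1) / 2 := Int.fdiv_eq_ediv_of_nonneg _ (by norm_num)
  by_cases hcnd : ((j : ℤ) + 1) < (m : ℤ) + Int.fdiv (k + 1) 2
  · rw [esf_neg _ (by rw [hq1] at hcnd; omega), mul_zero]
  · rw [if_neg hcnd, zero_mul]

lemma Hmat_corr {N m : ℕ} {k : ℤ} {t : SFRing} (i j : Fin N) (hij : (i : ℤ) ≤ (j : ℤ)) :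
    (if (m : ℤ) + Int.fdiv k 2 < (i : ℤ) + 1 then (-1 : SFRing) ^ k.natAbs * t else 0) *
          hsf (2 * (m : ℤ) - ((i : ℤ) + 1) - ((j : ℤ) + 1) + k) = 0 := by
  have hq0 : Int.fdiv k 2 = k / 2 := Int.fdiv_eq_ediv_of_nonneg _ (by norm_num)
  by_cases hcnd : (m : ℤ) + Int.fdiv k 2 < (i : ℤ) + 1
  · rw [hsf_neg _ (by rw [hq0] at hcnd; omega), mul_zero]
  · rw [if_neg hcnd, zero_mul]

/-- `𝓔(N,m,k;t)` and `𝓗(N,m,k;t)` are lower-unitriangular and mutually inverse. -/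
theorem stmt2 (N m : ℕ) (k : ℤ) (t : SFRing) :
    ((∀ i j : Fin N, i < j → Emat N m k t i j = 0) ∧ (∀ i, Emat N m k t i i = 1)) ∧
    ((∀ i j : Fin N, i < j → Hmat N m k t i j = 0) ∧ (∀ i, Hmat N m k t i i = 1)) ∧
    Emat N m k t * Hmat N m k t = 1 ∧ Hmat N m k t * Emat N m k t = 1 := by
  have hEtri : ∀ i j : Fin N, i < j → Emat N m k t i j = 0 := by
    intro i j hij
    have h : (i : ℤ) < (j : ℤ) := by exact_mod_cast (Fin.lt_iff_val_lt_val.mp hij)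
    rw [Emat, Matrix.of_apply, esf_neg _ (by omega), Emat_corr i j (le_of_lt h), add_zero]
  have hEdiag : ∀ i, Emat N m k t i i = 1 := by
    intro i
    rw [Emat, Matrix.of_apply, sub_self, esf_zero, Emat_corr i i le_rfl, add_zero]
  have hHtri : ∀ i j : Fin N, i < j → Hmat N m k t i j = 0 := by
    intro i j hij
    have h : (i : ℤ) < (j : ℤ) := by exact_mod_cast (Fin.lt_iff_val_lt_val.mp hij)
    rw [Hmat, Matrix.of_apply, hsf_neg _ (by omega), Hmat_corr i j (le_of_lt h),
      sub_zero, mul_zero]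
  have hHdiag : ∀ i, Hmat N m k t i i = 1 := by
    intro i
    rw [Hmat, Matrix.of_apply, sub_self, hsf_zero, Hmat_corr i i le_rfl, sub_zero,
      mul_one, Even.neg_one_pow ⟨(i : ℕ), rfl⟩]
  have hEH : Emat N m k t * Hmat N m k t = 1 := by
    ext i j
    rw [Matrix.mul_apply, Matrix.one_apply]
    have hentry : ∀ l : Fin N, Emat N m k t i l * Hmat N m k t l j =
        Sg (((l : ℕ) : ℤ) + (j : ℤ)) •
            (esf ((i : ℤ) - ((l : ℕ) : ℤ)) * hsf (((l : ℕ) : ℤ) - (j : ℤ)))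
          + f2 m k t (i : ℤ) (j : ℤ) ((l : ℕ) : ℤ) := by
      intro l
      rw [Emat, Hmat, Matrix.of_apply, Matrix.of_apply, SgR_smul, f2, CEf, CHf,
        neg_one_pow_nat, SgR_natAbs]
      rw [show 2 * (m : ℤ) - (((l : ℕ) : ℤ) + 1) - ((j : ℤ) + 1) + k
            = 2 * (m : ℤ) + k - 2 - ((l : ℕ) : ℤ) - (j : ℤ) by ring,
          show ((i : ℤ) + 1) + (((l : ℕ) : ℤ) + 1) - 2 * (m : ℤ) - k
            = (i : ℤ) - (2 * (m : ℤ) + k - 2 - ((l : ℕ) : ℤ)) by ring]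
      have hcross : (if (((l : ℕ) : ℤ) + 1) < (m : ℤ) + Int.fdiv (k + 1) 2 then t else 0) *
          (if (m : ℤ) + Int.fdiv k 2 < ((l : ℕ) : ℤ) + 1 then SgR k * t else 0) = 0 := by
        have hq0 : Int.fdiv k 2 = k / 2 := Int.fdiv_eq_ediv_of_nonneg _ (by norm_num)
        have hq1 : Int.fdiv (k + 1) 2 = (k + 1) / 2 := Int.fdiv_eq_ediv_of_nonneg _ (by norm_num)
        by_cases h1 : (((l : ℕ) : ℤ) + 1) < (m : ℤ) + Int.fdiv (k + 1) 2
        · have h2 : ¬ ((m : ℤ) + Int.fdiv k 2 < ((l : ℕ) : ℤ) + 1) := by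
            rw [hq0]; rw [hq1] at h1; omega
          rw [if_neg h2, mul_zero]
        · rw [if_neg h1, zero_mul]
      linear_combination (-(SgR (((l : ℕ) : ℤ) + (j : ℤ)) *
        esf ((i : ℤ) - (2 * (m : ℤ) + k - 2 - ((l : ℕ) : ℤ))) *
        hsf (2 * (m : ℤ) + k - 2 - ((l : ℕ) : ℤ) - (j : ℤ)))) * hcross
    rw [Finset.sum_congr rfl (fun l _ => hentry l), Finset.sum_add_distrib]
    rw [Fin.sum_univ_eq_sum_range (fun n => Sg ((n : ℤ) + (j : ℤ)) •
          (esf ((i : ℤ) - (n : ℤ)) * hsf ((n : ℤ) - (j : ℤ)))) N,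
        Fin.sum_univ_eq_sum_range (fun n => f2 m k t (i : ℤ) (j : ℤ) (n : ℤ)) N]
    rw [conv N (i : ℤ) (j : ℤ) (by exact_mod_cast i.isLt) (Int.natCast_nonneg _),
        key2 N m k t (i : ℤ) (j : ℤ) (by exact_mod_cast i.isLt) (Int.natCast_nonneg _),
        add_zero]
    by_cases hij : i = j
    · rw [if_pos hij, if_pos (by exact_mod_cast congrArg (fun x : Fin N => ((x : ℕ) : ℤ)) hij)]
    · rw [if_neg hij, if_neg (fun hc => hij (by
        apply Fin.ext
        exact_mod_cast hc))]
  exact ⟨⟨hEtri, hEdiag⟩, ⟨hHtri, hHdiag⟩, hEH, mul_eq_one_comm.mp hEH⟩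
end

section
/- Let a, b, c, d, f be integers with a+b even, d even, b > a+d, and f > c+d. There is a weight-preserving bijection between lattice paths with unit east and north steps from P = (a,b) to (c,f) that intersect the line y = x + d, and lattice paths with unit east and north steps from P' = (b-d, a+d) to (c,f). Here the weight of a path is the product of the weights of its horizontal steps, where a horizontal step from (i,j) to (i+1,j) has weight x_{(i+j-a-b)/2+1}^{-1} if i+j-a-b is even (for the first family; measured relative to the respective starting point in the second family the labelling is the same absolute labelling on the lattice) and weight x_{(i+j-a-b+1)/2} if i+j-a-b is odd. -/
/-- A lattice point in `ℤ²`. -/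
abbrev Pt : Type := ℤ × ℤ

/-- The list of lattice points visited by a path starting at `p` with step list `l`. -/
def pathPoints : Pt → List Pt → List Pt
  | p, [] => [p]
  | p, s :: rest => p :: pathPoints (p + s) rest

/-- The ring of Laurent monomials/polynomials in the countably many variables
`x_1, x_2, …` (the group algebra of the free abelian group on `ℕ`). -/
noncomputable abbrev LaurentInf : Type := AddMonoidAlgebra ℤ (ℕ →₀ ℤ)

/-- The Laurent monomial `x_{k+1}^e` (0-based index `k`); junk value `1` for `k < 0`. -/
noncomputable def Xinf (k e : ℤ) : LaurentInf :=
  if 0 ≤ k then AddMonoidAlgebra.single (Finsupp.single k.toNat e) 1 else 1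

/-- The weight of a step `s` starting at the point `p`, for the modified
`e`-labelling with (even) reference parity `a + b`: vertical steps have weight `1`;
a horizontal step starting at `p = (i,j)` has weight `x_{(i+j-a-b)/2+1}^{-1}` if
`i+j-a-b` is even and `x_{(i+j-a-b+1)/2}` if it is odd. -/
noncomputable def stepWInf (a b : ℤ) (p s : Pt) : LaurentInf :=
  if s = ((1 : ℤ), (0 : ℤ)) then
    (if (p.1 + p.2 - a - b) % 2 = 0 then Xinf ((p.1 + p.2 - a - b) / 2) (-1)
     else Xinf ((p.1 + p.2 - a - b + 1) / 2 - 1) 1)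
  else 1

/-- The weight of a path: the product of the weights of its steps. -/
noncomputable def pathWInf (a b : ℤ) : Pt → List Pt → LaurentInf
  | _, [] => 1
  | p, s :: rest => stepWInf a b p s * pathWInf a b (p + s) rest

namespace Stmt3Aux

def pmap' : List Pt → List Pt
  | [] => []
  | [s] => [s]
  | s :: t :: r => t.swap :: s.swap :: pmap' r

def ft (d : ℤ) : Pt → List Pt → ℕ
  | _, [] => 0
  | p, s :: r => if p.2 = p.1 + d then 0 else ft d (p + s) r + 1

def refl' (d : ℤ) (p : Pt) (l : List Pt) : List Pt :=
  pmap' (l.take (ft d p l)) ++ l.drop (ft d p l)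

lemma ft_touch {d : ℤ} {p : Pt} (h : p.2 = p.1 + d) (l : List Pt) : ft d p l = 0 := by
  cases l <;> simp [ft, h]

lemma refl'_touch {d : ℤ} {p : Pt} (h : p.2 = p.1 + d) (l : List Pt) : refl' d p l = l := by
  simp [refl', ft_touch h, pmap']

lemma refl'_two {d : ℤ} {p : Pt} (s t : Pt) (l : List Pt) (h1 : ¬ p.2 = p.1 + d)
    (h2 : ¬ (p + s).2 = (p + s).1 + d) :
    refl' d p (s :: t :: l) = t.swap :: s.swap :: refl' d (p + s + t) l := by
  have hft : ft d p (s :: t :: l) = ft d (p + s + t) l + 2 := by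
    simp only [ft, if_neg h1, if_neg h2]
  simp [refl', hft, pmap']

lemma Xinf_cancel (k : ℤ) : Xinf k (-1) * Xinf k 1 = 1 := by
  unfold Xinf
  split
  · rw [AddMonoidAlgebra.single_mul_single, ← Finsupp.single_add]
    norm_num
    exact (AddMonoidAlgebra.one_def).symm
  · simp

lemma stepW_vert (a b : ℤ) (p : Pt) : stepWInf a b p ((0:ℤ),(1:ℤ)) = 1 := by
  simp [stepWInf]

lemma stepW_congr (a b : ℤ) (p q : Pt) (h : q.1 + q.2 = p.1 + p.2) (s : Pt) :
    stepWInf a b q s = stepWInf a b p s := by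
  have h' : q.1 + q.2 - a - b = p.1 + p.2 - a - b := by omega
  simp only [stepWInf, h']

lemma stepW_mul (a b : ℤ) (p q : Pt) (h : q.1 + q.2 = p.1 + p.2 + 1)
    (hpar : (p.1 + p.2 - a - b) % 2 = 0) :
    stepWInf a b p ((1:ℤ),(0:ℤ)) * stepWInf a b q ((1:ℤ),(0:ℤ)) = 1 := by
  have h1 : q.1 + q.2 - a - b = p.1 + p.2 - a - b + 1 := by omega
  have h2 : ¬ ((p.1 + p.2 - a - b + 1) % 2 = 0) := by omega
  have h3 : (p.1 + p.2 - a - b + 1 + 1) / 2 - 1 = (p.1 + p.2 - a - b) / 2 := by omega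
  simp only [stepWInf, if_pos rfl, h1, if_pos hpar, if_neg h2, h3]
  exact Xinf_cancel _

theorem core (a b d : ℤ) (hab : (a + b) % 2 = 0) (hd : d % 2 = 0) :
    ∀ (n : ℕ) (l : List Pt) (p : Pt), l.length ≤ n →
      (∀ s ∈ l, s = ((1:ℤ),(0:ℤ)) ∨ s = ((0:ℤ),(1:ℤ))) →
      (p.1 + p.2 - a - b) % 2 = 0 →
      (∃ x ∈ pathPoints p l, x.2 = x.1 + d) →
      (∀ s ∈ refl' d p l, s = ((1:ℤ),(0:ℤ)) ∨ s = ((0:ℤ),(1:ℤ))) ∧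
      ((p.2 - d, p.1 + d) : Pt) + (refl' d p l).sum = p + l.sum ∧
      (∃ x ∈ pathPoints ((p.2 - d, p.1 + d) : Pt) (refl' d p l), x.2 = x.1 + d) ∧
      refl' d ((p.2 - d, p.1 + d) : Pt) (refl' d p l) = l ∧
      pathWInf a b p l = pathWInf a b ((p.2 - d, p.1 + d) : Pt) (refl' d p l) := by
  intro n
  induction n with
  | zero =>
    intro l p hlen hv h2 htouch
    have hl : l = [] := List.length_eq_zero_iff.mp (Nat.le_zero.mp hlen)
    subst hl
    obtain ⟨x, hx, hxt⟩ := htouch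
    simp only [pathPoints, List.mem_singleton] at hx
    subst hx
    have hq : ((x.2 - d, x.1 + d) : Pt) = x := by
      rw [Prod.ext_iff]; constructor <;> (show _ ; omega)
    simp only [refl'_touch hxt, hq]
    exact ⟨hv, trivial, ⟨x, by simp [pathPoints], hxt⟩, trivial, trivial⟩
  | succ n ih =>
    intro l p hlen hv h2 htouch
    by_cases hp : p.2 = p.1 + d
    · have hq : ((p.2 - d, p.1 + d) : Pt) = p := by
        rw [Prod.ext_iff]; constructor <;> (show _ ; omega)
      simp only [refl'_touch hp, hq]
      refine ⟨hv, trivial, ⟨p, ?_, hp⟩, trivial, trivial⟩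
      cases l <;> simp [pathPoints]
    · rcases l with _ | ⟨s, _ | ⟨t, r⟩⟩
      · obtain ⟨x, hx, hxt⟩ := htouch
        simp only [pathPoints, List.mem_singleton] at hx
        subst hx
        exact absurd hxt hp
      · obtain ⟨x, hx, hxt⟩ := htouch
        have hs := hv s (by simp)
        have hs1 : s.1 + s.2 = 1 := by rcases hs with rfl | rfl <;> norm_num
        simp only [pathPoints, List.mem_cons, List.mem_singleton] at hx
        rcases hx with rfl | rfl | h
        · exact absurd hxt hp
        · simp only [Prod.fst_add, Prod.snd_add] at hxt
          omega
        · simp at h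
      · have hs := hv s (by simp)
        have ht := hv t (by simp)
        have hs1 : s.1 + s.2 = 1 := by rcases hs with rfl | rfl <;> norm_num
        have ht1 : t.1 + t.2 = 1 := by rcases ht with rfl | rfl <;> norm_num
        have hps : ¬ (p + s).2 = (p + s).1 + d := by
          simp only [Prod.fst_add, Prod.snd_add]; omega
        have hvr : ∀ x ∈ r, x = ((1:ℤ),(0:ℤ)) ∨ x = ((0:ℤ),(1:ℤ)) :=
          fun x hx => hv x (by simp [hx])
        have h2' : ((p + s + t).1 + (p + s + t).2 - a - b) % 2 = 0 := by
          simp only [Prod.fst_add, Prod.snd_add]; omega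
        have htouch' : ∃ x ∈ pathPoints (p + s + t) r, x.2 = x.1 + d := by
          obtain ⟨x, hx, hxt⟩ := htouch
          simp only [pathPoints, List.mem_cons] at hx
          rcases hx with rfl | rfl | hx
          · exact absurd hxt hp
          · exact absurd hxt hps
          · exact ⟨x, hx, hxt⟩
        have hlen' : r.length ≤ n := by simp at hlen; omega
        obtain ⟨ih1, ih2, ih3, ih4, ih5⟩ := ih r (p + s + t) hlen' hvr h2' htouch'
        have hq : ¬ ((p.2 - d, p.1 + d) : Pt).2 = ((p.2 - d, p.1 + d) : Pt).1 + d := by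
          show ¬ p.1 + d = p.2 - d + d; omega
        have hqt : ¬ (((p.2 - d, p.1 + d) : Pt) + t.swap).2
            = ((((p.2 - d, p.1 + d)) : Pt) + t.swap).1 + d := by
          show ¬ p.1 + d + t.1 = p.2 - d + t.2 + d; omega
        have hr2 : refl' d p (s :: t :: r) = t.swap :: s.swap :: refl' d (p + s + t) r :=
          refl'_two s t r hp hps
        have hqpt : ((p.2 - d, p.1 + d) : Pt) + t.swap + s.swap
            = (((p + s + t).2 - d, (p + s + t).1 + d) : Pt) := by
          rw [Prod.ext_iff]
          constructor
          · show p.2 - d + t.2 + s.2 = p.2 + s.2 + t.2 - d; ring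
          · show p.1 + d + t.1 + s.1 = p.1 + s.1 + t.1 + d; ring
        refine ⟨?_, ?_, ?_, ?_, ?_⟩
        · rw [hr2]
          intro x hx
          simp only [List.mem_cons] at hx
          rcases hx with rfl | rfl | hx
          · rcases ht with rfl | rfl
            · right; rfl
            · left; rfl
          · rcases hs with rfl | rfl
            · right; rfl
            · left; rfl
          · exact ih1 x hx
        · rw [hr2]
          simp only [List.sum_cons]
          rw [Prod.ext_iff] at ih2 ⊢
          simp only [Prod.fst_add, Prod.snd_add, Prod.fst_swap, Prod.snd_swap] at ih2 ⊢
          omega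
        · rw [hr2]
          obtain ⟨x, hx, hxt⟩ := ih3
          refine ⟨x, ?_, hxt⟩
          simp only [pathPoints, List.mem_cons]
          refine Or.inr (Or.inr ?_)
          rw [hqpt]
          exact hx
        · rw [hr2, refl'_two _ _ _ hq hqt, Prod.swap_swap, Prod.swap_swap, hqpt, ih4]
        · rw [hr2]
          simp only [pathWInf]
          rw [hqpt, ← ih5, ← mul_assoc, ← mul_assoc]
          congr 1
          rcases hs with rfl | rfl <;> rcases ht with rfl | rfl <;>
            simp only [Prod.swap_prod_mk]
          · rw [stepW_vert, stepW_vert,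
              stepW_mul a b p (p + ((1:ℤ),(0:ℤ)))
                (by show p.1 + 1 + (p.2 + 0) = p.1 + p.2 + 1; ring) h2]
            norm_num
          · rw [stepW_vert, stepW_vert, mul_one, mul_one,
              stepW_congr a b p ((p.2 - d, p.1 + d))
                (by show p.2 - d + (p.1 + d) = p.1 + p.2; ring) ((1:ℤ),(0:ℤ))]
          · rw [stepW_vert, stepW_vert, one_mul, one_mul,
              stepW_congr a b (p + ((0:ℤ),(1:ℤ))) (((p.2 - d, p.1 + d) : Pt) + ((0:ℤ),(1:ℤ)))
                (by show p.2 - d + 0 + (p.1 + d + 1) = p.1 + 0 + (p.2 + 1); ring) ((1:ℤ),(0:ℤ))]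
          · rw [stepW_vert, stepW_vert, one_mul,
              stepW_mul a b ((p.2 - d, p.1 + d) : Pt) (((p.2 - d, p.1 + d) : Pt) + ((1:ℤ),(0:ℤ)))
                (by show p.2 - d + 1 + (p.1 + d + 0) = p.2 - d + (p.1 + d) + 1; ring)
                (by show (p.2 - d + (p.1 + d) - a - b) % 2 = 0; omega)]

end Stmt3Aux

namespace Stmt3Aux

lemma touch_exists (d : ℤ) : ∀ (l : List Pt) (p : Pt),
    (∀ s ∈ l, s = ((1:ℤ),(0:ℤ)) ∨ s = ((0:ℤ),(1:ℤ))) →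
    p.2 - p.1 - d ≤ 0 → d ≤ (p + l.sum).2 - (p + l.sum).1 →
    ∃ x ∈ pathPoints p l, x.2 = x.1 + d := by
  intro l
  induction l with
  | nil =>
    intro p _ h1 h2
    refine ⟨p, by simp [pathPoints], ?_⟩
    simp only [List.sum_nil, add_zero] at h2
    omega
  | cons s r ihl =>
    intro p hv h1 h2
    by_cases hp : p.2 = p.1 + d
    · exact ⟨p, by simp [pathPoints], hp⟩
    · have hs1 : s.1 + s.2 = 1 ∧ 0 ≤ s.1 := by
        rcases hv s (by simp) with rfl | rfl <;> norm_num
      have h2' : d ≤ ((p + s) + r.sum).2 - ((p + s) + r.sum).1 := by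
        rw [add_assoc, ← List.sum_cons]; exact h2
      have h1' : (p + s).2 - (p + s).1 - d ≤ 0 := by
        simp only [Prod.fst_add, Prod.snd_add]; omega
      obtain ⟨x, hx, hxt⟩ := ihl (p + s) (fun z hz => hv z (by simp [hz])) h1' h2'
      exact ⟨x, by simp only [pathPoints, List.mem_cons]; exact Or.inr hx, hxt⟩

end Stmt3Aux


/-- **Modified reflection principle.** For integers `a, b, c, d, f` with `a + b`
and `d` even, `b > a + d` and `f > c + d`, there is a weight-preserving bijection
between lattice paths with unit east and north steps from `(a,b)` to `(c,f)` that
meet the line `y = x + d`, and lattice paths with unit east and north steps from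
the reflected point `(b-d, a+d)` to `(c,f)`. -/
theorem stmt3 (a b c d f : ℤ) (hab : (a + b) % 2 = 0) (hd : d % 2 = 0)
    (hP : a + d < b) (hE : c + d < f) :
    ∃ F : {l : List Pt // (∀ s ∈ l, s = ((1:ℤ),(0:ℤ)) ∨ s = ((0:ℤ),(1:ℤ))) ∧
            (a, b) + l.sum = (c, f) ∧
            ∃ p ∈ pathPoints (a, b) l, p.2 = p.1 + d} ≃
          {l : List Pt // (∀ s ∈ l, s = ((1:ℤ),(0:ℤ)) ∨ s = ((0:ℤ),(1:ℤ))) ∧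
            (b - d, a + d) + l.sum = (c, f)},
      ∀ l, pathWInf a b (a, b) l.1 = pathWInf a b (b - d, a + d) (F l).1 := by
  have coreF := Stmt3Aux.core a b d hab hd
  have hparA : ((((a:ℤ), b) : Pt).1 + (((a:ℤ), b) : Pt).2 - a - b) % 2 = 0 := by
    show (a + b - a - b) % 2 = 0; omega
  have hparB : (((((b:ℤ) - d), a + d) : Pt).1 + ((((b:ℤ) - d), a + d) : Pt).2 - a - b) % 2 = 0 := by
    show (b - d + (a + d) - a - b) % 2 = 0; omega
  have hq2 : (((((b:ℤ) - d), a + d) : Pt).2 - d, ((((b:ℤ) - d), a + d) : Pt).1 + d) = (((a:ℤ)), b) := by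
    rw [Prod.ext_iff]
    constructor
    · show a + d - d = a; ring
    · show b - d + d = b; ring
  -- touching for paths from the reflected point
  have touchB : ∀ l : List Pt, (∀ s ∈ l, s = ((1:ℤ),(0:ℤ)) ∨ s = ((0:ℤ),(1:ℤ))) →
      ((((b:ℤ) - d), a + d) : Pt) + l.sum = ((c : ℤ), f) →
      ∃ x ∈ pathPoints ((((b:ℤ) - d), a + d) : Pt) l, x.2 = x.1 + d := by
    intro l hv hsum
    refine Stmt3Aux.touch_exists d l _ hv ?_ ?_
    · show a + d - (b - d) - d ≤ 0; omega
    · rw [hsum]; show d ≤ f - c; omega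
  refine ⟨⟨fun x => ⟨Stmt3Aux.refl' d ((a:ℤ), b) x.1, ?_, ?_⟩,
           fun y => ⟨Stmt3Aux.refl' d (((b:ℤ) - d), a + d) y.1, ?_, ?_, ?_⟩, ?_, ?_⟩, ?_⟩
  · obtain ⟨hv, hsum, ht⟩ := x.2
    exact (coreF x.1.length x.1 ((a:ℤ), b) le_rfl hv hparA ht).1
  · obtain ⟨hv, hsum, ht⟩ := x.2
    exact (coreF x.1.length x.1 ((a:ℤ), b) le_rfl hv hparA ht).2.1.trans hsum
  · obtain ⟨hv, hsum⟩ := y.2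
    exact (coreF y.1.length y.1 (((b:ℤ) - d), a + d) le_rfl hv hparB (touchB y.1 hv hsum)).1
  · obtain ⟨hv, hsum⟩ := y.2
    have h := (coreF y.1.length y.1 (((b:ℤ) - d), a + d) le_rfl hv hparB (touchB y.1 hv hsum)).2.1
    rw [hq2] at h
    exact h.trans hsum
  · obtain ⟨hv, hsum⟩ := y.2
    have h := (coreF y.1.length y.1 (((b:ℤ) - d), a + d) le_rfl hv hparB (touchB y.1 hv hsum)).2.2.1
    rw [hq2] at h
    exact h
  · intro x
    apply Subtype.ext
    obtain ⟨hv, hsum, ht⟩ := x.2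
    exact (coreF x.1.length x.1 ((a:ℤ), b) le_rfl hv hparA ht).2.2.2.1
  · intro y
    apply Subtype.ext
    obtain ⟨hv, hsum⟩ := y.2
    have h := (coreF y.1.length y.1 (((b:ℤ) - d), a + d) le_rfl hv hparB (touchB y.1 hv hsum)).2.2.2.1
    rw [hq2] at h
    exact h
  · intro x
    obtain ⟨hv, hsum, ht⟩ := x.2
    exact (coreF x.1.length x.1 ((a:ℤ), b) le_rfl hv hparA ht).2.2.2.2
end

section
/- Let a, b, c ∈ Z and n ∈ N with a+b even, and assume the points (a,b) and (c, 2n+a+b-c) lie strictly above the line y = x−1. Then the generating function of lattice paths from (a,b) to (c, 2n+a+b-c) with unit east and north steps, weighted by the modified e-labelling (horizontal step starting at (i,j) has weight x_{(i+j-a-b)/2+1}^{-1} if i+j ≡ a+b mod 2 and x_{(i+j-a-b+1)/2} otherwise, vertical steps weight 1), that never cross the line y = x−1, equals e_{c-a}(x^±) − e_{c-b-2}(x^±), where x^± = (x_1, x_1^{-1}, ..., x_n, x_n^{-1}). -/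
/-- The ring of Laurent polynomials in the variables `x_1, …, x_n`, in which the
weights (Laurent monomials in `x_1^{±1}, …, x_n^{±1}`) live. -/
noncomputable abbrev Laur (n : ℕ) : Type := AddMonoidAlgebra ℤ (Fin n →₀ ℤ)

/-- The Laurent monomial `x_{k+1}^e` (0-based index `k : ℤ`); junk value `1` out of range. -/
noncomputable def Xpm (n : ℕ) (k e : ℤ) : Laur n :=
  if h : 0 ≤ k ∧ k.toNat < n then
    AddMonoidAlgebra.single (Finsupp.single ⟨k.toNat, h.2⟩ e) 1
  else 1

/-- The `2n` variables `x_1, x_1^{-1}, x_2, x_2^{-1}, …, x_n, x_n^{-1}`. -/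
noncomputable def xpmVar (n : ℕ) (j : Fin (2 * n)) : Laur n :=
  AddMonoidAlgebra.single
    (Finsupp.single ⟨(j : ℕ) / 2, by have := j.isLt; omega⟩
      (if (j : ℕ) % 2 = 0 then 1 else -1)) 1

/-- `e_r(x^±)`: the `r`-th elementary symmetric polynomial in the `2n` variables
`x_1, x_1^{-1}, …, x_n, x_n^{-1}`; zero for `r < 0`. -/
noncomputable def epm (n : ℕ) (r : ℤ) : Laur n :=
  if 0 ≤ r then
    ∑ s ∈ Finset.powersetCard r.toNat (Finset.univ : Finset (Fin (2 * n))),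
      ∏ i ∈ s, xpmVar n i
  else 0

/-- The weight of a step `s` starting at point `p` under the modified `e`-labelling
relative to the (even) reference `a + b`: a unit horizontal step starting at
`p = (i,j)` has weight `x_{(i+j-a-b)/2+1}^{-1}` if `i+j ≡ a+b (mod 2)` and
`x_{(i+j-a-b+1)/2}` otherwise; all other steps have weight `1`. -/
noncomputable def stepW (n : ℕ) (a b : ℤ) (p s : Pt) : Laur n :=
  if s = ((1 : ℤ), (0 : ℤ)) then
    (if (p.1 + p.2 - a - b) % 2 = 0 then Xpm n ((p.1 + p.2 - a - b) / 2) (-1)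
     else Xpm n ((p.1 + p.2 - a - b + 1) / 2 - 1) 1)
  else 1

/-- The weight of a path: the product of the weights of its steps. -/
noncomputable def pathW (n : ℕ) (a b : ℤ) : Pt → List Pt → Laur n
  | _, [] => 1
  | p, s :: rest => stepW n a b p s * pathW n a b (p + s) rest
namespace SP



/-- swap within pairs {2k, 2k+1} -/
def nswap (u : ℕ) : ℕ := if u % 2 = 0 then u + 1 else u - 1

lemma nswap_nswap (u : ℕ) : nswap (nswap u) = u := by
  unfold nswap; split_ifs <;> omega

lemma nswap_lt_iff {u t : ℕ} (ht : t % 2 = 0) : nswap u < t ↔ u < t := by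
  unfold nswap; split_ifs with h <;> omega

def fswap {n : ℕ} (u : Fin (2*n)) : Fin (2*n) :=
  ⟨nswap u, by have := u.isLt; unfold nswap; split_ifs with h <;> omega⟩

lemma fswap_val {n : ℕ} (u : Fin (2*n)) : (fswap u : ℕ) = nswap u := rfl

lemma fswap_fswap {n : ℕ} (u : Fin (2*n)) : fswap (fswap u) = u := by
  apply Fin.ext; simp [fswap, nswap_nswap]

lemma fswap_inj {n : ℕ} : Function.Injective (fswap (n := n)) :=
  Function.LeftInverse.injective fswap_fswap

/-- number of elements of S below t -/
def pcnt {N : ℕ} (S : Finset (Fin N)) (t : ℕ) : ℕ :=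
  (S.filter (fun u : Fin N => (u : ℕ) < t)).card

lemma pcnt_zero {N : ℕ} (S : Finset (Fin N)) : pcnt S 0 = 0 := by
  simp [pcnt]

lemma pcnt_le_card {N : ℕ} (S : Finset (Fin N)) (t : ℕ) : pcnt S t ≤ S.card :=
  Finset.card_filter_le _ _

lemma pcnt_mono {N : ℕ} (S : Finset (Fin N)) {t t' : ℕ} (h : t ≤ t') :
    pcnt S t ≤ pcnt S t' := by
  apply Finset.card_le_card
  intro u hu
  simp only [Finset.mem_filter] at hu ⊢
  exact ⟨hu.1, lt_of_lt_of_le hu.2 h⟩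

lemma pcnt_succ_le {N : ℕ} (S : Finset (Fin N)) (t : ℕ) :
    pcnt S (t+1) ≤ pcnt S t + 1 := by
  have hsub : S.filter (fun u : Fin N => (u : ℕ) < t + 1) ⊆
      (S.filter (fun u : Fin N => (u : ℕ) < t)) ∪
        (Finset.univ.filter (fun u : Fin N => (u : ℕ) = t)) := by
    intro u hu
    simp only [Finset.mem_filter, Finset.mem_union, Finset.mem_univ, true_and] at hu ⊢
    rcases hu with ⟨h1, h2⟩
    rcases Nat.lt_succ_iff_lt_or_eq.mp h2 with h | h
    · exact Or.inl ⟨h1, h⟩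
    · exact Or.inr h
  have hone : (Finset.univ.filter (fun u : Fin N => (u : ℕ) = t)).card ≤ 1 := by
    apply Finset.card_le_one.2
    intro x hx y hy
    simp only [Finset.mem_filter] at hx hy
    exact Fin.ext (hx.2.trans hy.2.symm)
  have := Finset.card_union_le (S.filter (fun u : Fin N => (u : ℕ) < t))
    (Finset.univ.filter (fun u : Fin N => (u : ℕ) = t))
  have := Finset.card_le_card hsub
  unfold pcnt
  omega

lemma pcnt_le_self {N : ℕ} (S : Finset (Fin N)) (t : ℕ) : pcnt S t ≤ t := by
  induction t with
  | zero => simp [pcnt_zero]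
  | succ k ih => have := pcnt_succ_le S k; omega

lemma card_univ_filter_lt {N : ℕ} {t : ℕ} (ht : t ≤ N) :
    (Finset.univ.filter (fun u : Fin N => (u : ℕ) < t)).card = t := by
  induction t with
  | zero => simp
  | succ k ih =>
    have hk : k < N := by omega
    have heq : (Finset.univ.filter (fun u : Fin N => (u : ℕ) < k + 1)) =
        insert ⟨k, hk⟩ (Finset.univ.filter (fun u : Fin N => (u : ℕ) < k)) := by
      ext u
      simp only [Finset.mem_filter, Finset.mem_insert, Finset.mem_univ, true_and]
      constructor
      · intro h
        rcases Nat.lt_succ_iff_lt_or_eq.mp h with h | h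
        · exact Or.inr h
        · exact Or.inl (Fin.ext h)
      · rintro (rfl | h)
        · simp
        · omega
    rw [heq, Finset.card_insert_of_notMem (by simp), ih (by omega)]

lemma pcnt_of_ge {N : ℕ} (S : Finset (Fin N)) {t : ℕ} (ht : N ≤ t) :
    pcnt S t = S.card := by
  unfold pcnt
  rw [Finset.filter_true_of_mem]
  · intro u _
    exact lt_of_lt_of_le u.isLt ht

lemma swap_filter_card {n : ℕ} (S : Finset (Fin (2*n))) {t : ℕ} (ht : t % 2 = 0) :
    (Finset.univ.filter (fun u : Fin (2*n) => (u : ℕ) < t ∧ fswap u ∈ S)).card = pcnt S t := by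
  unfold pcnt
  apply Finset.card_bij' (fun u _ => fswap u) (fun u _ => fswap u)
  · intro u hu
    simp only [Finset.mem_filter, Finset.mem_univ, true_and] at hu
    simp only [Finset.mem_filter]
    refine ⟨hu.2, ?_⟩
    show (nswap u : ℕ) < t
    rw [nswap_lt_iff ht]; exact hu.1
  · intro u hu
    simp only [Finset.mem_filter] at hu
    simp only [Finset.mem_filter, Finset.mem_univ, true_and, fswap_fswap]
    refine ⟨?_, hu.1⟩
    show (nswap u : ℕ) < t
    rw [nswap_lt_iff ht]; exact hu.2
  · intro u _; exact fswap_fswap u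
  · intro u _; exact fswap_fswap u


/-- the reflection map: complement below `t` (through `fswap`), keep above -/
def rfl2 {n : ℕ} (t : ℕ) (X : Finset (Fin (2*n))) : Finset (Fin (2*n)) :=
  X.filter (fun u : Fin (2*n) => t ≤ (u : ℕ)) ∪
    Finset.univ.filter (fun u : Fin (2*n) => (u : ℕ) < t ∧ fswap u ∉ X)

lemma mem_rfl2 {n : ℕ} {t : ℕ} {X : Finset (Fin (2*n))} {u : Fin (2*n)} :
    u ∈ rfl2 t X ↔ ((u : ℕ) < t ∧ fswap u ∉ X) ∨ (t ≤ (u : ℕ) ∧ u ∈ X) := by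
  simp only [rfl2, Finset.mem_union, Finset.mem_filter, Finset.mem_univ, true_and]
  tauto

lemma rfl2_rfl2 {n : ℕ} {t : ℕ} (ht : t % 2 = 0) (X : Finset (Fin (2*n))) :
    rfl2 t (rfl2 t X) = X := by
  ext u
  by_cases hu : (u : ℕ) < t
  · have hsu : (fswap u : ℕ) < t := by rw [fswap_val, nswap_lt_iff ht]; exact hu
    have hu' : ¬ t ≤ (u : ℕ) := by omega
    have hsu' : ¬ t ≤ (fswap u : ℕ) := by omega
    simp only [mem_rfl2, fswap_fswap]
    tauto
  · have hsu : ¬ (fswap u : ℕ) < t := by rw [fswap_val, nswap_lt_iff ht]; exact hu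
    have hu' : t ≤ (u : ℕ) := by omega
    have hsu' : t ≤ (fswap u : ℕ) := by omega
    simp only [mem_rfl2, fswap_fswap]
    tauto

/-- prefix counting for the reflected set, below the reflection point -/
lemma pcnt_rfl2 {n : ℕ} {t u0 : ℕ} (hu0 : u0 % 2 = 0) (hu0t : u0 ≤ t)
    (X : Finset (Fin (2*n))) (hu0N : u0 ≤ 2*n) :
    pcnt (rfl2 t X) u0 + pcnt X u0 = u0 := by
  have heq : (rfl2 t X).filter (fun u : Fin (2*n) => (u : ℕ) < u0) =
      Finset.univ.filter (fun u : Fin (2*n) => (u : ℕ) < u0 ∧ ¬ fswap u ∈ X) := by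
    ext u
    simp only [Finset.mem_filter, mem_rfl2, Finset.mem_univ, true_and]
    constructor
    · rintro ⟨(⟨_, h⟩ | ⟨h, _⟩), hlt⟩
      · exact ⟨hlt, h⟩
      · omega
    · rintro ⟨hlt, h⟩
      exact ⟨Or.inl ⟨by omega, h⟩, hlt⟩
  have hsplit := Finset.card_filter_add_card_filter_not
    (s := Finset.univ.filter (fun u : Fin (2*n) => (u : ℕ) < u0))
    (p := fun u : Fin (2*n) => fswap u ∈ X)
  simp only [Finset.filter_filter] at hsplit
  have h1 := swap_filter_card X hu0 (t := u0)
  have h2 : pcnt (rfl2 t X) u0 =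
      (Finset.univ.filter (fun u : Fin (2*n) => (u : ℕ) < u0 ∧ ¬ fswap u ∈ X)).card := by
    unfold pcnt; rw [heq]
  rw [card_univ_filter_lt hu0N] at hsplit
  omega

lemma card_rfl2 {n : ℕ} {t : ℕ} (ht : t % 2 = 0) (htN : t ≤ 2*n)
    (X : Finset (Fin (2*n))) :
    (rfl2 t X).card + pcnt X t + pcnt X t = t + X.card := by
  have hdisj : Disjoint (X.filter (fun u : Fin (2*n) => t ≤ (u : ℕ)))
      (Finset.univ.filter (fun u : Fin (2*n) => (u : ℕ) < t ∧ fswap u ∉ X)) := by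
    rw [Finset.disjoint_left]
    intro u hu hu'
    simp only [Finset.mem_filter, Finset.mem_univ, true_and] at hu hu'
    omega
  have hcard : (rfl2 t X).card = (X.filter (fun u : Fin (2*n) => t ≤ (u : ℕ))).card +
      (Finset.univ.filter (fun u : Fin (2*n) => (u : ℕ) < t ∧ fswap u ∉ X)).card := by
    unfold rfl2
    exact Finset.card_union_of_disjoint hdisj
  have hX : (X.filter (fun u : Fin (2*n) => t ≤ (u : ℕ))).card + pcnt X t = X.card := by
    have hs := Finset.card_filter_add_card_filter_not
      (s := X) (p := fun u : Fin (2*n) => (u : ℕ) < t)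
    simp only [not_lt] at hs
    unfold pcnt
    omega
  have hB : (Finset.univ.filter (fun u : Fin (2*n) => (u : ℕ) < t ∧ fswap u ∉ X)).card
      + pcnt X t = t := by
    have hsplit := Finset.card_filter_add_card_filter_not
      (s := Finset.univ.filter (fun u : Fin (2*n) => (u : ℕ) < t))
      (p := fun u : Fin (2*n) => fswap u ∈ X)
    simp only [Finset.filter_filter] at hsplit
    have h1 := swap_filter_card X ht (t := t)
    rw [card_univ_filter_lt htN] at hsplit
    have : (Finset.univ.filter (fun u : Fin (2*n) => (u : ℕ) < t ∧ fswap u ∉ X)) =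
        (Finset.univ.filter (fun u : Fin (2*n) => (u : ℕ) < t ∧ ¬ fswap u ∈ X)) := rfl
    rw [this]
    omega
  omega

section Prod
variable {M : Type*} [CommMonoid M] {n : ℕ} (v : Fin (2*n) → M)
  (hv : ∀ u : Fin (2*n), v u * v (fswap u) = 1)

include hv

/-- product of v over a full even prefix is 1 -/
lemma prod_prefix_one : ∀ (s : ℕ), 2*s ≤ 2*n →
    ∏ u ∈ Finset.univ.filter (fun u : Fin (2*n) => (u : ℕ) < 2*s), v u = 1 := by
  intro s
  induction s with
  | zero => intro _; simp
  | succ k ih =>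
    intro hk
    have h0 : 2*k < 2*n := by omega
    have h1 : 2*k+1 < 2*n := by omega
    have heq : (Finset.univ.filter (fun u : Fin (2*n) => (u : ℕ) < 2*(k+1))) =
        insert ⟨2*k+1, h1⟩ (insert ⟨2*k, h0⟩
          (Finset.univ.filter (fun u : Fin (2*n) => (u : ℕ) < 2*k))) := by
      ext u
      simp only [Finset.mem_filter, Finset.mem_insert, Finset.mem_univ, true_and]
      constructor
      · intro h
        by_cases hlt : (u : ℕ) < 2*k
        · tauto
        · have : (u : ℕ) = 2*k ∨ (u : ℕ) = 2*k+1 := by omega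
          rcases this with h' | h'
          · exact Or.inr (Or.inl (Fin.ext h'))
          · exact Or.inl (Fin.ext h')
      · rintro (rfl | rfl | h)
        · show 2*k+1 < 2*(k+1); omega
        · show 2*k < 2*(k+1); omega
        · omega
    rw [heq, Finset.prod_insert, Finset.prod_insert]
    · rw [ih (by omega), mul_one]
      have hsw : fswap (⟨2*k, h0⟩ : Fin (2*n)) = ⟨2*k+1, h1⟩ := by
        apply Fin.ext
        show nswap (2*k) = 2*k+1
        unfold nswap
        split_ifs with h <;> omega
      rw [mul_comm]
      have := hv ⟨2*k, h0⟩
      rwa [hsw] at this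
    · simp
    · simp only [Finset.mem_insert, Finset.mem_filter, Finset.mem_univ, true_and]
      push_neg
      constructor
      · intro h; exact absurd (congrArg Fin.val h) (by simp)
      · simp

/-- pairing: product of v over A times product of v∘fswap over A is 1 -/
lemma prod_pair_one (A : Finset (Fin (2*n))) :
    (∏ u ∈ A, v u) * (∏ u ∈ A, v (fswap u)) = 1 := by
  rw [← Finset.prod_mul_distrib]
  rw [Finset.prod_congr rfl (fun u _ => hv u)]
  simp

/-- the reflection preserves the product of weights -/
lemma prod_rfl2 {t : ℕ} (ht : t % 2 = 0) (htN : t ≤ 2*n) (X : Finset (Fin (2*n))) :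
    ∏ u ∈ rfl2 t X, v u = ∏ u ∈ X, v u := by
  classical
  have hXsplit : ∏ u ∈ X, v u = (∏ u ∈ X.filter (fun u : Fin (2*n) => (u : ℕ) < t), v u) *
      (∏ u ∈ X.filter (fun u : Fin (2*n) => t ≤ (u : ℕ)), v u) := by
    have h := Finset.prod_filter_mul_prod_filter_not X (fun u : Fin (2*n) => (u : ℕ) < t) v
    simp only [not_lt] at h
    rw [← h]
  have hdisj : Disjoint (X.filter (fun u : Fin (2*n) => t ≤ (u : ℕ)))
      (Finset.univ.filter (fun u : Fin (2*n) => (u : ℕ) < t ∧ fswap u ∉ X)) := by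
    rw [Finset.disjoint_left]
    intro u hu hu'
    simp only [Finset.mem_filter, Finset.mem_univ, true_and] at hu hu'
    omega
  have hRsplit : ∏ u ∈ rfl2 t X, v u =
      (∏ u ∈ X.filter (fun u : Fin (2*n) => t ≤ (u : ℕ)), v u) *
      (∏ u ∈ Finset.univ.filter (fun u : Fin (2*n) => (u : ℕ) < t ∧ fswap u ∉ X), v u) := by
    unfold rfl2
    exact Finset.prod_union hdisj
  -- D * C = 1
  have hCD : (∏ u ∈ Finset.univ.filter (fun u : Fin (2*n) => (u : ℕ) < t ∧ fswap u ∈ X), v u) *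
      (∏ u ∈ Finset.univ.filter (fun u : Fin (2*n) => (u : ℕ) < t ∧ fswap u ∉ X), v u) = 1 := by
    have h := Finset.prod_filter_mul_prod_filter_not
      (Finset.univ.filter (fun u : Fin (2*n) => (u : ℕ) < t))
      (fun u : Fin (2*n) => fswap u ∈ X) v
    simp only [Finset.filter_filter] at h
    rw [h]
    have : t = 2 * (t/2) := by omega
    rw [this]
    exact prod_prefix_one v hv (t/2) (by omega)
  -- D = prod over A of v ∘ fswap
  have hD2 : (∏ u ∈ Finset.univ.filter (fun u : Fin (2*n) => (u : ℕ) < t ∧ fswap u ∈ X), v u)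
      = ∏ u ∈ X.filter (fun u : Fin (2*n) => (u : ℕ) < t), v (fswap u) := by
    apply Finset.prod_nbij' (fun u => fswap u) (fun u => fswap u)
    · intro u hu
      simp only [Finset.mem_filter, Finset.mem_univ, true_and] at hu ⊢
      refine ⟨hu.2, ?_⟩
      rw [fswap_val, nswap_lt_iff ht]; exact hu.1
    · intro u hu
      simp only [Finset.mem_filter, Finset.mem_univ, true_and] at hu ⊢
      refine ⟨?_, by rw [fswap_fswap]; exact hu.1⟩
      rw [fswap_val, nswap_lt_iff ht]; exact hu.2
    · intro u _; exact fswap_fswap u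
    · intro u _; exact fswap_fswap u
    · intro u _; rw [fswap_fswap]
  have hA2 := prod_pair_one v hv (X.filter (fun u : Fin (2*n) => (u : ℕ) < t))
  -- conclude: C = A
  have hCA : (∏ u ∈ Finset.univ.filter (fun u : Fin (2*n) => (u : ℕ) < t ∧ fswap u ∉ X), v u)
      = ∏ u ∈ X.filter (fun u : Fin (2*n) => (u : ℕ) < t), v u := by
    calc (∏ u ∈ Finset.univ.filter (fun u : Fin (2*n) => (u : ℕ) < t ∧ fswap u ∉ X), v u)
        = 1 * (∏ u ∈ Finset.univ.filter (fun u : Fin (2*n) => (u : ℕ) < t ∧ fswap u ∉ X), v u) := by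
          rw [one_mul]
      _ = ((∏ u ∈ X.filter (fun u : Fin (2*n) => (u : ℕ) < t), v u) *
            (∏ u ∈ X.filter (fun u : Fin (2*n) => (u : ℕ) < t), v (fswap u))) *
          (∏ u ∈ Finset.univ.filter (fun u : Fin (2*n) => (u : ℕ) < t ∧ fswap u ∉ X), v u) := by
          rw [hA2]
      _ = (∏ u ∈ X.filter (fun u : Fin (2*n) => (u : ℕ) < t), v u) *
          ((∏ u ∈ Finset.univ.filter (fun u : Fin (2*n) => (u : ℕ) < t ∧ fswap u ∈ X), v u) *
           (∏ u ∈ Finset.univ.filter (fun u : Fin (2*n) => (u : ℕ) < t ∧ fswap u ∉ X), v u)) := by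
          rw [hD2, mul_assoc]
      _ = ∏ u ∈ X.filter (fun u : Fin (2*n) => (u : ℕ) < t), v u := by
          rw [hCD, mul_one]
  rw [hRsplit, hCA, hXsplit, mul_comm]

end Prod

section Core
variable {M : Type*} [CommSemiring M] {n : ℕ}

/-- crossing the barrier somewhere -/
def Bad (m : ℕ) {N : ℕ} (S : Finset (Fin N)) : Prop :=
  ¬ ∀ k ∈ Finset.range (N+1), pcnt S k ≤ m + (k+1)/2

instance (m N : ℕ) : DecidablePred (Bad m (N := N)) := fun S => by
  unfold Bad; infer_instance

/-- violation predicate for a path-set -/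
def P1 (m : ℕ) {N : ℕ} (S : Finset (Fin N)) (t : ℕ) : Prop := m + (t+1)/2 + 1 ≤ pcnt S t

/-- dual predicate for reflected sets -/
def P2 (m : ℕ) {N : ℕ} (T : Finset (Fin N)) (t : ℕ) : Prop :=
  t % 2 = 0 ∧ pcnt T t + m + 1 ≤ t/2

instance (m N : ℕ) (S : Finset (Fin N)) : DecidablePred (P1 m S) := fun _ => by
  unfold P1; infer_instance

instance (m N : ℕ) (T : Finset (Fin N)) : DecidablePred (P2 m T) := fun _ => by
  unfold P2; infer_instance

/-- properties of the first violation time -/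
lemma find_P1_spec {m r : ℕ} {S : Finset (Fin (2*n))} (hS : S.card = r)
    (hrnm : r ≤ n + m) (h : ∃ t, P1 m S t) :
    (Nat.find h) % 2 = 0 ∧ pcnt S (Nat.find h) = m + (Nat.find h)/2 + 1 ∧
      Nat.find h ≤ 2*n ∧ m + 1 ≤ (Nat.find h)/2 ∧ 2*m + 2 ≤ r := by
  set t0 := Nat.find h with ht0
  have hspec : P1 m S t0 := Nat.find_spec h
  have hmin : ∀ u, u < t0 → ¬ P1 m S u := fun u hu => Nat.find_min h hu
  unfold P1 at hspec hmin
  have ht0pos : t0 ≠ 0 := by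
    intro h0
    rw [h0, pcnt_zero] at hspec
    omega
  obtain ⟨k, hk⟩ : ∃ k, t0 = k + 1 := ⟨t0 - 1, by omega⟩
  have h1 : ¬ (m + (k+1)/2 + 1 ≤ pcnt S k) := hmin k (by omega)
  have h2 : pcnt S (k+1) ≤ pcnt S k + 1 := pcnt_succ_le S k
  rw [hk] at hspec
  have hev : (k+1) % 2 = 0 ∧ pcnt S (k+1) = m + (k+1)/2 + 1 := by omega
  have hle1 : pcnt S (k+1) ≤ k+1 := pcnt_le_self S (k+1)
  have hle2 : pcnt S (k+1) ≤ r := hS ▸ pcnt_le_card S (k+1)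
  rw [hk]
  omega

/-- main bijection theorem: sum of weights over bad sets of size r equals
the sum over all sets of size r - 2m - 2 -/
theorem bad_sum (v : Fin (2*n) → M) (hv : ∀ u : Fin (2*n), v u * v (fswap u) = 1)
    (m r : ℕ) (hrnm : r ≤ n + m) (hr2 : 2*m + 2 ≤ r) :
    ∑ S ∈ (Finset.powersetCard r (Finset.univ : Finset (Fin (2*n)))).filter (Bad m),
      ∏ u ∈ S, v u
    = ∑ T ∈ Finset.powersetCard (r - (2*m + 2)) (Finset.univ : Finset (Fin (2*n))),
        ∏ u ∈ T, v u := by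
  classical
  -- badness as unbounded existence
  have hbadP1 : ∀ S : Finset (Fin (2*n)),
      (S ∈ (Finset.powersetCard r (Finset.univ : Finset (Fin (2*n)))).filter (Bad m)) →
      (S.card = r ∧ ∃ t, P1 m S t) := by
    intro S hS
    simp only [Finset.mem_filter, Finset.mem_powersetCard_univ] at hS
    obtain ⟨hcard, hbad⟩ := hS
    unfold Bad at hbad
    push_neg at hbad
    obtain ⟨k, _, hk⟩ := hbad
    exact ⟨hcard, ⟨k, by unfold P1; omega⟩⟩
  apply Finset.sum_nbij'
    (i := fun S => if h : ∃ t, P1 m S t then rfl2 (Nat.find h) S else S)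
    (j := fun T => if h : ∃ t, P2 m T t then rfl2 (Nat.find h) T else T)
  -- forward membership
  · intro S hS
    obtain ⟨hcard, h⟩ := hbadP1 S hS
    rw [dif_pos h]
    obtain ⟨hev, heq, hN, hm1, _⟩ := find_P1_spec hcard hrnm h
    rw [Finset.mem_powersetCard_univ]
    have hc := card_rfl2 hev hN S
    rw [heq, hcard] at hc
    omega
  -- backward membership
  · intro T hT
    rw [Finset.mem_powersetCard_univ] at hT
    have hw : P2 m T (2*n) := by
      refine ⟨by omega, ?_⟩
      rw [pcnt_of_ge T (le_refl _)]
      omega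
    have hex : ∃ t, P2 m T t := ⟨2*n, hw⟩
    rw [dif_pos hex]
    set t1 := Nat.find hex with ht1
    have hspec : P2 m T t1 := Nat.find_spec hex
    have hmin : ∀ u, u < t1 → ¬ P2 m T u := fun u hu => Nat.find_min hex hu
    obtain ⟨hev, hle⟩ := hspec
    have ht1N : t1 ≤ 2*n := Nat.find_le hw
    have ht1pos : 2 ≤ t1 := by
      rcases Nat.lt_or_ge t1 2 with h | h
      · exfalso
        interval_cases t1 <;> simp_all [P2] <;> omega
      · exact h
    -- equality is forced at t1
    have hprev : ¬ P2 m T (t1 - 2) := hmin _ (by omega)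
    unfold P2 at hprev
    have hprevev : (t1 - 2) % 2 = 0 := by omega
    have hmono : pcnt T (t1 - 2) ≤ pcnt T t1 := pcnt_mono T (by omega)
    have heq1 : pcnt T t1 + m + 1 = t1/2 := by
      have := hprevev
      simp only [hprevev, true_and, not_le] at hprev
      omega
    -- now compute card
    have hc := card_rfl2 hev ht1N T
    rw [Finset.mem_filter, Finset.mem_powersetCard_univ]
    have hScard : (rfl2 t1 T).card = r := by omega
    refine ⟨hScard, ?_⟩
    -- rfl2 t1 T is bad: violation at t1
    unfold Bad
    intro hall
    have := hall t1 (Finset.mem_range.2 (by omega))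
    have hp := pcnt_rfl2 hev (le_refl t1) T ht1N
    omega
  -- left inverse
  · intro S hS
    obtain ⟨hcard, h⟩ := hbadP1 S hS
    rw [dif_pos h]
    obtain ⟨hev, heq, hN, hm1, _⟩ := find_P1_spec hcard hrnm h
    set t0 := Nat.find h with ht0
    have hmin : ∀ u, u < t0 → ¬ P1 m S u := fun u hu => Nat.find_min h hu
    -- P2 holds for rfl2 t0 S exactly first at t0
    have hex2 : ∃ t, P2 m (rfl2 t0 S) t := by
      refine ⟨t0, ⟨hev, ?_⟩⟩
      have hp := pcnt_rfl2 hev (le_refl t0) S hN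
      omega
    rw [dif_pos hex2]
    have hfind2 : Nat.find hex2 = t0 := by
      rw [Nat.find_eq_iff]
      constructor
      · refine ⟨hev, ?_⟩
        have hp := pcnt_rfl2 hev (le_refl t0) S hN
        omega
      · intro u hu
        unfold P2
        intro ⟨huev, hule⟩
        have hp := pcnt_rfl2 (t := t0) huev (by omega) S (by omega)
        have hnv : ¬ P1 m S u := hmin u hu
        unfold P1 at hnv
        omega
    rw [hfind2, rfl2_rfl2 hev]
  -- right inverse
  · intro T hT
    rw [Finset.mem_powersetCard_univ] at hT
    have hw : P2 m T (2*n) := by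
      refine ⟨by omega, ?_⟩
      rw [pcnt_of_ge T (le_refl _)]
      omega
    have hex : ∃ t, P2 m T t := ⟨2*n, hw⟩
    rw [dif_pos hex]
    set t1 := Nat.find hex with ht1
    have hspec : P2 m T t1 := Nat.find_spec hex
    have hmin : ∀ u, u < t1 → ¬ P2 m T u := fun u hu => Nat.find_min hex hu
    obtain ⟨hev, hle⟩ := hspec
    have ht1N : t1 ≤ 2*n := Nat.find_le hw
    -- S = rfl2 t1 T is bad with first violation at t1
    have hex1 : ∃ t, P1 m (rfl2 t1 T) t := by
      refine ⟨t1, ?_⟩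
      unfold P1
      have hp := pcnt_rfl2 hev (le_refl t1) T ht1N
      omega
    rw [dif_pos hex1]
    have hfind1 : Nat.find hex1 = t1 := by
      rw [Nat.find_eq_iff]
      constructor
      · unfold P1
        have hp := pcnt_rfl2 hev (le_refl t1) T ht1N
        omega
      · intro u hu
        unfold P1
        rcases Nat.even_or_odd u with hue | huo
        · have huev : u % 2 = 0 := Nat.even_iff.1 hue
          have hp := pcnt_rfl2 (t := t1) huev (by omega) T (by omega)
          have hnv : ¬ P2 m T u := hmin u hu
          unfold P2 at hnv
          simp only [huev, true_and, not_le] at hnv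
          omega
        · have huo' : u % 2 = 1 := Nat.odd_iff.1 huo
          have hu1 : 1 ≤ u := by omega
          have hprevev : (u-1) % 2 = 0 := by omega
          have hp := pcnt_rfl2 (t := t1) hprevev (by omega) T (by omega)
          have hnv : ¬ P2 m T (u-1) := hmin (u-1) (by omega)
          unfold P2 at hnv
          simp only [hprevev, true_and, not_le] at hnv
          have hstep : pcnt (rfl2 t1 T) u ≤ pcnt (rfl2 t1 T) (u-1) + 1 := by
            have h' := pcnt_succ_le (rfl2 t1 T) (u-1)
            have h'' : u - 1 + 1 = u := by omega
            rw [h''] at h'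
            exact h'
          omega
    rw [hfind1, rfl2_rfl2 hev]
  -- weights agree
  · intro S hS
    obtain ⟨hcard, h⟩ := hbadP1 S hS
    rw [dif_pos h]
    obtain ⟨hev, heq, hN, hm1, _⟩ := find_P1_spec hcard hrnm h
    exact (prod_rfl2 v hv hev hN S).symm

/-- if r < 2m+2 there are no bad sets -/
theorem bad_empty (m r : ℕ) (hr2 : r < 2*m + 2) :
    (Finset.powersetCard r (Finset.univ : Finset (Fin (2*n)))).filter (Bad m) = ∅ := by
  rw [Finset.eq_empty_iff_forall_notMem]
  intro S hS
  simp only [Finset.mem_filter, Finset.mem_powersetCard_univ] at hS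
  obtain ⟨hcard, hbad⟩ := hS
  unfold Bad at hbad
  push_neg at hbad
  obtain ⟨k, _, hk⟩ := hbad
  have h1 : pcnt S k ≤ r := hcard ▸ pcnt_le_card S k
  have h2 : pcnt S k ≤ k := pcnt_le_self S k
  omega

/-- reindexing sums of products by the pair swap -/
theorem reindex_sum (v : Fin (2*n) → M) (k : ℕ) :
    ∑ S ∈ Finset.powersetCard k (Finset.univ : Finset (Fin (2*n))), ∏ u ∈ S, v (fswap u)
    = ∑ S ∈ Finset.powersetCard k (Finset.univ : Finset (Fin (2*n))), ∏ u ∈ S, v u := by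
  classical
  apply Finset.sum_nbij' (i := fun S => S.image fswap) (j := fun S => S.image fswap)
  · intro S hS
    rw [Finset.mem_powersetCard_univ] at hS ⊢
    rw [Finset.card_image_of_injective _ fswap_inj, hS]
  · intro S hS
    rw [Finset.mem_powersetCard_univ] at hS ⊢
    rw [Finset.card_image_of_injective _ fswap_inj, hS]
  · intro S _
    rw [Finset.image_image]
    have : fswap (n := n) ∘ fswap = id := funext fswap_fswap
    rw [this, Finset.image_id]
  · intro S _
    rw [Finset.image_image]
    have : fswap (n := n) ∘ fswap = id := funext fswap_fswap
    rw [this, Finset.image_id]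
  · intro S _
    rw [Finset.prod_image (fun x _ y _ h => fswap_inj h)]

end Core
end SP

def Hs : Pt := ((1:ℤ), (0:ℤ))
def Vs : Pt := ((0:ℤ), (1:ℤ))

lemma Hs_ne_Vs : Hs ≠ Vs := by
  unfold Hs Vs
  intro h
  exact absurd (congrArg Prod.fst h) (by norm_num)

/-- step weight as a function of the diagonal index -/
noncomputable def wv (n : ℕ) (t : ℤ) : Laur n :=
  if t % 2 = 0 then Xpm n (t/2) (-1) else Xpm n ((t+1)/2 - 1) 1

lemma stepW_eq (n : ℕ) (a b : ℤ) (p s : Pt) :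
    stepW n a b p s = if s = Hs then wv n (p.1 + p.2 - a - b) else 1 := rfl

lemma pathW_cons (n : ℕ) (a b : ℤ) (p s : Pt) (rest : List Pt) :
    pathW n a b p (s :: rest) = stepW n a b p s * pathW n a b (p + s) rest := rfl

lemma sum_step (p s : Pt) (hs : s = Hs ∨ s = Vs) : (p + s).1 + (p + s).2 = p.1 + p.2 + 1 := by
  rcases hs with rfl | rfl <;> simp [Hs, Vs, Prod.fst_add, Prod.snd_add] <;> ring

lemma pathW_ofFn (n : ℕ) (a b : ℤ) :
    ∀ (N : ℕ) (f : Fin N → Pt), (∀ i, f i = Hs ∨ f i = Vs) → ∀ p : Pt,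
      pathW n a b p (List.ofFn f) =
        ∏ i : Fin N, (if f i = Hs then wv n (p.1 + p.2 - a - b + i) else 1) := by
  intro N
  induction N with
  | zero =>
    intro f _ p
    simp [List.ofFn_zero]
    rfl
  | succ k ih =>
    intro f hf p
    rw [List.ofFn_succ, pathW_cons, stepW_eq, ih (fun i => f i.succ) (fun i => hf i.succ)]
    rw [Fin.prod_univ_succ]
    congr 1
    · simp only [Fin.val_zero, Int.ofNat_zero]
      norm_num
    · apply Finset.prod_congr rfl
      intro i _
      have h1 : (p + f 0).1 + (p + f 0).2 = p.1 + p.2 + 1 := sum_step p (f 0) (hf 0)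
      have h2 : ((i.succ : ℕ) : ℤ) = (i : ℕ) + 1 := by
        simp [Fin.val_succ]
      rw [h1, h2]
      ring_nf

/-- partial sums of step functions -/
def psum {N : ℕ} (f : Fin N → Pt) (k : ℕ) : Pt :=
  ∑ i : Fin N, if (i : ℕ) < k then f i else 0

lemma psum_zero {N : ℕ} (f : Fin N → Pt) : psum f 0 = 0 := by
  simp [psum]

lemma psum_succ {N : ℕ} (f : Fin (N+1) → Pt) (k : ℕ) :
    psum f (k+1) = f 0 + psum (fun i => f i.succ) k := by
  unfold psum
  rw [Fin.sum_univ_succ]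
  congr 1
  · simp

lemma mem_pathPoints_ofFn :
    ∀ (N : ℕ) (f : Fin N → Pt) (p q : Pt),
      q ∈ pathPoints p (List.ofFn f) ↔ ∃ k, k ≤ N ∧ q = p + psum f k := by
  intro N
  induction N with
  | zero =>
    intro f p q
    simp only [List.ofFn_zero, pathPoints, List.mem_singleton]
    constructor
    · intro h; exact ⟨0, le_refl 0, by rw [psum_zero, add_zero]; exact h⟩
    · rintro ⟨k, hk, rfl⟩
      have : k = 0 := by omega
      rw [this, psum_zero, add_zero]
  | succ N ih =>
    intro f p q
    rw [List.ofFn_succ]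
    show q ∈ p :: pathPoints (p + f 0) (List.ofFn fun i => f i.succ) ↔ _
    rw [List.mem_cons, ih]
    constructor
    · rintro (rfl | ⟨k, hk, rfl⟩)
      · exact ⟨0, by omega, by rw [psum_zero, add_zero]⟩
      · exact ⟨k+1, by omega, by rw [psum_succ, ← add_assoc]⟩
    · rintro ⟨k, hk, rfl⟩
      match k with
      | 0 => left; rw [psum_zero, add_zero]
      | (k+1) =>
        right
        exact ⟨k, by omega, by rw [psum_succ, ← add_assoc]⟩

/-- every list of unit steps is an `ofFn` of an indicator function -/
lemma exists_ofFn : ∀ (l : List Pt), (∀ s ∈ l, s = Hs ∨ s = Vs) →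
    ∃ S : Finset (Fin l.length), l = List.ofFn (fun i => if i ∈ S then Hs else Vs) := by
  intro l
  induction l with
  | nil => intro _; exact ⟨∅, rfl⟩
  | cons s l ih =>
    intro hl
    obtain ⟨S, hS⟩ := ih (fun x hx => hl x (List.mem_cons_of_mem s hx))
    rcases hl s List.mem_cons_self with hs | hs
    · refine ⟨insert (0 : Fin (l.length + 1)) (S.map (Fin.succEmb l.length)), ?_⟩
      show s :: l = _
      rw [List.ofFn_succ]
      congr 1
      · simp [hs]
      · conv_lhs => rw [hS]
        apply congrArg
        funext i
        refine (if_congr ?_ rfl rfl).symm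
        simp only [Finset.mem_insert, Finset.mem_map]
        constructor
        · rintro (h | ⟨j, hj, hj2⟩)
          · exact absurd h (Fin.succ_ne_zero i)
          · have hji : j = i := Fin.succ_injective _ hj2
            rwa [← hji]
        · intro h
          exact Or.inr ⟨i, h, rfl⟩
    · refine ⟨S.map (Fin.succEmb l.length), ?_⟩
      show s :: l = _
      rw [List.ofFn_succ]
      congr 1
      · have h0 : (0 : Fin (l.length + 1)) ∉ S.map (Fin.succEmb l.length) := by
          simp only [Finset.mem_map]
          rintro ⟨j, _, hj⟩
          exact absurd hj (Fin.succ_ne_zero j)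
        simp [h0, hs]
      · conv_lhs => rw [hS]
        apply congrArg
        funext i
        refine (if_congr ?_ rfl rfl).symm
        simp only [Finset.mem_map]
        constructor
        · rintro ⟨j, hj, hj2⟩
          have hji : j = i := Fin.succ_injective _ hj2
          rwa [← hji]
        · intro h
          exact ⟨i, h, rfl⟩

lemma Xpm_nat (n j : ℕ) (hj : j < n) (e : ℤ) :
    Xpm n (j : ℤ) e = AddMonoidAlgebra.single (Finsupp.single ⟨j, hj⟩ e) 1 := by
  unfold Xpm
  rw [dif_pos (by simp; omega)]
  congr 1

lemma wv_nat_even (n u : ℕ) (h : u % 2 = 0) (hu : u < 2*n) :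
    wv n (u : ℤ) = AddMonoidAlgebra.single (Finsupp.single ⟨u/2, by omega⟩ (-1 : ℤ)) 1 := by
  have h1 : wv n (u : ℤ) = Xpm n ((u/2 : ℕ) : ℤ) (-1) := by
    unfold wv
    rw [if_pos (by omega)]
    congr 1
  rw [h1, Xpm_nat n (u/2) (by omega)]

lemma wv_nat_odd (n u : ℕ) (h : u % 2 = 1) (hu : u < 2*n) :
    wv n (u : ℤ) = AddMonoidAlgebra.single (Finsupp.single ⟨u/2, by omega⟩ (1 : ℤ)) 1 := by
  have h1 : wv n (u : ℤ) = Xpm n ((u/2 : ℕ) : ℤ) 1 := by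
    unfold wv
    rw [if_neg (by omega)]
    congr 1
    omega
  rw [h1, Xpm_nat n (u/2) (by omega)]

lemma single_mul_single_inv (n : ℕ) (x : Fin n) :
    (AddMonoidAlgebra.single (Finsupp.single x (-1 : ℤ)) (1:ℤ)) *
    (AddMonoidAlgebra.single (Finsupp.single x (1 : ℤ)) (1:ℤ)) = (1 : Laur n) := by
  rw [AddMonoidAlgebra.single_mul_single]
  rw [AddMonoidAlgebra.one_def]
  congr 1
  rw [← Finsupp.single_add]
  simp

/-- the pairing hypothesis for the weight function -/
lemma wv_pair (n : ℕ) (u : Fin (2*n)) :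
    wv n ((u : ℕ) : ℤ) * wv n ((SP.fswap u : ℕ) : ℤ) = 1 := by
  have hu := u.isLt
  rcases Nat.mod_two_eq_zero_or_one (u : ℕ) with h | h
  · have hsw : (SP.fswap u : ℕ) = (u : ℕ) + 1 := by
      rw [SP.fswap_val]; unfold SP.nswap; rw [if_pos h]
    rw [hsw, wv_nat_even n _ h hu, wv_nat_odd n ((u:ℕ)+1) (by omega) (by omega)]
    have heq : (⟨((u:ℕ)+1)/2, by omega⟩ : Fin n) = ⟨(u:ℕ)/2, by omega⟩ := by
      apply Fin.ext
      show ((u:ℕ)+1)/2 = (u:ℕ)/2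
      omega
    rw [heq]
    exact single_mul_single_inv n _
  · have h1 : 1 ≤ (u : ℕ) := by omega
    have hsw : (SP.fswap u : ℕ) = (u : ℕ) - 1 := by
      rw [SP.fswap_val]; unfold SP.nswap; rw [if_neg (by omega)]
    rw [hsw, wv_nat_odd n _ h hu, wv_nat_even n ((u:ℕ)-1) (by omega) (by omega)]
    have heq : (⟨((u:ℕ)-1)/2, by omega⟩ : Fin n) = ⟨(u:ℕ)/2, by omega⟩ := by
      apply Fin.ext
      show ((u:ℕ)-1)/2 = (u:ℕ)/2
      omega
    rw [heq, mul_comm]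
    exact single_mul_single_inv n _

/-- the swapped weight is the e-variable -/
lemma wv_fswap_eq_xpmVar (n : ℕ) (i : Fin (2*n)) :
    wv n ((SP.fswap i : ℕ) : ℤ) = xpmVar n i := by
  have hi := i.isLt
  unfold xpmVar
  rcases Nat.mod_two_eq_zero_or_one (i : ℕ) with h | h
  · have hsw : (SP.fswap i : ℕ) = (i : ℕ) + 1 := by
      rw [SP.fswap_val]; unfold SP.nswap; rw [if_pos h]
    rw [hsw, wv_nat_odd n ((i:ℕ)+1) (by omega) (by omega), if_pos h]
    have heq : (⟨((i:ℕ)+1)/2, by omega⟩ : Fin n) = ⟨(i:ℕ)/2, by omega⟩ := by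
      apply Fin.ext
      show ((i:ℕ)+1)/2 = (i:ℕ)/2
      omega
    rw [heq]
  · have hsw : (SP.fswap i : ℕ) = (i : ℕ) - 1 := by
      rw [SP.fswap_val]; unfold SP.nswap; rw [if_neg (by omega)]
    rw [hsw, wv_nat_even n ((i:ℕ)-1) (by omega) (by omega), if_neg (by omega)]
    have heq : (⟨((i:ℕ)-1)/2, by omega⟩ : Fin n) = ⟨(i:ℕ)/2, by omega⟩ := by
      apply Fin.ext
      show ((i:ℕ)-1)/2 = (i:ℕ)/2
      omega
    rw [heq]

/-- epm as a sum over subsets of weights -/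
lemma epm_eq_sum (n r : ℕ) :
    epm n (r : ℤ) = ∑ S ∈ Finset.powersetCard r (Finset.univ : Finset (Fin (2*n))),
      ∏ u ∈ S, wv n ((u : ℕ) : ℤ) := by
  unfold epm
  rw [if_pos (by positivity)]
  rw [Int.toNat_natCast]
  rw [← SP.reindex_sum (fun u => wv n ((u : ℕ) : ℤ)) r]
  apply Finset.sum_congr rfl
  intro S _
  apply Finset.prod_congr rfl
  intro i _
  exact (wv_fswap_eq_xpmVar n i).symm

lemma epm_neg (n : ℕ) {r : ℤ} (hr : r < 0) : epm n r = 0 := by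
  unfold epm
  rw [if_neg (by omega)]

lemma epm_big (n : ℕ) {r : ℤ} (hr : 2*(n:ℤ) < r) : epm n r = 0 := by
  unfold epm
  rw [if_pos (by omega)]
  rw [Finset.powersetCard_eq_empty.2 (by rw [Finset.card_univ, Fintype.card_fin]; omega)]
  simp

lemma ofFn_cast {α : Type*} {M N₂ : ℕ} (h : M = N₂) (g : Fin M → α) :
    List.ofFn g = List.ofFn (fun i : Fin N₂ => g (Fin.cast h.symm i)) := by
  subst h; rfl

lemma steps_sum (l : List Pt) (hl : ∀ s ∈ l, s = Hs ∨ s = Vs) :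
    0 ≤ l.sum.1 ∧ 0 ≤ l.sum.2 ∧ l.sum.1 + l.sum.2 = (l.length : ℤ) := by
  induction l with
  | nil => refine ⟨le_refl 0, le_refl 0, ?_⟩; simp
  | cons s l ih =>
    obtain ⟨h1, h2, h3⟩ := ih (fun x hx => hl x (List.mem_cons_of_mem s hx))
    rcases hl s List.mem_cons_self with hs | hs <;> subst hs <;>
      simp only [List.sum_cons, Prod.fst_add, Prod.snd_add, List.length_cons, Hs, Vs] <;>
      push_cast <;>
      refine ⟨by omega, by omega, by omega⟩

theorem stmt4' (n : ℕ) (a b c : ℤ) (hab : (a + b) % 2 = 0)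
    (h1 : a - 1 < b) (h2 : c - 1 < 2 * (n : ℤ) + a + b - c) :
    (∑ᶠ (l : List Pt) (_ : (∀ s ∈ l, s = ((1:ℤ),(0:ℤ)) ∨ s = ((0:ℤ),(1:ℤ))) ∧
        (a, b) + l.sum = (c, 2 * (n : ℤ) + a + b - c) ∧
        ∀ p ∈ pathPoints (a, b) l, p.1 - 1 ≤ p.2),
      pathW n a b (a, b) l)
      = epm n (c - a) - epm n (c - b - 2) := by
  classical
  obtain ⟨m, hm⟩ : ∃ m : ℕ, b = a + 2 * m := ⟨((b - a) / 2).toNat, by omega⟩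
  by_cases hc : a ≤ c ∧ c ≤ a + 2 * (n : ℤ)
  case neg =>
    have hnone : ∀ l : List Pt,
        ¬ ((∀ s ∈ l, s = ((1:ℤ),(0:ℤ)) ∨ s = ((0:ℤ),(1:ℤ))) ∧
          (a, b) + l.sum = (c, 2 * (n : ℤ) + a + b - c) ∧
          ∀ p ∈ pathPoints (a, b) l, p.1 - 1 ≤ p.2) := by
      rintro l ⟨hsteps, hsum, _⟩
      obtain ⟨hs1, hs2, _⟩ := steps_sum l hsteps
      have e1 : a + l.sum.1 = c := by
        have := congrArg Prod.fst hsum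
        simpa using this
      have e2 : b + l.sum.2 = 2 * (n : ℤ) + a + b - c := by
        have := congrArg Prod.snd hsum
        simpa using this
      rcases not_and_or.mp hc with hlt | hgt <;> omega
    have hz : ∀ l : List Pt,
        (∑ᶠ (_ : (∀ s ∈ l, s = ((1:ℤ),(0:ℤ)) ∨ s = ((0:ℤ),(1:ℤ))) ∧
          (a, b) + l.sum = (c, 2 * (n : ℤ) + a + b - c) ∧
          ∀ p ∈ pathPoints (a, b) l, p.1 - 1 ≤ p.2),
        pathW n a b (a, b) l) = 0 := by
      intro l
      haveI : IsEmpty ((∀ s ∈ l, s = ((1:ℤ),(0:ℤ)) ∨ s = ((0:ℤ),(1:ℤ))) ∧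
          (a, b) + l.sum = (c, 2 * (n : ℤ) + a + b - c) ∧
          ∀ p ∈ pathPoints (a, b) l, p.1 - 1 ≤ p.2) := ⟨hnone l⟩
      exact finsum_of_isEmpty _
    rw [finsum_congr hz, finsum_zero]
    rcases not_and_or.mp hc with hlt | hgt
    · rw [epm_neg n (by omega), epm_neg n (by omega)]
      ring
    · rw [epm_big n (by omega), epm_neg n (by omega)]
      ring
  case pos =>
    set N := 2 * n with hN
    set r := (c - a).toNat with hrdef
    have hr : (r : ℤ) = c - a := by omega
    have hrN : r ≤ N := by omega
    have hrnm : r ≤ n + m := by omega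
    set f : Finset (Fin N) → Fin N → Pt := fun S i => if i ∈ S then Hs else Vs with hf
    set listOf : Finset (Fin N) → List Pt := fun S => List.ofFn (f S) with hlistOf
    have hfHV : ∀ S i, f S i = Hs ∨ f S i = Vs := by
      intro S i
      by_cases h : i ∈ S <;> simp [hf, h]
    have hlo : ∀ S, listOf S = List.ofFn (f S) := fun S => rfl
    have hfH : ∀ S i, (f S i = Hs ↔ i ∈ S) := by
      intro S i
      rw [hf]
      by_cases h : i ∈ S
      · simp [h]
      · simp [h]
        exact Ne.symm Hs_ne_Vs
    have hcount : ∀ (S : Finset (Fin N)) (k : ℕ),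
        (∑ i : Fin N, if (i : ℕ) < k ∧ i ∈ S then (1:ℤ) else 0) = (SP.pcnt S k : ℤ) := by
      intro S k
      rw [Finset.sum_boole]
      congr 1
      unfold SP.pcnt
      congr 1
      ext u
      simp only [Finset.mem_filter, Finset.mem_univ, true_and]
      tauto
    have hcount2 : ∀ (S : Finset (Fin N)) (k : ℕ), k ≤ N →
        (∑ i : Fin N, if (i : ℕ) < k ∧ i ∉ S then (1:ℤ) else 0)
          = (k : ℤ) - (SP.pcnt S k : ℤ) := by
      intro S k hk
      rw [Finset.sum_boole]
      have hsplit := Finset.card_filter_add_card_filter_not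
        (s := Finset.univ.filter (fun u : Fin N => (u : ℕ) < k))
        (p := fun u : Fin N => u ∈ S)
      simp only [Finset.filter_filter] at hsplit
      rw [SP.card_univ_filter_lt hk] at hsplit
      have he1 : (Finset.univ.filter (fun u : Fin N => (u : ℕ) < k ∧ u ∈ S)).card
          = SP.pcnt S k := by
        unfold SP.pcnt
        congr 1
        ext u
        simp only [Finset.mem_filter, Finset.mem_univ, true_and]
        tauto
      rw [he1] at hsplit
      have hle := SP.pcnt_le_self S k
      push_cast
      omega
    have hpsum : ∀ (S : Finset (Fin N)) (k : ℕ), k ≤ N →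
        psum (f S) k = (((SP.pcnt S k : ℕ) : ℤ), (k : ℤ) - (SP.pcnt S k : ℕ)) := by
      intro S k hk
      unfold psum
      have hfst : (∑ i : Fin N, if (i : ℕ) < k then f S i else 0).1
          = ((SP.pcnt S k : ℕ) : ℤ) := by
        rw [Prod.fst_sum, ← hcount S k]
        apply Finset.sum_congr rfl
        intro i _
        by_cases h1 : (i : ℕ) < k <;> by_cases h2 : i ∈ S <;>
          simp [hf, h1, h2, Hs, Vs]
      have hsnd : (∑ i : Fin N, if (i : ℕ) < k then f S i else 0).2
          = (k : ℤ) - (SP.pcnt S k : ℕ) := by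
        rw [Prod.snd_sum, ← hcount2 S k hk]
        apply Finset.sum_congr rfl
        intro i _
        by_cases h1 : (i : ℕ) < k <;> by_cases h2 : i ∈ S <;>
          simp [hf, h1, h2, Hs, Vs]
      exact Prod.ext hfst hsnd
    have hsum_listOf : ∀ S : Finset (Fin N),
        (listOf S).sum = ((S.card : ℤ), (N : ℤ) - S.card) := by
      intro S
      have h0 : (listOf S).sum = psum (f S) N := by
        rw [hlo S, List.sum_ofFn]
        unfold psum
        apply Finset.sum_congr rfl
        intro i _
        rw [if_pos i.isLt]
      rw [h0, hpsum S N (le_refl N), SP.pcnt_of_ge S (le_refl N)]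
    set goodSets : Finset (Finset (Fin N)) :=
      (Finset.powersetCard r (Finset.univ : Finset (Fin N))).filter
        (fun S => ¬ SP.Bad m S) with hgood
    have hQiff : ∀ S : Finset (Fin N),
        ((∀ s ∈ listOf S, s = ((1:ℤ),(0:ℤ)) ∨ s = ((0:ℤ),(1:ℤ))) ∧
          (a, b) + (listOf S).sum = (c, 2 * (n : ℤ) + a + b - c) ∧
          ∀ p ∈ pathPoints (a, b) (listOf S), p.1 - 1 ≤ p.2)
        ↔ S ∈ goodSets := by
      intro S
      have hsteps : ∀ s ∈ listOf S, s = ((1:ℤ),(0:ℤ)) ∨ s = ((0:ℤ),(1:ℤ)) := by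
        intro s hs
        rw [hlo S] at hs
        simp only [List.mem_ofFn] at hs
        obtain ⟨i, rfl⟩ := hs
        exact hfHV S i
      have hsum_iff : ((a, b) + (listOf S).sum = (c, 2 * (n : ℤ) + a + b - c))
          ↔ S.card = r := by
        rw [hsum_listOf S]
        simp only [Prod.mk_add_mk, Prod.mk.injEq]
        constructor
        · rintro ⟨e1, _⟩; omega
        · intro h; constructor <;> omega
      have hstay_iff : (∀ p ∈ pathPoints (a, b) (listOf S), p.1 - 1 ≤ p.2)
          ↔ (∀ k ∈ Finset.range (N+1), SP.pcnt S k ≤ m + (k+1)/2) := by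
        constructor
        · intro h k hk
          rw [Finset.mem_range] at hk
          have hkN : k ≤ N := by omega
          have hmem : ((a, b) : Pt) + psum (f S) k ∈ pathPoints (a, b) (listOf S) := by
            rw [hlo S, mem_pathPoints_ofFn]
            exact ⟨k, hkN, rfl⟩
          have := h _ hmem
          rw [hpsum S k hkN] at this
          simp only [Prod.mk_add_mk] at this
          simp at this
          omega
        · intro h p hp
          rw [hlo S, mem_pathPoints_ofFn] at hp
          obtain ⟨k, hkN, rfl⟩ := hp
          rw [hpsum S k hkN]
          simp only [Prod.mk_add_mk]
          have := h k (Finset.mem_range.2 (by omega))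
          simp
          omega
      rw [hgood]
      simp only [Finset.mem_filter, Finset.mem_powersetCard_univ]
      constructor
      · rintro ⟨_, hsum, hstay⟩
        refine ⟨hsum_iff.1 hsum, ?_⟩
        unfold SP.Bad
        rw [not_not]
        exact hstay_iff.1 hstay
      · rintro ⟨hcard, hgoodS⟩
        unfold SP.Bad at hgoodS
        rw [not_not] at hgoodS
        exact ⟨hsteps, hsum_iff.2 hcard, hstay_iff.2 hgoodS⟩
    -- set equality
    have setEq : {l : List Pt | (∀ s ∈ l, s = ((1:ℤ),(0:ℤ)) ∨ s = ((0:ℤ),(1:ℤ))) ∧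
          (a, b) + l.sum = (c, 2 * (n : ℤ) + a + b - c) ∧
          ∀ p ∈ pathPoints (a, b) l, p.1 - 1 ≤ p.2}
        = (↑(goodSets.image listOf) : Set (List Pt)) := by
      ext l
      simp only [Set.mem_setOf_eq, Finset.coe_image, Set.mem_image, Finset.mem_coe]
      constructor
      · rintro ⟨hsteps, hsum, hstay⟩
        have hsteps' : ∀ s ∈ l, s = Hs ∨ s = Vs := hsteps
        have hlen : l.length = N := by
          obtain ⟨hs1, hs2, hs3⟩ := steps_sum l hsteps'
          have e1 : a + l.sum.1 = c := by
            have := congrArg Prod.fst hsum; simpa using this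
          have e2 : b + l.sum.2 = 2 * (n : ℤ) + a + b - c := by
            have := congrArg Prod.snd hsum; simpa using this
          omega
        obtain ⟨S₀, hS₀⟩ := exists_ofFn l hsteps'
        set S : Finset (Fin N) := S₀.map (finCongr hlen).toEmbedding with hS
        have hofn : l = listOf S := by
          rw [hlo S]
          conv_lhs => rw [hS₀]
          rw [ofFn_cast hlen]
          apply congrArg
          funext i
          refine if_congr ?_ rfl rfl
          rw [hS, Finset.mem_map_equiv]
          constructor <;> intro h <;> exact h
        refine ⟨S, ?_, hofn.symm⟩
        apply (hQiff S).1
        rw [← hofn]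
        exact ⟨hsteps, hsum, hstay⟩
      · rintro ⟨S, hS, rfl⟩
        exact (hQiff S).2 hS
    -- rewrite the finsum
    have hLHS : (∑ᶠ (l : List Pt) (_ : (∀ s ∈ l, s = ((1:ℤ),(0:ℤ)) ∨ s = ((0:ℤ),(1:ℤ))) ∧
        (a, b) + l.sum = (c, 2 * (n : ℤ) + a + b - c) ∧
        ∀ p ∈ pathPoints (a, b) l, p.1 - 1 ≤ p.2),
      pathW n a b (a, b) l)
        = ∑ l ∈ goodSets.image listOf, pathW n a b (a, b) l := by
      calc (∑ᶠ (l : List Pt) (_ : (∀ s ∈ l, s = ((1:ℤ),(0:ℤ)) ∨ s = ((0:ℤ),(1:ℤ))) ∧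
            (a, b) + l.sum = (c, 2 * (n : ℤ) + a + b - c) ∧
            ∀ p ∈ pathPoints (a, b) l, p.1 - 1 ≤ p.2),
          pathW n a b (a, b) l)
          = ∑ᶠ (l : List Pt) (_ : l ∈ (↑(goodSets.image listOf) : Set (List Pt))),
              pathW n a b (a, b) l := by
            rw [← setEq]
            rfl
        _ = _ := finsum_mem_coe_finset _ _
    rw [hLHS]
    -- injectivity
    have hinj : ∀ S ∈ goodSets, ∀ T ∈ goodSets, listOf S = listOf T → S = T := by
      intro S _ T _ h
      rw [hlo S, hlo T] at h
      have hfe := List.ofFn_inj.mp h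
      ext i
      rw [← hfH S i, ← hfH T i, congrFun hfe i]
    rw [Finset.sum_image hinj]
    -- weights
    have hLw : ∀ S : Finset (Fin N), pathW n a b (a, b) (listOf S)
        = ∏ u ∈ S, wv n ((u : ℕ) : ℤ) := by
      intro S
      rw [hlo S, pathW_ofFn n a b N (f S) (hfHV S) (a, b)]
      have hterm : ∀ i : Fin N,
          (if f S i = Hs then wv n ((a,b).1 + (a,b).2 - a - b + (i : ℕ)) else 1)
          = (if i ∈ S then wv n ((i : ℕ) : ℤ) else 1) := by
        intro i
        have harg : ((a,b).1 + (a,b).2 - a - b + ((i : ℕ) : ℤ)) = ((i : ℕ) : ℤ) := by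
          show a + b - a - b + ((i : ℕ) : ℤ) = ((i : ℕ) : ℤ)
          ring
        rw [harg]
        exact if_congr (hfH S i) rfl rfl
      rw [Finset.prod_congr rfl (fun i _ => hterm i)]
      rw [Finset.prod_ite_mem Finset.univ S (fun u => wv n ((u : ℕ) : ℤ)), Finset.univ_inter]
    rw [Finset.sum_congr rfl (fun S _ => hLw S)]
    -- split into all minus bad
    have htot := Finset.sum_filter_add_sum_filter_not
      (Finset.powersetCard r (Finset.univ : Finset (Fin N))) (SP.Bad m)
      (fun S => ∏ u ∈ S, wv n ((u : ℕ) : ℤ))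
    have hepmr : epm n (c - a) = ∑ S ∈ Finset.powersetCard r (Finset.univ : Finset (Fin N)),
        ∏ u ∈ S, wv n ((u : ℕ) : ℤ) := by
      rw [← hr]
      exact epm_eq_sum n r
    by_cases hr2 : 2*m + 2 ≤ r
    · have hbad := SP.bad_sum (fun u : Fin N => wv n ((u : ℕ) : ℤ)) (wv_pair n) m r hrnm hr2
      have hepmb : epm n (c - b - 2) =
          ∑ T ∈ Finset.powersetCard (r - (2*m + 2)) (Finset.univ : Finset (Fin N)),
            ∏ u ∈ T, wv n ((u : ℕ) : ℤ) := by
        have hcb : c - b - 2 = ((r - (2*m + 2) : ℕ) : ℤ) := by omega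
        rw [hcb]
        exact epm_eq_sum n (r - (2*m+2))
      rw [hepmr, hepmb, ← hbad, hgood, ← htot]
      ring
    · have hbad0 := SP.bad_empty (n := n) m r (by omega)
      rw [hepmr]
      have hepmb : epm n (c - b - 2) = 0 := epm_neg n (by omega)
      rw [hepmb, hgood, ← htot, hbad0, Finset.sum_empty]
      ring

/-- **(Lemma 4.2 / symplectic paths.)** For `a + b` even with `(a,b)` and
`(c, 2n+a+b-c)` strictly above the line `y = x - 1`, the generating function of
lattice paths from `(a,b)` to `(c, 2n+a+b-c)` with unit east and north steps,
weighted by the modified `e`-labelling, staying weakly above `y = x - 1`, is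
`e_{c-a}(x^±) - e_{c-b-2}(x^±)`. -/
theorem stmt4 (n : ℕ) (a b c : ℤ) (hab : (a + b) % 2 = 0)
    (h1 : a - 1 < b) (h2 : c - 1 < 2 * (n : ℤ) + a + b - c) :
    (∑ᶠ (l : List Pt) (_ : (∀ s ∈ l, s = ((1:ℤ),(0:ℤ)) ∨ s = ((0:ℤ),(1:ℤ))) ∧
        (a, b) + l.sum = (c, 2 * (n : ℤ) + a + b - c) ∧
        ∀ p ∈ pathPoints (a, b) l, p.1 - 1 ≤ p.2),
      pathW n a b (a, b) l)
      = epm n (c - a) - epm n (c - b - 2) := by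
  exact stmt4' n a b c hab h1 h2
end

section
/- Let k be a positive integer and a, b, c ∈ Z, n ∈ N with a+b even and the points (a,b) and (c, 2n+a+b-c) strictly above y = x−1. Consider lattice paths with step set {(1,0), (0,1), (1,1)} where diagonal steps (1,1) are only allowed to start on the line y = x, diagonal and vertical steps have weight 1, and horizontal steps carry the modified e-labelling weights. Then the generating function of such paths from (a,b) to (c, 2n+a+b-c) that do not cross the line y = x−1 and have exactly k diagonal steps equals e_{c-b-k}(x^±) − e_{c-b-k-2}(x^±), where x^± = (x_1, x_1^{-1}, ..., x_n, x_n^{-1}). -/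
/-- Diagonal steps `(1,1)` may only start on the line `y = x`. -/
def DiagOK : Pt → List Pt → Prop
  | _, [] => True
  | p, s :: rest => (s = ((1:ℤ),(1:ℤ)) → p.2 = p.1) ∧ DiagOK (p + s) rest

namespace Stmt5

abbrev SH : Pt := ((1:ℤ),(0:ℤ))
abbrev SV : Pt := ((0:ℤ),(1:ℤ))
abbrev SD : Pt := ((1:ℤ),(1:ℤ))

lemma pathPoints_append (p : Pt) (l : List Pt) (s : Pt) :
    pathPoints p (l ++ [s]) = pathPoints p l ++ [p + l.sum + s] := by
  induction l generalizing p with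
  | nil => simp [pathPoints]
  | cons t rest ih =>
      show p :: pathPoints (p + t) (rest ++ [s]) = (p :: pathPoints (p + t) rest) ++ _
      rw [ih, List.sum_cons]
      simp only [List.cons_append, List.append_assoc]
      congr 3
      abel

lemma endpoint_mem_pathPoints (p : Pt) (l : List Pt) : p + l.sum ∈ pathPoints p l := by
  induction l generalizing p with
  | nil => simp [pathPoints]
  | cons t rest ih =>
      simp only [pathPoints, List.sum_cons, List.mem_cons]
      right
      have := ih (p + t)
      rwa [add_assoc] at this

lemma start_mem_pathPoints (p : Pt) (l : List Pt) : p ∈ pathPoints p l := by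
  cases l <;> simp [pathPoints]

lemma pathW_append (n : ℕ) (a b : ℤ) (p : Pt) (l : List Pt) (s : Pt) :
    pathW n a b p (l ++ [s]) = pathW n a b p l * stepW n a b (p + l.sum) s := by
  induction l generalizing p with
  | nil => simp [pathW]
  | cons t rest ih =>
      show stepW n a b p t * pathW n a b (p + t) (rest ++ [s]) = _
      rw [ih, List.sum_cons]
      show _ = stepW n a b p t * pathW n a b (p + t) rest * stepW n a b (p + (t + rest.sum)) s
      rw [mul_assoc, add_assoc]

lemma diagOK_append (p : Pt) (l : List Pt) (s : Pt) :
    DiagOK p (l ++ [s]) ↔ DiagOK p l ∧ (s = SD → (p + l.sum).2 = (p + l.sum).1) := by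
  induction l generalizing p with
  | nil => simp [DiagOK]
  | cons t rest ih =>
      show ((t = SD → p.2 = p.1) ∧ DiagOK (p + t) (rest ++ [s])) ↔ _
      rw [ih, List.sum_cons]
      show _ ↔ ((t = SD → p.2 = p.1) ∧ DiagOK (p + t) rest) ∧ _
      rw [add_assoc]
      tauto


/-- The path predicate from the theorem statement. -/
def Pred (a b : ℤ) (k : ℕ) (c d : ℤ) (l : List Pt) : Prop :=
  (∀ s ∈ l, s = ((1:ℤ),(0:ℤ)) ∨ s = ((0:ℤ),(1:ℤ)) ∨ s = ((1:ℤ),(1:ℤ))) ∧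
  (a, b) + l.sum = (c, d) ∧
  (∀ p ∈ pathPoints (a, b) l, p.1 - 1 ≤ p.2) ∧
  DiagOK (a, b) l ∧ l.count ((1:ℤ),(1:ℤ)) = k

lemma finite_len (N : ℕ) :
    {l : List Pt | (∀ s ∈ l, s = SH ∨ s = SV ∨ s = SD) ∧ l.length ≤ N}.Finite := by
  induction N with
  | zero =>
      refine (Set.finite_singleton ([] : List Pt)).subset ?_
      rintro l ⟨-, h⟩
      simp only [Nat.le_zero, List.length_eq_zero_iff] at h
      simp [h]
  | succ N ih =>
      refine (((ih.image (SH :: ·)).union ((ih.image (SV :: ·)).union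
        (ih.image (SD :: ·)))).union (Set.finite_singleton ([] : List Pt))).subset ?_
      rintro l ⟨h1, h2⟩
      cases l with
      | nil => right; rfl
      | cons s t =>
          left
          have hs := h1 s (by simp)
          have ht : t ∈ {l : List Pt | (∀ s ∈ l, s = SH ∨ s = SV ∨ s = SD) ∧ l.length ≤ N} :=
            ⟨fun u hu => h1 u (by simp [hu]), by simp at h2; omega⟩
          rcases hs with h | h | h
          · exact Or.inl ⟨t, ht, by rw [h]⟩
          · exact Or.inr (Or.inl ⟨t, ht, by rw [h]⟩)
          · exact Or.inr (Or.inr ⟨t, ht, by rw [h]⟩)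

lemma length_le_rise (l : List Pt) (h : ∀ s ∈ l, s = SH ∨ s = SV ∨ s = SD) :
    (l.length : ℤ) ≤ l.sum.1 + l.sum.2 := by
  induction l with
  | nil => simp
  | cons s t ih =>
      have ht := ih (fun u hu => h u (by simp [hu]))
      have hs := h s (by simp)
      rcases hs with h' | h' | h' <;>
        · subst h'
          simp only [List.sum_cons, List.length_cons, Prod.fst_add, Prod.snd_add] at *
          push_cast
          omega

lemma finite_pred (a b : ℤ) (k : ℕ) (c d : ℤ) : {l | Pred a b k c d l}.Finite := by
  refine (finite_len (c + d - a - b).toNat).subset ?_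
  rintro l ⟨h1, h2, -, -, -⟩
  refine ⟨h1, ?_⟩
  have hl := length_le_rise l h1
  have e1 : a + l.sum.1 = c := by
    have := congrArg Prod.fst h2; simpa using this
  have e2 : b + l.sum.2 = d := by
    have := congrArg Prod.snd h2; simpa using this
  omega

/-- The generating function. -/
noncomputable def GF (n : ℕ) (a b : ℤ) (k : ℕ) (c d : ℤ) : Laur n :=
  ∑ᶠ (l : List Pt) (_ : Pred a b k c d l), pathW n a b (a, b) l

lemma GF_eq_sum (n : ℕ) (a b : ℤ) (k : ℕ) (c d : ℤ) :
    GF n a b k c d = ∑ l ∈ (finite_pred a b k c d).toFinset, pathW n a b (a, b) l := by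
  have h : GF n a b k c d = ∑ᶠ l ∈ {l | Pred a b k c d l}, pathW n a b (a, b) l := rfl
  rw [h, finsum_mem_eq_finite_toFinset_sum _ (finite_pred a b k c d)]

lemma pred_endpoint_above {a b : ℤ} {k : ℕ} {c d : ℤ} {l : List Pt}
    (h : Pred a b k c d l) : c - 1 ≤ d := by
  obtain ⟨-, h2, h3, -, -⟩ := h
  have := h3 _ (h2 ▸ endpoint_mem_pathPoints (a, b) l)
  simpa using this

lemma GF_zero_of_below {n : ℕ} {a b : ℤ} {k : ℕ} {c d : ℤ} (h : ¬ (c - 1 ≤ d)) :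
    GF n a b k c d = 0 := by
  rw [GF_eq_sum]
  refine Finset.sum_eq_zero fun l hl => ?_
  have hp : Pred a b k c d l := (Set.Finite.mem_toFinset (finite_pred a b k c d)).mp hl
  exact absurd (pred_endpoint_above hp) h

lemma sum_fst_snd {a b c d : ℤ} {x : Pt} (h : (a, b) + x = (c, d)) :
    a + x.1 = c ∧ b + x.2 = d :=
  ⟨by have := congrArg Prod.fst h; simpa using this,
   by have := congrArg Prod.snd h; simpa using this⟩

lemma pred_append_H {a b : ℤ} {k : ℕ} {c d : ℤ} (hcd : c - 1 ≤ d) (l : List Pt) :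
    Pred a b k c d (l ++ [SH]) ↔ Pred a b k (c - 1) d l := by
  constructor
  · rintro ⟨h1, h2, h3, h4, h5⟩
    rw [List.sum_append] at h2
    obtain ⟨e1, e2⟩ := sum_fst_snd h2
    simp only [List.sum_cons, List.sum_nil, add_zero, Prod.fst_add, Prod.snd_add] at e1 e2
    refine ⟨fun s hs => h1 s (by simp [hs]), ?_, ?_, (diagOK_append _ _ _ |>.mp h4).1, ?_⟩
    · have : l.sum = (c - 1 - a, d - b) := by
        apply Prod.ext <;> simp <;> omega
      rw [this]; apply Prod.ext <;> simp <;> omega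
    · intro p hp
      exact h3 p (by rw [pathPoints_append]; simp [hp])
    · simpa using h5
  · rintro ⟨h1, h2, h3, h4, h5⟩
    obtain ⟨e1, e2⟩ := sum_fst_snd h2
    refine ⟨?_, ?_, ?_, ?_, ?_⟩
    · intro s hs
      rcases List.mem_append.mp hs with h | h
      · exact h1 s h
      · simp at h; simp [h]
    · rw [List.sum_append]
      apply Prod.ext <;> simp <;> omega
    · intro p hp
      rw [pathPoints_append] at hp
      rcases List.mem_append.mp hp with h | h
      · exact h3 p h
      · simp only [List.mem_singleton] at h
        subst h
        simp only [Prod.fst_add, Prod.snd_add]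
        omega
    · rw [diagOK_append]
      exact ⟨h4, by intro h; exact absurd h (by decide)⟩
    · simpa using h5

lemma pred_append_V {a b : ℤ} {k : ℕ} {c d : ℤ} (hcd : c - 1 ≤ d) (l : List Pt) :
    Pred a b k c d (l ++ [SV]) ↔ Pred a b k c (d - 1) l := by
  constructor
  · rintro ⟨h1, h2, h3, h4, h5⟩
    rw [List.sum_append] at h2
    obtain ⟨e1, e2⟩ := sum_fst_snd h2
    simp only [List.sum_cons, List.sum_nil, add_zero, Prod.fst_add, Prod.snd_add] at e1 e2
    refine ⟨fun s hs => h1 s (by simp [hs]), ?_, ?_, (diagOK_append _ _ _ |>.mp h4).1, ?_⟩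
    · apply Prod.ext <;> simp <;> omega
    · intro p hp
      exact h3 p (by rw [pathPoints_append]; simp [hp])
    · simpa using h5
  · rintro ⟨h1, h2, h3, h4, h5⟩
    obtain ⟨e1, e2⟩ := sum_fst_snd h2
    refine ⟨?_, ?_, ?_, ?_, ?_⟩
    · intro s hs
      rcases List.mem_append.mp hs with h | h
      · exact h1 s h
      · simp at h; simp [h]
    · rw [List.sum_append]
      apply Prod.ext <;> simp <;> omega
    · intro p hp
      rw [pathPoints_append] at hp
      rcases List.mem_append.mp hp with h | h
      · exact h3 p h
      · simp only [List.mem_singleton] at h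
        subst h
        simp only [Prod.fst_add, Prod.snd_add]
        omega
    · rw [diagOK_append]
      exact ⟨h4, by intro h; exact absurd h (by decide)⟩
    · simpa using h5

lemma pred_append_D {a b : ℤ} {k : ℕ} {c d : ℤ} (l : List Pt) :
    Pred a b k c d (l ++ [SD]) ↔ (c = d ∧ 1 ≤ k ∧ Pred a b (k - 1) (c - 1) (d - 1) l) := by
  constructor
  · rintro ⟨h1, h2, h3, h4, h5⟩
    rw [List.sum_append] at h2
    obtain ⟨e1, e2⟩ := sum_fst_snd h2
    simp only [List.sum_cons, List.sum_nil, add_zero, Prod.fst_add, Prod.snd_add] at e1 e2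
    rw [diagOK_append] at h4
    have hdiag := h4.2 rfl
    simp only [Prod.fst_add, Prod.snd_add] at hdiag
    have hcount : l.count ((1:ℤ),(1:ℤ)) + 1 = k := by simpa using h5
    have hcd : c = d := by omega
    refine ⟨hcd, by omega, fun s hs => h1 s (by simp [hs]), ?_, ?_, h4.1, by omega⟩
    · apply Prod.ext <;> simp <;> omega
    · intro p hp
      exact h3 p (by rw [pathPoints_append]; simp [hp])
  · rintro ⟨hcd, hk, h1, h2, h3, h4, h5⟩
    obtain ⟨e1, e2⟩ := sum_fst_snd h2
    refine ⟨?_, ?_, ?_, ?_, ?_⟩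
    · intro s hs
      rcases List.mem_append.mp hs with h | h
      · exact h1 s h
      · simp at h; simp [h]
    · rw [List.sum_append]
      apply Prod.ext <;> simp <;> omega
    · intro p hp
      rw [pathPoints_append] at hp
      rcases List.mem_append.mp hp with h | h
      · exact h3 p h
      · simp only [List.mem_singleton] at h
        subst h
        simp only [Prod.fst_add, Prod.snd_add]
        omega
    · rw [diagOK_append]
      refine ⟨h4, fun _ => ?_⟩
      simp only [Prod.fst_add, Prod.snd_add]
      omega
    · have hone : ([SD] : List Pt).count ((1:ℤ),(1:ℤ)) = 1 := by simp
      rw [List.count_append, h5, hone]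
      omega


/-- Weight of a horizontal step at total level `a+b+t`. -/
noncomputable def wt (n : ℕ) (t : ℤ) : Laur n :=
  if t % 2 = 0 then Xpm n (t / 2) (-1) else Xpm n ((t + 1) / 2 - 1) 1

lemma stepW_H (n : ℕ) (a b : ℤ) (p : Pt) :
    stepW n a b p ((1:ℤ),(0:ℤ)) = wt n (p.1 + p.2 - a - b) := by
  simp [stepW, wt]

lemma stepW_V (n : ℕ) (a b : ℤ) (p : Pt) : stepW n a b p ((0:ℤ),(1:ℤ)) = 1 := by
  rw [stepW, if_neg (by decide)]

lemma stepW_D (n : ℕ) (a b : ℤ) (p : Pt) : stepW n a b p ((1:ℤ),(1:ℤ)) = 1 := by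
  rw [stepW, if_neg (by decide)]

lemma getLast_mem_image {x : Pt} {T : Finset (List Pt)} {l : List Pt}
    (hl : l ∈ T.image (· ++ [x])) : l.getLast? = some x := by
  obtain ⟨u, -, rfl⟩ := Finset.mem_image.mp hl
  simp

/-- The one-step peeling identity. -/
lemma peel (n : ℕ) (a b : ℤ) (k : ℕ) (c d : ℤ) (hrise : a + b < c + d) (hcd : c - 1 ≤ d) :
    GF n a b k c d
      = GF n a b k (c-1) d * wt n (c - 1 + d - a - b) + GF n a b k c (d-1)
        + (if c = d ∧ 1 ≤ k then GF n a b (k-1) (c-1) (d-1) else 0) := by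
  classical
  have hTfin : ∀ (k' : ℕ) (c' d' : ℤ) (l : List Pt),
      l ∈ (finite_pred a b k' c' d').toFinset ↔ Pred a b k' c' d' l := fun k' c' d' l =>
    Set.Finite.mem_toFinset _
  set TH := (finite_pred a b k (c-1) d).toFinset with hTH
  set TV := (finite_pred a b k c (d-1)).toFinset with hTV
  set TD := (finite_pred a b (k-1) (c-1) (d-1)).toFinset with hTD
  have hsplit : (finite_pred a b k c d).toFinset
      = (TH.image (· ++ [SH]) ∪ TV.image (· ++ [SV]))
        ∪ (if c = d ∧ 1 ≤ k then TD.image (· ++ [SD]) else ∅) := by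
    ext l
    rw [hTfin]
    constructor
    · intro hl
      have hne : l ≠ [] := by
        rintro rfl
        obtain ⟨e1, e2⟩ := sum_fst_snd hl.2.1
        simp at e1 e2
        omega
      rcases List.eq_nil_or_concat l with rfl | ⟨L, s, rfl⟩
      · exact absurd rfl hne
      rw [List.concat_eq_append] at hl ⊢
      have hs : s = SH ∨ s = SV ∨ s = SD := hl.1 s (by simp)
      rcases hs with rfl | rfl | rfl
      · refine Finset.mem_union_left _ (Finset.mem_union_left _ ?_)
        exact Finset.mem_image.mpr ⟨L, (hTfin _ _ _ _).mpr ((pred_append_H hcd L).mp hl), rfl⟩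
      · refine Finset.mem_union_left _ (Finset.mem_union_right _ ?_)
        exact Finset.mem_image.mpr ⟨L, (hTfin _ _ _ _).mpr ((pred_append_V hcd L).mp hl), rfl⟩
      · obtain ⟨h1, h2, h3⟩ := (pred_append_D L).mp hl
        refine Finset.mem_union_right _ ?_
        rw [if_pos ⟨h1, h2⟩]
        exact Finset.mem_image.mpr ⟨L, (hTfin _ _ _ _).mpr h3, rfl⟩
    · intro hl
      rcases Finset.mem_union.mp hl with hl | hl
      · rcases Finset.mem_union.mp hl with hl | hl
        · obtain ⟨u, hu, rfl⟩ := Finset.mem_image.mp hl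
          exact (pred_append_H hcd u).mpr ((hTfin _ _ _ _).mp hu)
        · obtain ⟨u, hu, rfl⟩ := Finset.mem_image.mp hl
          exact (pred_append_V hcd u).mpr ((hTfin _ _ _ _).mp hu)
      · by_cases hc : c = d ∧ 1 ≤ k
        · rw [if_pos hc] at hl
          obtain ⟨u, hu, rfl⟩ := Finset.mem_image.mp hl
          exact (pred_append_D u).mpr ⟨hc.1, hc.2, (hTfin _ _ _ _).mp hu⟩
        · rw [if_neg hc] at hl
          exact absurd hl (Finset.notMem_empty l)
  have hdisj1 : Disjoint (TH.image (· ++ [SH])) (TV.image (· ++ [SV])) := by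
    rw [Finset.disjoint_left]
    intro l h1 h2
    have := getLast_mem_image h1
    rw [getLast_mem_image h2] at this
    exact absurd (Option.some_injective _ this) (by decide)
  have hdisj2 : Disjoint (TH.image (· ++ [SH]) ∪ TV.image (· ++ [SV]))
      (if c = d ∧ 1 ≤ k then TD.image (· ++ [SD]) else ∅) := by
    by_cases hc : c = d ∧ 1 ≤ k
    · rw [if_pos hc, Finset.disjoint_left]
      intro l h1 h2
      have hD := getLast_mem_image h2
      rcases Finset.mem_union.mp h1 with h1 | h1
      · rw [getLast_mem_image h1] at hD
        exact absurd (Option.some_injective _ hD) (by decide)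
      · rw [getLast_mem_image h1] at hD
        exact absurd (Option.some_injective _ hD) (by decide)
    · rw [if_neg hc]
      exact Finset.disjoint_empty_right _
  have hinj : ∀ (x : Pt) (T : Finset (List Pt)), ∀ u ∈ T, ∀ v ∈ T,
      u ++ [x] = v ++ [x] → u = v := fun x T u _ v _ h =>
    List.append_left_injective [x] h
  rw [GF_eq_sum, GF_eq_sum, GF_eq_sum, hsplit, Finset.sum_union hdisj2,
    Finset.sum_union hdisj1, Finset.sum_image (hinj SH TH), Finset.sum_image (hinj SV TV)]
  have hH : ∑ l ∈ TH, pathW n a b (a, b) (l ++ [SH])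
      = (∑ l ∈ TH, pathW n a b (a, b) l) * wt n (c - 1 + d - a - b) := by
    rw [Finset.sum_mul]
    refine Finset.sum_congr rfl fun l hl => ?_
    have hp : Pred a b k (c-1) d l := (hTfin _ _ _ _).mp hl
    rw [pathW_append, hp.2.1, stepW_H]
  have hV : ∑ l ∈ TV, pathW n a b (a, b) (l ++ [SV])
      = ∑ l ∈ TV, pathW n a b (a, b) l := by
    refine Finset.sum_congr rfl fun l hl => ?_
    have hp : Pred a b k c (d-1) l := (hTfin _ _ _ _).mp hl
    rw [pathW_append, hp.2.1, stepW_V, mul_one]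
  have hD : (∑ l ∈ (if c = d ∧ 1 ≤ k then TD.image (· ++ [SD]) else ∅),
        pathW n a b (a, b) l)
      = (if c = d ∧ 1 ≤ k then GF n a b (k-1) (c-1) (d-1) else 0) := by
    by_cases hc : c = d ∧ 1 ≤ k
    · rw [if_pos hc, if_pos hc, Finset.sum_image (hinj SD TD), GF_eq_sum]
      refine Finset.sum_congr rfl fun l hl => ?_
      have hp : Pred a b (k-1) (c-1) (d-1) l := (hTfin _ _ _ _).mp hl
      rw [pathW_append, hp.2.1, stepW_D, mul_one]
    · rw [if_neg hc, if_neg hc, Finset.sum_empty]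
  rw [hH, hV, hD, GF_eq_sum]


/-! ### Elementary symmetric polynomials in the first `2m` of the `2n` variables -/

noncomputable def gexp (n : ℕ) (j : Fin (2 * n)) : Fin n →₀ ℤ :=
  Finsupp.single ⟨(j : ℕ) / 2, by have := j.isLt; omega⟩ (if (j : ℕ) % 2 = 0 then 1 else -1)

lemma xpmVar_eq (n : ℕ) (j : Fin (2 * n)) :
    xpmVar n j = AddMonoidAlgebra.single (gexp n j) 1 := rfl

def idx (n m : ℕ) : Finset (Fin (2 * n)) :=
  Finset.univ.filter (fun j => (j : ℕ) < 2 * m)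

noncomputable def E (n m : ℕ) (r : ℤ) : Laur n :=
  if 0 ≤ r then ∑ s ∈ Finset.powersetCard r.toNat (idx n m), ∏ i ∈ s, xpmVar n i else 0

lemma single_congr {n : ℕ} {u v : ℕ} (hu : u < n) (hv : v < n) (e e' : ℤ) (h : u = v)
    (he : e = e') : Finsupp.single (⟨u, hu⟩ : Fin n) e = Finsupp.single ⟨v, hv⟩ e' := by
  subst h; subst he; rfl

lemma prod_xpmVar {n : ℕ} (s : Finset (Fin (2 * n))) :
    ∏ i ∈ s, xpmVar n i = AddMonoidAlgebra.single (∑ i ∈ s, gexp n i) 1 := by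
  classical
  induction s using Finset.induction_on with
  | empty => simp [AddMonoidAlgebra.one_def]
  | insert x t hx ih =>
      rw [Finset.prod_insert hx, Finset.sum_insert hx, ih, xpmVar_eq,
        AddMonoidAlgebra.single_mul_single, one_mul]

lemma card_idx {n m : ℕ} (h : m ≤ n) : (idx n m).card = 2 * m := by
  have he : idx n m = Finset.attachFin (Finset.range (2 * m))
      (fun x hx => by simp only [Finset.mem_range] at hx; omega) := by
    ext j
    simp [idx, Finset.mem_attachFin]
  rw [he, Finset.card_attachFin, Finset.card_range]

lemma E_neg {n m : ℕ} {r : ℤ} (h : r < 0) : E n m r = 0 := by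
  rw [E, if_neg (by omega)]

lemma E_big {n m : ℕ} (h : m ≤ n) {r : ℤ} (hr : 2 * (m : ℤ) < r) : E n m r = 0 := by
  rw [E, if_pos (by omega), Finset.powersetCard_eq_empty.mpr, Finset.sum_empty]
  rw [card_idx h]
  omega

lemma E_zero_r (n m : ℕ) : E n m 0 = 1 := by
  rw [E, if_pos le_rfl]
  simp [Finset.powersetCard_zero]

lemma E_mzero (n : ℕ) (r : ℤ) : E n 0 r = if r = 0 then 1 else 0 := by
  have hidx : idx n 0 = ∅ := by ext j; simp [idx]
  rcases lt_trichotomy r 0 with h | h | h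
  · rw [E_neg h, if_neg (by omega)]
  · subst h; rw [E_zero_r, if_pos rfl]
  · rw [E, if_pos (by omega), if_neg (by omega), hidx]
    rw [Finset.powersetCard_eq_empty.mpr (by simp; omega), Finset.sum_empty]

lemma esymm_split {n : ℕ} {α : Type*} [DecidableEq α] (f : α → Laur n) (x : α)
    (s : Finset α) (hx : x ∉ s) (r : ℕ) :
    ∑ A ∈ Finset.powersetCard (r + 1) (insert x s), ∏ i ∈ A, f i
      = (∑ A ∈ Finset.powersetCard (r + 1) s, ∏ i ∈ A, f i)
        + f x * ∑ A ∈ Finset.powersetCard r s, ∏ i ∈ A, f i := by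
  rw [Finset.powersetCard_succ_insert hx, Finset.sum_union, Finset.sum_image, Finset.mul_sum]
  · congr 1
    refine Finset.sum_congr rfl fun A hA => ?_
    have hxA : x ∉ A := fun hmem =>
      hx ((Finset.mem_powersetCard.mp hA).1 hmem)
    rw [Finset.prod_insert hxA]
  · intro A hA B hB hAB
    have hxA : x ∉ A := fun hmem => hx ((Finset.mem_powersetCard.mp hA).1 hmem)
    have hxB : x ∉ B := fun hmem => hx ((Finset.mem_powersetCard.mp hB).1 hmem)
    rw [← Finset.erase_insert hxA, ← Finset.erase_insert hxB, hAB]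
  · rw [Finset.disjoint_left]
    intro A hA hA'
    obtain ⟨B, -, rfl⟩ := Finset.mem_image.mp hA'
    exact hx ((Finset.mem_powersetCard.mp hA).1 (Finset.mem_insert_self x B))

lemma idx_succ {n m : ℕ} (h : m + 1 ≤ n) :
    idx n (m + 1) = insert (⟨2 * m + 1, by omega⟩ : Fin (2 * n))
      (insert (⟨2 * m, by omega⟩ : Fin (2 * n)) (idx n m)) := by
  ext j
  simp only [idx, Finset.mem_insert, Finset.mem_filter, Finset.mem_univ, true_and,
    Fin.ext_iff]
  omega

lemma not_mem_idx0 {n m : ℕ} (h : m + 1 ≤ n) :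
    (⟨2 * m, by omega⟩ : Fin (2 * n)) ∉ idx n m := by
  simp [idx]

lemma not_mem_idx1 {n m : ℕ} (h : m + 1 ≤ n) :
    (⟨2 * m + 1, by omega⟩ : Fin (2 * n)) ∉ insert (⟨2 * m, by omega⟩ : Fin (2 * n)) (idx n m) := by
  simp [idx, Fin.ext_iff]

lemma xpm0_mul_xpm1 {n m : ℕ} (h : m + 1 ≤ n) :
    xpmVar n ⟨2 * m, by omega⟩ * xpmVar n ⟨2 * m + 1, by omega⟩ = 1 := by
  rw [xpmVar_eq, xpmVar_eq, AddMonoidAlgebra.single_mul_single, mul_one]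
  have hm : m < n := by omega
  have ha : gexp n (⟨2 * m, by omega⟩ : Fin (2 * n)) = Finsupp.single (⟨m, hm⟩ : Fin n) 1 := by
    rw [gexp]
    apply single_congr
    · show 2 * m / 2 = m; omega
    · show (if 2 * m % 2 = 0 then (1:ℤ) else -1) = 1
      rw [if_pos (by omega)]
  have hb : gexp n (⟨2 * m + 1, by omega⟩ : Fin (2 * n))
      = Finsupp.single (⟨m, hm⟩ : Fin n) (-1) := by
    rw [gexp]
    apply single_congr
    · show (2 * m + 1) / 2 = m; omega
    · show (if (2 * m + 1) % 2 = 0 then (1:ℤ) else -1) = -1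
      rw [if_neg (by omega)]
  have hz : gexp n (⟨2 * m, by omega⟩ : Fin (2 * n)) + gexp n ⟨2 * m + 1, by omega⟩ = 0 := by
    rw [ha, hb, ← Finsupp.single_add]
    norm_num
  rw [hz, AddMonoidAlgebra.one_def]

lemma E_rec {n m : ℕ} (h : m + 1 ≤ n) (r : ℤ) :
    E n (m + 1) r = E n m r
      + (xpmVar n ⟨2 * m, by omega⟩ + xpmVar n ⟨2 * m + 1, by omega⟩) * E n m (r - 1)
      + E n m (r - 2) := by
  classical
  set x0 : Fin (2 * n) := ⟨2 * m, by omega⟩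
  set x1 : Fin (2 * n) := ⟨2 * m + 1, by omega⟩
  have hx0 : x0 ∉ idx n m := not_mem_idx0 h
  have hx1 : x1 ∉ insert x0 (idx n m) := not_mem_idx1 h
  rcases lt_trichotomy r 0 with hr | hr | hr
  · rw [E_neg hr, E_neg hr, E_neg (by omega), E_neg (by omega)]
    ring
  · subst hr
    rw [E_zero_r, E_zero_r, E_neg (by omega), E_neg (by omega)]
    ring
  rcases eq_or_lt_of_le (by omega : (1:ℤ) ≤ r) with hr1 | hr1
  · -- r = 1
    rw [← hr1]
    have ht : (1 : ℤ).toNat = 0 + 1 := rfl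
    rw [E, if_pos (by omega), ht, idx_succ h, esymm_split _ x1 _ hx1, esymm_split _ x0 _ hx0]
    rw [Finset.powersetCard_zero]
    have hz : ∑ A ∈ Finset.powersetCard 0 (insert x0 (idx n m)), ∏ i ∈ A, xpmVar n i
        = 1 := by rw [Finset.powersetCard_zero]; simp
    rw [hz]
    have e1 : E n m 1 = ∑ A ∈ Finset.powersetCard 1 (idx n m), ∏ i ∈ A, xpmVar n i := by
      rw [E, if_pos (by omega)]; rfl
    have e0 : E n m (1 - 1) = 1 := by norm_num [E_zero_r]
    have em : E n m (1 - 2) = 0 := E_neg (by omega)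
    rw [e0, em]
    simp only [Finset.powersetCard_zero, Finset.sum_singleton, Finset.prod_empty, mul_one]
    rw [← e1]
    ring
  · -- r ≥ 2
    obtain ⟨t, rfl⟩ : ∃ t : ℕ, r = (t : ℤ) + 2 := ⟨(r - 2).toNat, by omega⟩
    have h2 : ((t : ℤ) + 2).toNat = (t + 1) + 1 := by omega
    rw [E, if_pos (by omega), h2, idx_succ h, esymm_split _ x1 _ hx1, esymm_split _ x0 _ hx0,
      esymm_split _ x0 _ hx0]
    have e2 : E n m ((t : ℤ) + 2) = ∑ A ∈ Finset.powersetCard (t + 1 + 1) (idx n m),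
        ∏ i ∈ A, xpmVar n i := by
      rw [E, if_pos (by omega), show ((t : ℤ) + 2).toNat = t + 1 + 1 by omega]
    have e1 : E n m ((t : ℤ) + 2 - 1) = ∑ A ∈ Finset.powersetCard (t + 1) (idx n m),
        ∏ i ∈ A, xpmVar n i := by
      rw [E, if_pos (by omega), show ((t : ℤ) + 2 - 1).toNat = t + 1 by omega]
    have e0 : E n m ((t : ℤ) + 2 - 2) = ∑ A ∈ Finset.powersetCard t (idx n m),
        ∏ i ∈ A, xpmVar n i := by
      rw [E, if_pos (by omega), show ((t : ℤ) + 2 - 2).toNat = t by omega]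
    rw [e2, e1, e0]
    have hprod : xpmVar n x1 * (xpmVar n x0
        * ∑ A ∈ Finset.powersetCard t (idx n m), ∏ i ∈ A, xpmVar n i)
        = ∑ A ∈ Finset.powersetCard t (idx n m), ∏ i ∈ A, xpmVar n i := by
      rw [← mul_assoc, mul_comm (xpmVar n x1) (xpmVar n x0), xpm0_mul_xpm1 h, one_mul]
    rw [mul_add, hprod]
    ring


def tauF (n : ℕ) (j : Fin (2 * n)) : Fin (2 * n) :=
  ⟨if (j : ℕ) % 2 = 0 then (j : ℕ) + 1 else (j : ℕ) - 1, by
    have := j.isLt; split <;> omega⟩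

lemma tauF_even {n : ℕ} {j : Fin (2 * n)} (h : (j : ℕ) % 2 = 0) :
    ((tauF n j : Fin (2 * n)) : ℕ) = (j : ℕ) + 1 := by
  simp only [tauF]
  rw [if_pos h]

lemma tauF_odd {n : ℕ} {j : Fin (2 * n)} (h : (j : ℕ) % 2 = 1) :
    ((tauF n j : Fin (2 * n)) : ℕ) = (j : ℕ) - 1 := by
  simp only [tauF]
  rw [if_neg (by omega)]

lemma tauF_invol (n : ℕ) (j : Fin (2 * n)) : tauF n (tauF n j) = j := by
  apply Fin.ext
  rcases Nat.even_or_odd (j : ℕ) with h | h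
  · have h0 : (j : ℕ) % 2 = 0 := Nat.even_iff.mp h
    have h1 := tauF_even h0
    rw [tauF_odd (by omega), h1]
    omega
  · have h0 : (j : ℕ) % 2 = 1 := Nat.odd_iff.mp h
    have h1 := tauF_odd h0
    rw [tauF_even (by omega), h1]
    omega

lemma tauF_inj (n : ℕ) : Function.Injective (tauF n) :=
  Function.LeftInverse.injective (tauF_invol n)

lemma gexp_tauF (n : ℕ) (j : Fin (2 * n)) : gexp n (tauF n j) = - gexp n j := by
  rw [gexp, gexp, ← Finsupp.single_neg]
  rcases Nat.even_or_odd (j : ℕ) with h | h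
  · have h0 : (j : ℕ) % 2 = 0 := Nat.even_iff.mp h
    have h1 := tauF_even h0
    apply single_congr
    · omega
    · rw [if_neg (by omega), if_pos h0]
  · have h0 : (j : ℕ) % 2 = 1 := Nat.odd_iff.mp h
    have h1 := tauF_odd h0
    apply single_congr
    · omega
    · rw [if_pos (by omega), if_neg (by omega)]
      norm_num

lemma tauF_mem_idx {n m : ℕ} {j : Fin (2 * n)} : tauF n j ∈ idx n m ↔ j ∈ idx n m := by
  simp only [idx, Finset.mem_filter, Finset.mem_univ, true_and, tauF]
  split <;> omega

lemma image_tauF_idx {n m : ℕ} : (idx n m).image (tauF n) = idx n m := by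
  ext j
  constructor
  · intro hj
    obtain ⟨u, hu, rfl⟩ := Finset.mem_image.mp hj
    exact tauF_mem_idx.mpr hu
  · intro hj
    exact Finset.mem_image.mpr ⟨tauF n j, tauF_mem_idx.mpr hj, tauF_invol n j⟩

lemma sum_gexp {n m : ℕ} (h : m ≤ n) : ∑ j ∈ idx n m, gexp n j = 0 := by
  induction m with
  | zero =>
      have : idx n 0 = ∅ := by ext j; simp [idx]
      rw [this, Finset.sum_empty]
  | succ m ih =>
      rw [idx_succ h, Finset.sum_insert (not_mem_idx1 h), Finset.sum_insert (not_mem_idx0 h),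
        ih (by omega)]
      have hm : m < n := by omega
      have ha : gexp n (⟨2 * m, by omega⟩ : Fin (2 * n)) = Finsupp.single (⟨m, hm⟩ : Fin n) 1 := by
        rw [gexp]
        apply single_congr
        · show 2 * m / 2 = m; omega
        · show (if 2 * m % 2 = 0 then (1:ℤ) else -1) = 1
          rw [if_pos (by omega)]
      have hb : gexp n (⟨2 * m + 1, by omega⟩ : Fin (2 * n))
          = Finsupp.single (⟨m, hm⟩ : Fin n) (-1) := by
        rw [gexp]
        apply single_congr
        · show (2 * m + 1) / 2 = m; omega
        · show (if (2 * m + 1) % 2 = 0 then (1:ℤ) else -1) = -1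
          rw [if_neg (by omega)]
      rw [ha, hb, add_zero, ← Finsupp.single_add]
      norm_num

lemma phi_eq {n m : ℕ} (A : Finset (Fin (2 * n))) :
    ((idx n m) \ A).image (tauF n) = idx n m \ A.image (tauF n) := by
  rw [Finset.image_sdiff _ _ (tauF_inj n), image_tauF_idx]

lemma phi_phi {n m : ℕ} (A : Finset (Fin (2 * n))) (hA : A ⊆ idx n m) :
    ((idx n m \ ((idx n m \ A).image (tauF n))).image (tauF n)) = A := by
  have h1 : (((idx n m) \ A).image (tauF n)).image (tauF n) = idx n m \ A := by
    rw [Finset.image_image]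
    have he : tauF n ∘ tauF n = id := funext (tauF_invol n)
    rw [he, Finset.image_id]
  rw [phi_eq, h1, Finset.sdiff_sdiff_self_left, Finset.inter_eq_right.mpr hA]

lemma phi_mem {n m : ℕ} (h : m ≤ n) {u v : ℕ} (huv : u + v = 2 * m)
    {A : Finset (Fin (2 * n))} (hA : A ∈ Finset.powersetCard u (idx n m)) :
    ((idx n m) \ A).image (tauF n) ∈ Finset.powersetCard v (idx n m) := by
  obtain ⟨hsub, hcardA⟩ := Finset.mem_powersetCard.mp hA
  refine Finset.mem_powersetCard.mpr ⟨?_, ?_⟩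
  · intro j hj
    obtain ⟨u', hu, rfl⟩ := Finset.mem_image.mp hj
    exact tauF_mem_idx.mpr (Finset.mem_sdiff.mp hu).1
  · rw [Finset.card_image_of_injective _ (tauF_inj n), Finset.card_sdiff_of_subset hsub,
      card_idx h, hcardA]
    omega

lemma sum_gexp_phi {n m : ℕ} (h : m ≤ n) {A : Finset (Fin (2 * n))} (hA : A ⊆ idx n m) :
    ∑ j ∈ ((idx n m) \ A).image (tauF n), gexp n j = ∑ j ∈ A, gexp n j := by
  rw [Finset.sum_image (fun x _ y _ hxy => tauF_inj n hxy)]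
  have h1 : ∑ j ∈ idx n m \ A, gexp n (tauF n j) = ∑ j ∈ idx n m \ A, - gexp n j :=
    Finset.sum_congr rfl fun j _ => gexp_tauF n j
  rw [h1, Finset.sum_neg_distrib, Finset.sum_sdiff_eq_sub hA, sum_gexp h]
  simp

lemma E_symm {n m : ℕ} (h : m ≤ n) (s : ℤ) : E n m s = E n m (2 * (m : ℤ) - s) := by
  classical
  rcases lt_trichotomy s 0 with hs | hs | hs
  · rw [E_neg hs, E_big h (by omega)]
  · subst hs
    rw [E_zero_r]
    rcases Nat.eq_zero_or_pos m with rfl | hm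
    · norm_num [E_zero_r]
    · rw [E, if_pos (by omega), show ((2 * (m:ℤ) - 0)).toNat = 2 * m by omega]
      have hp : Finset.powersetCard (2 * m) (idx n m) = {idx n m} := by
        rw [← card_idx h]
        exact Finset.powersetCard_self _
      rw [hp, Finset.sum_singleton, prod_xpmVar, sum_gexp h, AddMonoidAlgebra.one_def]
  rcases le_or_gt s (2 * (m : ℤ)) with hs2 | hs2
  swap
  · rw [E_big h hs2, E_neg (by omega)]
  rw [E, if_pos (by omega), E, if_pos (by omega)]
  refine Finset.sum_nbij' (fun A => ((idx n m) \ A).image (tauF n))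
    (fun A => ((idx n m) \ A).image (tauF n))
    (fun A hA => phi_mem h (by omega) hA) (fun A hA => phi_mem h (by omega) hA)
    (fun A hA => phi_phi A (Finset.mem_powersetCard.mp hA).1)
    (fun A hA => phi_phi A (Finset.mem_powersetCard.mp hA).1)
    (fun A hA => ?_)
  rw [prod_xpmVar, prod_xpmVar, sum_gexp_phi h (Finset.mem_powersetCard.mp hA).1]


lemma wt_odd {n m : ℕ} (h : m + 1 ≤ n) :
    wt n (2 * (m : ℤ) + 1) = xpmVar n ⟨2 * m, by omega⟩ := by
  rw [wt, if_neg (by omega), show (2 * (m:ℤ) + 1 + 1) / 2 - 1 = (m : ℤ) by omega, Xpm,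
    dif_pos ⟨by omega, by omega⟩, xpmVar]
  congr 1
  apply single_congr
  · show (m : ℤ).toNat = 2 * m / 2
    omega
  · rw [if_pos (show (2 * m) % 2 = 0 by omega)]

lemma wt_even {n m : ℕ} (h : m + 1 ≤ n) :
    wt n (2 * (m : ℤ)) = xpmVar n ⟨2 * m + 1, by omega⟩ := by
  rw [wt, if_pos (by omega), show (2 * (m:ℤ)) / 2 = (m : ℤ) by omega, Xpm,
    dif_pos ⟨by omega, by omega⟩, xpmVar]
  congr 1
  apply single_congr
  · show (m : ℤ).toNat = (2 * m + 1) / 2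
    omega
  · rw [if_neg (show ¬((2 * m + 1) % 2 = 0) by omega)]

/-- The two-level transfer recursion. -/
lemma GF_rec (n : ℕ) (a b : ℤ) (m k : ℕ) (c d : ℤ) (hab : (a + b) % 2 = 0)
    (hm : m + 1 ≤ n) (hd : c + d = a + b + 2 * (m : ℤ) + 2) (hc : c ≤ d) :
    GF n a b k c d
      = GF n a b k (c-2) d
        + (xpmVar n ⟨2 * m, by omega⟩ + xpmVar n ⟨2 * m + 1, by omega⟩)
            * GF n a b k (c-1) (d-1)
        + GF n a b k c (d-2)
        + (if c = d ∧ 1 ≤ k then GF n a b (k-1) (c-1) (d-1) else 0) := by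
  have P1 := peel n a b k c d (by omega) (by omega)
  have P2 := peel n a b k (c-1) d (by omega) (by omega)
  have P3 := peel n a b k c (d-1) (by omega) (by omega)
  rw [show c - 1 + d - a - b = 2 * (m:ℤ) + 1 by omega, wt_odd hm] at P1
  rw [show c - 1 - 1 + d - a - b = 2 * (m:ℤ) by omega, wt_even hm,
    if_neg (by rintro ⟨h', -⟩; omega)] at P2
  rw [show c - 1 + (d - 1) - a - b = 2 * (m:ℤ) by omega, wt_even hm,
    if_neg (by rintro ⟨h', -⟩; omega)] at P3
  rw [P1, P2, P3]
  have hmul := xpm0_mul_xpm1 (n := n) (m := m) hm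
  set y0 := xpmVar n (⟨2 * m, by omega⟩ : Fin (2 * n))
  set y1 := xpmVar n (⟨2 * m + 1, by omega⟩ : Fin (2 * n))
  calc (GF n a b k (c - 1 - 1) d * y1 + GF n a b k (c - 1) (d - 1) + 0) * y0
        + (GF n a b k (c - 1) (d - 1) * y1 + GF n a b k c (d - 1 - 1) + 0)
        + (if c = d ∧ 1 ≤ k then GF n a b (k - 1) (c - 1) (d - 1) else 0)
      = GF n a b k (c - 1 - 1) d * (y1 * y0) + GF n a b k (c - 1) (d - 1) * (y0 + y1)
        + GF n a b k c (d - 1 - 1)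
        + (if c = d ∧ 1 ≤ k then GF n a b (k - 1) (c - 1) (d - 1) else 0) := by ring
    _ = _ := by
        rw [mul_comm y1 y0, hmul, mul_one,
          show c - 1 - 1 = c - 2 by ring, show d - 1 - 1 = d - 2 by ring]
        ring


lemma E_top (n : ℕ) (r : ℤ) : E n n r = epm n r := by
  have hu : idx n n = Finset.univ := by
    ext j
    simp only [idx, Finset.mem_filter, Finset.mem_univ, true_and, iff_true]
    exact j.isLt
  rw [E, epm, hu]

lemma main (n : ℕ) (a b : ℤ) (hab : (a + b) % 2 = 0) (h1 : a - 1 < b) :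
    ∀ m : ℕ, m ≤ n → ∀ (k : ℕ) (c : ℤ), 2 * c ≤ a + b + 2 * (m : ℤ) →
      GF n a b k c (a + b + 2 * (m : ℤ) - c)
        = if k = 0 then E n m (c - a) - E n m (c - b - 2)
          else E n m (c - b - (k : ℤ)) - E n m (c - b - (k : ℤ) - 2) := by
  intro m
  induction m with
  | zero =>
      intro _ k c hc
      have hc' : 2 * c ≤ a + b := by push_cast at hc; omega
      by_cases hca : k = 0 ∧ c = a
      · obtain ⟨rfl, hca2⟩ := hca
        rw [GF_eq_sum]
        have hset : (finite_pred a b 0 c (a + b + 2 * ((0:ℕ) : ℤ) - c)).toFinset = {[]} := by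
          ext l
          rw [Set.Finite.mem_toFinset, Finset.mem_singleton]
          constructor
          · intro hp
            obtain ⟨hsteps, hsum, -, -, -⟩ := hp
            have hlen := length_le_rise l hsteps
            obtain ⟨e1, e2⟩ := sum_fst_snd hsum
            have hl0 : l.length = 0 := by push_cast at hlen e2; omega
            exact List.length_eq_zero_iff.mp hl0
          · rintro rfl
            refine ⟨by simp, ?_, ?_, trivial, by simp⟩
            · apply Prod.ext <;> simp <;> push_cast <;> omega
            · intro p hp
              simp only [pathPoints, List.mem_singleton] at hp
              subst hp
              simp only []
              omega
        rw [hset, Finset.sum_singleton]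
        have h1' : pathW n a b (a, b) [] = 1 := rfl
        rw [h1', if_pos rfl, E_mzero, E_mzero, if_pos (by omega), if_neg (by omega)]
        norm_num
      · rw [GF_eq_sum]
        have hset : (finite_pred a b k c (a + b + 2 * ((0:ℕ) : ℤ) - c)).toFinset = ∅ := by
          ext l
          rw [Set.Finite.mem_toFinset]
          simp only [Finset.notMem_empty, iff_false]
          intro hp
          obtain ⟨hsteps, hsum, -, -, hcount⟩ := hp
          have hlen := length_le_rise l hsteps
          obtain ⟨e1, e2⟩ := sum_fst_snd hsum
          have hl0 : l.length = 0 := by push_cast at hlen; omega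
          have hnil : l = [] := List.length_eq_zero_iff.mp hl0
          subst hnil
          simp only [List.count_nil] at hcount
          simp only [List.sum_nil, Prod.fst_zero, Prod.snd_zero] at e1 e2
          push_cast at e2
          exact hca ⟨hcount.symm, by omega⟩
        rw [hset, Finset.sum_empty]
        by_cases hk : k = 0
        · subst hk
          have hcnea : c ≠ a := fun h => hca ⟨rfl, h⟩
          rw [if_pos rfl, E_mzero, E_mzero, if_neg (by omega), if_neg (by omega)]
          norm_num
        · have hk1 : 1 ≤ k := Nat.one_le_iff_ne_zero.mpr hk
          rw [if_neg hk, E_neg (by omega), E_neg (by omega)]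
          norm_num
  | succ m ih =>
      intro hm k c hc
      have hmn : m ≤ n := by omega
      have hm1 : m + 1 ≤ n := hm
      have hd2 : ((m + 1 : ℕ) : ℤ) = (m : ℤ) + 1 := by push_cast; ring
      rw [hd2] at hc ⊢
      set d : ℤ := a + b + 2 * ((m:ℤ) + 1) - c with hddef
      have hd : c + d = a + b + 2 * (m:ℤ) + 2 := by rw [hddef]; ring
      have hcled : c ≤ d := by omega
      rw [GF_rec n a b m k c d hab hm1 hd hcled]
      have e2 : a + b + 2 * (m:ℤ) - (c - 2) = d := by omega
      have e1 : a + b + 2 * (m:ℤ) - (c - 1) = d - 1 := by omega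
      have e0 : a + b + 2 * (m:ℤ) - c = d - 2 := by omega
      rcases k with _ | k'
      · -- k = 0
        rw [if_neg (by rintro ⟨-, h'⟩; exact absurd h' (by norm_num))]
        have I2 := ih hmn 0 (c-2) (by omega)
        rw [e2, if_pos rfl] at I2
        have I1 := ih hmn 0 (c-1) (by omega)
        rw [e1, if_pos rfl] at I1
        rw [I2, I1, if_pos rfl, E_rec hm1 (c - a), E_rec hm1 (c - b - 2)]
        by_cases hceq : c = d
        · have I0 : GF n a b 0 c (d - 2) = 0 := GF_zero_of_below (by omega)
          rw [I0]
          have S := E_symm hmn (c - a)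
          rw [show 2 * (m:ℤ) - (c - a) = c - b - 2 by omega] at S
          rw [S, show c - 2 - a = c - a - 2 by ring, show c - 2 - b - 2 = c - b - 2 - 2 by ring,
            show c - 1 - a = c - a - 1 by ring, show c - 1 - b - 2 = c - b - 2 - 1 by ring]
          ring
        · have I0 := ih hmn 0 c (by omega)
          rw [e0, if_pos rfl] at I0
          rw [I0, show c - 2 - a = c - a - 2 by ring, show c - 2 - b - 2 = c - b - 2 - 2 by ring,
            show c - 1 - a = c - a - 1 by ring, show c - 1 - b - 2 = c - b - 2 - 1 by ring]
          ring
      · -- k = k' + 1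
        have hksucc : (k' + 1 : ℕ) ≠ 0 := Nat.succ_ne_zero k'
        have I2 := ih hmn (k'+1) (c-2) (by omega)
        rw [e2, if_neg hksucc] at I2
        have I1 := ih hmn (k'+1) (c-1) (by omega)
        rw [e1, if_neg hksucc] at I1
        rw [I2, I1, if_neg hksucc, E_rec hm1 (c - b - ((k' + 1 : ℕ) : ℤ)),
          E_rec hm1 (c - b - ((k' + 1 : ℕ) : ℤ) - 2)]
        by_cases hceq : c = d
        · have I0 : GF n a b (k'+1) c (d - 2) = 0 := GF_zero_of_below (by omega)
          rw [I0, if_pos ⟨hceq, Nat.one_le_iff_ne_zero.mpr hksucc⟩, Nat.add_sub_cancel]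
          have ID := ih hmn k' (c-1) (by omega)
          rw [e1] at ID
          rcases Nat.eq_zero_or_pos k' with rfl | hk'
          · rw [if_pos rfl] at ID
            rw [ID]
            have S := E_symm hmn (c - 1 - a)
            rw [show 2 * (m:ℤ) - (c - 1 - a) = c - b - ((0 + 1 : ℕ) : ℤ) by push_cast; omega] at S
            rw [S, show c - 1 - b - 2 = c - b - ((0 + 1 : ℕ) : ℤ) - 2 by push_cast; ring,
              show c - 2 - b - ((0 + 1 : ℕ) : ℤ) - 2 = c - b - ((0 + 1 : ℕ) : ℤ) - 2 - 2 by ring,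
              show c - 2 - b - ((0 + 1 : ℕ) : ℤ) = c - b - ((0 + 1 : ℕ) : ℤ) - 2 by ring,
              show c - 1 - b - ((0 + 1 : ℕ) : ℤ) - 2 = c - b - ((0 + 1 : ℕ) : ℤ) - 2 - 1 by ring,
              show c - 1 - b - ((0 + 1 : ℕ) : ℤ) = c - b - ((0 + 1 : ℕ) : ℤ) - 1 by ring]
            ring
          · rw [if_neg (by omega)] at ID
            rw [ID,
              show c - 1 - b - (k' : ℤ) - 2 = c - b - ((k' + 1 : ℕ) : ℤ) - 2 by push_cast; ring,
              show c - 1 - b - (k' : ℤ) = c - b - ((k' + 1 : ℕ) : ℤ) by push_cast; ring,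
              show c - 2 - b - ((k' + 1 : ℕ) : ℤ) - 2 = c - b - ((k' + 1 : ℕ) : ℤ) - 2 - 2 by ring,
              show c - 2 - b - ((k' + 1 : ℕ) : ℤ) = c - b - ((k' + 1 : ℕ) : ℤ) - 2 by ring,
              show c - 1 - b - ((k' + 1 : ℕ) : ℤ) - 2 = c - b - ((k' + 1 : ℕ) : ℤ) - 2 - 1 by ring,
              show c - 1 - b - ((k' + 1 : ℕ) : ℤ) = c - b - ((k' + 1 : ℕ) : ℤ) - 1 by ring]
            ring
        · have I0 := ih hmn (k'+1) c (by omega)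
          rw [e0, if_neg hksucc] at I0
          rw [I0, if_neg (fun h => hceq h.1),
            show c - 2 - b - ((k' + 1 : ℕ) : ℤ) - 2 = c - b - ((k' + 1 : ℕ) : ℤ) - 2 - 2 by ring,
            show c - 2 - b - ((k' + 1 : ℕ) : ℤ) = c - b - ((k' + 1 : ℕ) : ℤ) - 2 by ring,
            show c - 1 - b - ((k' + 1 : ℕ) : ℤ) - 2 = c - b - ((k' + 1 : ℕ) : ℤ) - 2 - 1 by ring,
            show c - 1 - b - ((k' + 1 : ℕ) : ℤ) = c - b - ((k' + 1 : ℕ) : ℤ) - 1 by ring]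
          ring

end Stmt5

/-- **(Odd orthogonal paths with `k` diagonal steps.)** For `k ≥ 1`, `a + b` even,
`(a,b)` and `(c, 2n+a+b-c)` strictly above `y = x - 1`, the generating function of
lattice paths from `(a,b)` to `(c, 2n+a+b-c)` with steps `(1,0), (0,1), (1,1)`,
diagonal steps only starting on `y = x` (weight `1`), staying weakly above
`y = x - 1`, with exactly `k` diagonal steps, is
`e_{c-b-k}(x^±) - e_{c-b-k-2}(x^±)`. -/
theorem stmt5 (n k : ℕ) (hk : 0 < k) (a b c : ℤ) (hab : (a + b) % 2 = 0)
    (h1 : a - 1 < b) (h2 : c - 1 < 2 * (n : ℤ) + a + b - c) :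
    (∑ᶠ (l : List Pt) (_ :
        (∀ s ∈ l, s = ((1:ℤ),(0:ℤ)) ∨ s = ((0:ℤ),(1:ℤ)) ∨ s = ((1:ℤ),(1:ℤ))) ∧
        (a, b) + l.sum = (c, 2 * (n : ℤ) + a + b - c) ∧
        (∀ p ∈ pathPoints (a, b) l, p.1 - 1 ≤ p.2) ∧
        DiagOK (a, b) l ∧
        l.count ((1:ℤ),(1:ℤ)) = k),
      pathW n a b (a, b) l)
      = epm n (c - b - k) - epm n (c - b - (k : ℤ) - 2) := by

  have hc : 2 * c ≤ a + b + 2 * (n : ℤ) := by omega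
  have hmain := Stmt5.main n a b hab h1 n le_rfl k c hc
  rw [if_neg (by omega)] at hmain
  have hd : a + b + 2 * (n : ℤ) - c = 2 * (n : ℤ) + a + b - c := by ring
  rw [hd] at hmain
  have hlhs : (∑ᶠ (l : List Pt) (_ :
        (∀ s ∈ l, s = ((1:ℤ),(0:ℤ)) ∨ s = ((0:ℤ),(1:ℤ)) ∨ s = ((1:ℤ),(1:ℤ))) ∧
        (a, b) + l.sum = (c, 2 * (n : ℤ) + a + b - c) ∧
        (∀ p ∈ pathPoints (a, b) l, p.1 - 1 ≤ p.2) ∧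
        DiagOK (a, b) l ∧
        l.count ((1:ℤ),(1:ℤ)) = k),
      pathW n a b (a, b) l) = Stmt5.GF n a b k c (2 * (n : ℤ) + a + b - c) := rfl
  rw [hlhs, hmain, Stmt5.E_top, Stmt5.E_top]
end

section
/- Let a, b, c ∈ Z and n ∈ N with a+b even and the points (a,b) and (c, 2n+a+b-c) strictly above y = x−1. The generating function of lattice paths from (a,b) to (c, 2n+a+b-c) with step set {(1,0),(0,1),(1,1)}, where diagonal steps are only allowed starting on the line y = x (weight 1), vertical steps have weight 1, horizontal steps carry the modified e-labelling, and paths do not cross y = x−1, equals e_{c-a}(x^±) + e_{c-b-1}(x^±), where x^± = (x_1, x_1^{-1}, ..., x_n, x_n^{-1}). -/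
/-! ### Algebraic layer -/

/-- exponent vector of the `i`-th step variable -/
noncomputable def wE (n : ℕ) (i : ℕ) : Fin n →₀ ℤ :=
  if h : i / 2 < n then Finsupp.single ⟨i / 2, h⟩ (if i % 2 = 0 then -1 else 1) else 0

/-- the `i`-th step variable (weight of a horizontal step from level `i`). -/
noncomputable def zz (n : ℕ) (i : ℕ) : Laur n := AddMonoidAlgebra.single (wE n i) 1

lemma prod_single {n : ℕ} {α : Type*} (s : Finset α) (g : α → (Fin n →₀ ℤ)) :
    (∏ i ∈ s, (AddMonoidAlgebra.single (g i) (1:ℤ) : Laur n))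
      = AddMonoidAlgebra.single (∑ i ∈ s, g i) 1 := by
  classical
  induction s using Finset.induction with
  | empty => simp [AddMonoidAlgebra.one_def]
  | insert _ _ h ih =>
    rw [Finset.prod_insert h, ih, AddMonoidAlgebra.single_mul_single, Finset.sum_insert h,
      one_mul]

noncomputable def Esym (n m : ℕ) (r : ℤ) : Laur n :=
  if 0 ≤ r then
    ∑ s ∈ Finset.powersetCard r.toNat (Finset.range m), ∏ i ∈ s, zz n i
  else 0

lemma Esym_neg {n m : ℕ} {r : ℤ} (h : r < 0) : Esym n m r = 0 := by
  rw [Esym, if_neg (by omega)]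

lemma Esym_zero {n m : ℕ} : Esym n m 0 = 1 := by
  rw [Esym, if_pos le_rfl]
  simp

lemma Esym_of_gt {n m : ℕ} {r : ℤ} (h : (m : ℤ) < r) : Esym n m r = 0 := by
  rw [Esym]
  split
  · rw [Finset.powersetCard_eq_empty.2 (by simp; omega), Finset.sum_empty]
  · rfl

lemma Esym_succ {n : ℕ} (m : ℕ) (r : ℤ) :
    Esym n (m+1) r = Esym n m r + zz n m * Esym n m (r-1) := by
  rcases lt_trichotomy r 0 with h | h | h
  · rw [Esym_neg h, Esym_neg h, Esym_neg (by omega), mul_zero, add_zero]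
  · subst h
    rw [Esym_zero, Esym_zero, Esym_neg (by omega), mul_zero, add_zero]
  · have hr : r.toNat = (r-1).toNat + 1 := by omega
    rw [Esym, Esym, Esym, if_pos (by omega), if_pos (by omega), if_pos (by omega), hr,
      Finset.range_add_one, Finset.powersetCard_succ_insert (by simp)]
    rw [Finset.sum_union]
    · congr 1
      rw [Finset.sum_image]
      · rw [Finset.mul_sum]
        apply Finset.sum_congr rfl
        intro s hs
        rw [Finset.prod_insert]
        intro hm
        exact (by simpa using (Finset.mem_powersetCard.1 hs).1 hm : ¬ True) trivial
      · intro s hs t ht hst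
        have hms : m ∉ s := fun hm => by simpa using (Finset.mem_powersetCard.1 hs).1 hm
        have hmt : m ∉ t := fun hm => by simpa using (Finset.mem_powersetCard.1 ht).1 hm
        have := congrArg (Finset.erase · m) hst
        simpa [Finset.erase_insert, hms, hmt] using this
    · rw [Finset.disjoint_left]
      intro s hs hs2
      have hms : m ∉ s := fun hm => by simpa using (Finset.mem_powersetCard.1 hs).1 hm
      obtain ⟨t, _, rfl⟩ := Finset.mem_image.1 hs2
      exact hms (Finset.mem_insert_self _ _)

/-- the swap `x_i ↔ x_i^{-1}` on indices -/
def sg (i : ℕ) : ℕ := if i % 2 = 0 then i + 1 else i - 1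

lemma sg_sg (i : ℕ) : sg (sg i) = i := by
  rcases Nat.even_or_odd i with h | h
  · obtain ⟨k, rfl⟩ := h
    have h1 : (k + k) % 2 = 0 := by omega
    have h2 : (k + k + 1) % 2 = 1 := by omega
    simp [sg, h1, h2]
  · obtain ⟨k, rfl⟩ := h
    have h1 : (2*k + 1) % 2 = 1 := by omega
    have h2 : (2*k) % 2 = 0 := by omega
    simp [sg, h1, h2]

lemma sg_inj : Function.Injective sg :=
  Function.LeftInverse.injective sg_sg

lemma sg_lt {i t : ℕ} (h : i < 2 * t) : sg i < 2 * t := by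
  rcases Nat.even_or_odd i with he | he
  · obtain ⟨k, rfl⟩ := he
    have h1 : (k + k) % 2 = 0 := by omega
    simp [sg, h1]; omega
  · obtain ⟨k, rfl⟩ := he
    have h1 : (2*k+1) % 2 = 1 := by omega
    simp [sg, h1]; omega

lemma sg_div2 (i : ℕ) : sg i / 2 = i / 2 := by
  rcases Nat.even_or_odd i with he | he
  · obtain ⟨k, rfl⟩ := he
    have h1 : (k + k) % 2 = 0 := by omega
    simp [sg, h1]; omega
  · obtain ⟨k, rfl⟩ := he
    have h1 : (2*k+1) % 2 = 1 := by omega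
    simp [sg, h1]; omega

lemma sg_mod2 (i : ℕ) : sg i % 2 = 1 - i % 2 := by
  rcases Nat.even_or_odd i with he | he
  · obtain ⟨k, rfl⟩ := he
    have h1 : (k + k) % 2 = 0 := by omega
    simp [sg, h1]; omega
  · obtain ⟨k, rfl⟩ := he
    have h1 : (2*k+1) % 2 = 1 := by omega
    simp [sg, h1]

lemma wE_sg (n i : ℕ) : wE n (sg i) = - wE n i := by
  unfold wE
  simp only [sg_div2]
  split
  · rcases Nat.even_or_odd i with he | he
    · have h1 : i % 2 = 0 := Nat.even_iff.1 he
      have h2 : sg i % 2 = 1 := by rw [sg_mod2]; omega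
      simp [h1, h2, ← Finsupp.single_neg]
    · have h1 : i % 2 = 1 := Nat.odd_iff.1 he
      have h2 : sg i % 2 = 0 := by rw [sg_mod2]; omega
      simp [h1, h2, ← Finsupp.single_neg]
  · simp

lemma sum_wE_range (n t : ℕ) : ∑ i ∈ Finset.range (2 * t), wE n i = 0 := by
  induction t with
  | zero => simp
  | succ t ih =>
    have h2 : 2 * (t + 1) = (2*t + 1) + 1 := by omega
    rw [h2, Finset.sum_range_succ, Finset.sum_range_succ, ih, zero_add]
    have : (2*t + 1) = sg (2*t) := by
      have h1 : (2*t) % 2 = 0 := by omega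
      simp [sg, h1]
    rw [this, wE_sg]
    simp

lemma sg_image_range (t : ℕ) : (Finset.range (2*t)).image sg = Finset.range (2*t) := by
  apply Finset.eq_of_subset_of_card_le
  · intro j hj
    obtain ⟨i, hi, rfl⟩ := Finset.mem_image.1 hj
    exact Finset.mem_range.2 (sg_lt (Finset.mem_range.1 hi))
  · rw [Finset.card_image_of_injective _ sg_inj]

lemma Esym_compl (n t : ℕ) {r r' : ℤ} (h : r + r' = 2 * t) :
    Esym n (2*t) r = Esym n (2*t) r' := by
  have hmem : ∀ (k k' : ℕ), k + k' = 2*t → ∀ s ∈ Finset.powersetCard k (Finset.range (2*t)),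
      ((Finset.range (2*t) \ s).image sg) ∈ Finset.powersetCard k' (Finset.range (2*t)) := by
    intro k k' hk s hs
    obtain ⟨hsub, hcard⟩ := Finset.mem_powersetCard.1 hs
    refine Finset.mem_powersetCard.2 ⟨?_, ?_⟩
    · intro j hj
      obtain ⟨i, hi, rfl⟩ := Finset.mem_image.1 hj
      exact Finset.mem_range.2 (sg_lt (Finset.mem_range.1 (Finset.mem_sdiff.1 hi).1))
    · rw [Finset.card_image_of_injective _ sg_inj, Finset.card_sdiff_of_subset hsub, hcard,
        Finset.card_range]
      omega
  have hinv : ∀ s : Finset ℕ, s ⊆ Finset.range (2*t) →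
      (Finset.range (2*t) \ ((Finset.range (2*t) \ s).image sg)).image sg = s := by
    intro s hsub
    have h1 : (Finset.range (2*t) \ s).image sg
        = (Finset.range (2*t)).image sg \ s.image sg := Finset.image_sdiff _ _ sg_inj
    rw [h1, sg_image_range]
    have h2 : s.image sg ⊆ Finset.range (2*t) := by
      intro j hj
      obtain ⟨i, hi, rfl⟩ := Finset.mem_image.1 hj
      exact Finset.mem_range.2 (sg_lt (Finset.mem_range.1 (hsub hi)))
    rw [Finset.sdiff_sdiff_self_left, Finset.inter_eq_right.2 h2, Finset.image_image]
    have h3 : sg ∘ sg = id := funext sg_sg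
    rw [h3, Finset.image_id]
  have hsumw : ∀ s : Finset ℕ, s ⊆ Finset.range (2*t) →
      ∑ i ∈ (Finset.range (2*t) \ s).image sg, wE n i = ∑ i ∈ s, wE n i := by
    intro s hsub
    rw [Finset.sum_image (fun x _ y _ h => sg_inj h)]
    rw [Finset.sum_congr rfl (fun i _ => wE_sg n i), Finset.sum_neg_distrib]
    have h2 := Finset.sum_sdiff (f := wE n) hsub
    rw [sum_wE_range] at h2
    rw [eq_neg_of_add_eq_zero_left h2, neg_neg]
  rcases lt_or_ge r 0 with hr | hr
  · rw [Esym_neg hr, Esym_of_gt (show ((2*t : ℕ) : ℤ) < r' by push_cast; omega)]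
  rcases lt_or_ge r' 0 with hr' | hr'
  · rw [Esym_neg hr', Esym_of_gt (show ((2*t : ℕ) : ℤ) < r by push_cast; omega)]
  rcases lt_or_ge (2*(t:ℤ)) r with hr2 | hr2
  · rw [Esym_of_gt (show ((2*t : ℕ) : ℤ) < r by push_cast; omega),
      Esym_neg (show r' < 0 by omega)]
  rw [Esym, Esym, if_pos hr, if_pos hr']
  refine Finset.sum_nbij' (fun s => (Finset.range (2*t) \ s).image sg)
    (fun s => (Finset.range (2*t) \ s).image sg)
    (hmem r.toNat r'.toNat (by omega)) (hmem r'.toNat r.toNat (by omega))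
    (fun s hs => hinv s (Finset.mem_powersetCard.1 hs).1)
    (fun s hs => hinv s (Finset.mem_powersetCard.1 hs).1) ?_
  intro s hs
  unfold zz
  rw [prod_single, prod_single, hsumw s (Finset.mem_powersetCard.1 hs).1]

lemma single_mk_eq {n : ℕ} {v v' : ℕ} (h : v = v') (p : v < n) (p' : v' < n) (e : ℤ) :
    Finsupp.single (⟨v, p⟩ : Fin n) e = Finsupp.single ⟨v', p'⟩ e := by
  subst h; rfl

lemma xpmVar_eq (n : ℕ) (j : Fin (2*n)) :
    xpmVar n j = AddMonoidAlgebra.single (wE n (sg j.val)) 1 := by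
  have hlt : sg (j : ℕ) / 2 < n := by
    rw [sg_div2]; have := j.isLt; omega
  rw [xpmVar, wE, dif_pos hlt]
  congr 1
  rw [single_mk_eq (sg_div2 (j : ℕ)).symm (by have := j.isLt; omega) hlt]
  rcases Nat.even_or_odd (j : ℕ) with he | he
  · have h1 : (j : ℕ) % 2 = 0 := Nat.even_iff.1 he
    have h2 : sg (j : ℕ) % 2 = 1 := by rw [sg_mod2]; omega
    rw [h1, h2]; norm_num
  · have h1 : (j : ℕ) % 2 = 1 := Nat.odd_iff.1 he
    have h2 : sg (j : ℕ) % 2 = 0 := by rw [sg_mod2]; omega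
    rw [h1, h2]; norm_num

lemma epm_eq_Esym (n : ℕ) (r : ℤ) : epm n r = Esym n (2*n) r := by
  rcases lt_or_ge r 0 with h | h
  · rw [epm, if_neg (by omega), Esym_neg h]
  rw [epm, if_pos h, Esym, if_pos h]
  have hsg : ∀ j : Fin (2*n), sg (j : ℕ) < 2*n := fun j => sg_lt j.isLt
  refine Finset.sum_nbij' (fun s : Finset (Fin (2*n)) => s.image (fun j : Fin (2*n) => sg (j : ℕ)))
    (fun t => ((t.image sg).filter (· < 2*n)).attachFin
      (fun m hm => (Finset.mem_filter.1 hm).2)) ?_ ?_ ?_ ?_ ?_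
  · intro s hs
    refine Finset.mem_powersetCard.2 ⟨?_, ?_⟩
    · intro x hx
      obtain ⟨j, _, rfl⟩ := Finset.mem_image.1 hx
      exact Finset.mem_range.2 (hsg j)
    · rw [Finset.card_image_of_injective _
        (fun x y hxy => Fin.ext (sg_inj hxy))]
      exact (Finset.mem_powersetCard.1 hs).2
  · intro t ht
    obtain ⟨hsub, hcard⟩ := Finset.mem_powersetCard.1 ht
    refine Finset.mem_powersetCard.2 ⟨Finset.subset_univ _, ?_⟩
    rw [Finset.card_attachFin]
    have hall : ∀ x ∈ t.image sg, x < 2*n := by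
      intro x hx
      obtain ⟨i, hi, rfl⟩ := Finset.mem_image.1 hx
      exact sg_lt (Finset.mem_range.1 (hsub hi))
    rw [Finset.filter_true_of_mem hall, Finset.card_image_of_injective _ sg_inj, hcard]
  · intro s _
    ext j
    rw [Finset.mem_attachFin]
    simp only [Finset.mem_filter, Finset.mem_image]
    constructor
    · rintro ⟨⟨x, ⟨i, hi, rfl⟩, hxj⟩, -⟩
      have hij : (i : ℕ) = (j : ℕ) := by rw [← sg_sg (i : ℕ), hxj]
      rwa [show i = j from Fin.ext hij] at hi
    · intro hj
      exact ⟨⟨sg (j : ℕ), ⟨j, hj, rfl⟩, sg_sg _⟩, j.isLt⟩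
  · intro t ht
    obtain ⟨hsub, -⟩ := Finset.mem_powersetCard.1 ht
    ext x
    simp only [Finset.mem_image]
    constructor
    · rintro ⟨j, hj, rfl⟩
      rw [Finset.mem_attachFin] at hj
      obtain ⟨hmem, -⟩ := Finset.mem_filter.1 hj
      obtain ⟨i2, hi2, hyj⟩ := Finset.mem_image.1 hmem
      have h2 : sg (j : ℕ) = i2 := by rw [← hyj, sg_sg]
      rwa [h2]
    · intro hx
      have hxlt : x < 2*n := Finset.mem_range.1 (hsub hx)
      refine ⟨⟨sg x, sg_lt hxlt⟩, ?_, sg_sg x⟩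
      rw [Finset.mem_attachFin]
      exact Finset.mem_filter.2 ⟨Finset.mem_image_of_mem _ hx, sg_lt hxlt⟩
  · intro s _
    have h1 : ∀ j ∈ s, xpmVar n j = AddMonoidAlgebra.single (wE n (sg (j : ℕ))) (1:ℤ) :=
      fun j _ => xpmVar_eq n j
    rw [Finset.prod_congr rfl h1, prod_single]
    unfold zz
    rw [prod_single, Finset.sum_image
      (fun x _ y _ hxy => Fin.ext (sg_inj hxy))]

noncomputable def myF (n : ℕ) (a b : ℤ) : ℕ → ℤ → Laur n
  | 0, u => if u = a then 1 else 0
  | 1, u => if a + b + ((1:ℕ):ℤ) + 1 < 2*u then 0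
      else myF n a b 0 u + zz n 0 * myF n a b 0 (u-1)
  | (m+2), u =>
      if a + b + ((m+2 : ℕ):ℤ) + 1 < 2*u then 0
      else myF n a b (m+1) u + zz n (m+1) * myF n a b (m+1) (u-1) +
        (if 2*u = a + b + ((m+2:ℕ):ℤ) then myF n a b m (u-1) else 0)

lemma myF_succ (n : ℕ) (a b : ℤ) (hab : (a+b) % 2 = 0) (m : ℕ) (u : ℤ) :
    myF n a b (m+1) u =
      if a + b + ((m+1:ℕ):ℤ) + 1 < 2*u then 0
      else myF n a b m u + zz n m * myF n a b m (u-1) +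
        (if 2*u = a + b + ((m+1:ℕ):ℤ) then myF n a b (m-1) (u-1) else 0) := by
  cases m with
  | zero =>
    rw [show (myF n a b 1 u) = (if a + b + ((1:ℕ):ℤ) + 1 < 2*u then 0
      else myF n a b 0 u + zz n 0 * myF n a b 0 (u-1)) from rfl]
    rw [if_neg (show ¬ (2*u = a + b + ((0+1:ℕ):ℤ)) by push_cast; omega), add_zero]
  | succ k =>
    rfl

lemma myF_invalid (n : ℕ) (a b : ℤ) (h1 : a ≤ b) (m : ℕ) (u : ℤ)
    (h : a + b + (m:ℤ) + 1 < 2*u) : myF n a b m u = 0 := by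
  match m with
  | 0 =>
    rw [show myF n a b 0 u = (if u = a then 1 else 0) from rfl, if_neg]
    intro huv; subst huv
    simp only [Nat.cast_zero] at h
    omega
  | 1 =>
    rw [show myF n a b 1 u = (if a + b + ((1:ℕ):ℤ) + 1 < 2*u then 0
      else myF n a b 0 u + zz n 0 * myF n a b 0 (u-1)) from rfl,
      if_pos (by push_cast at h ⊢; omega)]
  | (k+2) =>
    rw [show myF n a b (k+2) u = (if a + b + ((k+2 : ℕ):ℤ) + 1 < 2*u then 0
      else myF n a b (k+1) u + zz n (k+1) * myF n a b (k+1) (u-1) +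
        (if 2*u = a + b + ((k+2:ℕ):ℤ) then myF n a b k (u-1) else 0)) from rfl,
      if_pos (by push_cast at h ⊢; omega)]

lemma myF_eq (n : ℕ) (a b : ℤ) (hab : (a+b) % 2 = 0) (h1 : a ≤ b) :
    ∀ m : ℕ, ∀ u : ℤ, 2*u ≤ a + b + (m:ℤ) →
      myF n a b m u = Esym n m (u-a) + Esym n m (u-b-1) := by
  have hz : ∀ r : ℤ, r ≠ 0 → Esym n 0 r = 0 := by
    intro r hr
    rcases lt_or_gt_of_ne hr with h | h
    · exact Esym_neg h
    · exact Esym_of_gt (by push_cast; omega)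
  intro m
  induction m using Nat.strong_induction_on with
  | _ m IH =>
  match m with
  | 0 =>
    intro u hu
    simp only [Nat.cast_zero] at hu
    by_cases h : u = a
    · rw [show myF n a b 0 u = (if u = a then 1 else 0) from rfl, if_pos h,
        show u - a = 0 by omega, Esym_zero, hz (u - b - 1) (by omega), add_zero]
    · rw [show myF n a b 0 u = (if u = a then 1 else 0) from rfl, if_neg h,
        hz (u - a) (by omega), hz (u - b - 1) (by omega), add_zero]
  | (k+1) =>
    intro u hu
    rw [myF_succ n a b hab k u, if_neg (by push_cast at hu ⊢; omega)]
    by_cases hd : 2*u = a + b + ((k+1:ℕ):ℤ)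
    · rw [if_pos hd]
      push_cast at hu hd
      obtain ⟨j, rfl⟩ : ∃ j, k = j+1 := ⟨k-1, by omega⟩
      -- k = j+1 is odd, j is even
      obtain ⟨t, rfl⟩ : ∃ t, j = 2*t := ⟨j/2, by omega⟩
      -- expand myF (j+1) u  (odd boundary)
      have e1 : myF n a b (2*t+1) u = zz n (2*t) * myF n a b (2*t) (u-1) := by
        rw [myF_succ n a b hab (2*t) u,
          if_neg (show ¬ (a + b + ((2*t+1:ℕ):ℤ) + 1 < 2*u) by push_cast; omega),
          if_neg (show ¬ (2*u = a + b + ((2*t+1:ℕ):ℤ)) by push_cast; omega),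
          myF_invalid n a b h1 (2*t) u (by push_cast; omega), zero_add, add_zero]
      have e2 : myF n a b (2*t) (u-1)
          = Esym n (2*t) (u-1-a) + Esym n (2*t) (u-1-b-1) :=
        IH (2*t) (by omega) (u-1) (by push_cast; omega)
      have e3 : myF n a b (2*t+1) (u-1)
          = Esym n (2*t+1) (u-1-a) + Esym n (2*t+1) (u-1-b-1) :=
        IH (2*t+1) (by omega) (u-1) (by push_cast; omega)
      rw [e1, e2, e3]
      -- now pure symmetric-function algebra
      have c1 : Esym n (2*t) (u-a) = Esym n (2*t) (u-b-2) :=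
        Esym_compl n t (by push_cast; omega)
      have c2 : Esym n (2*t) (u-b-1) = Esym n (2*t) (u-a-1) :=
        Esym_compl n t (by push_cast; omega)
      have r1 : Esym n (2*t+1+1) (u-a)
          = Esym n (2*t+1) (u-a) + zz n (2*t+1) * Esym n (2*t+1) (u-a-1) :=
        Esym_succ (2*t+1) (u-a)
      have r2 : Esym n (2*t+1+1) (u-b-1)
          = Esym n (2*t+1) (u-b-1) + zz n (2*t+1) * Esym n (2*t+1) (u-b-1-1) :=
        Esym_succ (2*t+1) (u-b-1)
      have r3 : Esym n (2*t+1) (u-a)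
          = Esym n (2*t) (u-a) + zz n (2*t) * Esym n (2*t) (u-a-1) :=
        Esym_succ (2*t) (u-a)
      have r4 : Esym n (2*t+1) (u-b-1)
          = Esym n (2*t) (u-b-1) + zz n (2*t) * Esym n (2*t) (u-b-1-1) :=
        Esym_succ (2*t) (u-b-1)
      have a1 : u-1-a = u-a-1 := by ring
      have a2 : u-1-b-1 = u-b-1-1 := by ring
      have a3 : u-b-2 = u-b-1-1 := by ring
      rw [show (2*t+1+1 : ℕ) = 2*t+1+1 from rfl] at r1
      rw [a1, a2] at e2 e3
      rw [show ((2*t+1) - 1 : ℕ) = 2*t from rfl, e2,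
        show ((2*t+1)+1 : ℕ) = 2*t+1+1 from rfl, r1, r2, r3, r4, c1, c2, a3]
      ring
    · rw [if_neg hd, add_zero]
      push_cast at hu hd
      have e1 : myF n a b k u = Esym n k (u-a) + Esym n k (u-b-1) :=
        IH k (by omega) u (by omega)
      have e2 : myF n a b k (u-1) = Esym n k (u-1-a) + Esym n k (u-1-b-1) :=
        IH k (by omega) (u-1) (by omega)
      have a1 : u-1-a = u-a-1 := by ring
      have a2 : u-1-b-1 = u-b-1-1 := by ring
      rw [e1, e2, a1, a2, Esym_succ k (u-a), Esym_succ k (u-b-1)]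
      ring

/-! ### Combinatorial layer -/

def StepsOK (l : List Pt) : Prop :=
  ∀ s ∈ l, s = ((1:ℤ),(0:ℤ)) ∨ s = ((0:ℤ),(1:ℤ)) ∨ s = ((1:ℤ),(1:ℤ))

def V (a b : ℤ) (m : ℕ) (u : ℤ) : Set (List Pt) :=
  {l | StepsOK l ∧ (a, b) + l.sum = (u, a + b + (m:ℤ) - u) ∧
    (∀ p ∈ pathPoints (a, b) l, p.1 - 1 ≤ p.2) ∧ DiagOK (a, b) l}

lemma pathPoints_append (l : List Pt) : ∀ (p : Pt) (s : Pt),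
    pathPoints p (l ++ [s]) = pathPoints p l ++ [p + l.sum + s] := by
  induction l with
  | nil => intro p s; simp [pathPoints]
  | cons h t ih =>
    intro p s
    simp only [List.cons_append, pathPoints, List.append_eq, ih, List.sum_cons]
    simp [add_assoc]

lemma pathW_append (n : ℕ) (a b : ℤ) (l : List Pt) : ∀ (p : Pt) (s : Pt),
    pathW n a b p (l ++ [s]) = pathW n a b p l * stepW n a b (p + l.sum) s := by
  induction l with
  | nil => intro p s; simp [pathW]
  | cons h t ih =>
    intro p s
    simp only [List.cons_append, pathW, List.append_eq, ih, List.sum_cons]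
    rw [← add_assoc, mul_assoc]

lemma diagOK_append (l : List Pt) : ∀ (p : Pt) (s : Pt),
    DiagOK p (l ++ [s]) ↔
      DiagOK p l ∧ (s = ((1:ℤ),(1:ℤ)) → (p + l.sum).2 = (p + l.sum).1) := by
  induction l with
  | nil => intro p s; simp [DiagOK]
  | cons h t ih =>
    intro p s
    simp only [List.cons_append, DiagOK, List.append_eq, ih, List.sum_cons, ← add_assoc]
    tauto

lemma endpoint_mem : ∀ (p : Pt) (l : List Pt), p + l.sum ∈ pathPoints p l
  | p, [] => by simp [pathPoints]
  | p, s :: t => by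
    rw [pathPoints, List.sum_cons, ← add_assoc]
    exact List.mem_cons_of_mem _ (endpoint_mem (p+s) t)

lemma length_le : ∀ l : List Pt, StepsOK l → (l.length : ℤ) ≤ l.sum.1 + l.sum.2
  | [], _ => by simp
  | s :: t, h => by
    have hs := h s List.mem_cons_self
    have ht := length_le t (fun x hx => h x (List.mem_cons_of_mem _ hx))
    simp only [List.length_cons, List.sum_cons, Prod.fst_add, Prod.snd_add]
    push_cast
    rcases hs with rfl | rfl | rfl <;> simp <;> omega

lemma exists_sub (S : Set Pt) : ∀ l : List Pt, (∀ x ∈ l, x ∈ S) →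
    ∃ l' : List S, List.map Subtype.val l' = l
  | [], _ => ⟨[], rfl⟩
  | x :: t, h => by
    obtain ⟨t', ht'⟩ := exists_sub S t (fun y hy => h y (List.mem_cons_of_mem _ hy))
    exact ⟨⟨x, h x List.mem_cons_self⟩ :: t', by simp [ht']⟩

lemma V_finite (a b : ℤ) (m : ℕ) (u : ℤ) : (V a b m u).Finite := by
  classical
  set S : Set Pt := {((1:ℤ),(0:ℤ)), ((0:ℤ),(1:ℤ)), ((1:ℤ),(1:ℤ))} with hSdef
  have hS : S.Finite := (Set.finite_singleton _).insert _ |>.insert _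
  haveI := hS.to_subtype
  apply Set.Finite.subset ((List.finite_length_le S m).image (List.map Subtype.val))
  rintro l ⟨hsteps, hsum, -, -⟩
  have hlen : (l.length : ℤ) ≤ l.sum.1 + l.sum.2 := length_le l hsteps
  have h1 : a + l.sum.1 = u := by
    have := congrArg Prod.fst hsum; simpa using this
  have h2 : b + l.sum.2 = a + b + (m:ℤ) - u := by
    have := congrArg Prod.snd hsum; simpa using this
  have hlm : l.length ≤ m := by omega
  obtain ⟨l', hl'⟩ := exists_sub S l (fun x hx => by
    rcases hsteps x hx with h | h | h <;> simp [hSdef, h])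
  refine ⟨l', ?_, hl'⟩
  have : l'.length = l.length := by rw [← hl', List.length_map]
  simpa [this] using hlm

lemma finsum_mem_mul_fin {n : ℕ} (s : Set (List Pt)) (hs : s.Finite)
    (f : List Pt → Laur n) (c : Laur n) :
    (∑ᶠ l ∈ s, f l * c) = (∑ᶠ l ∈ s, f l) * c := by
  rw [← hs.coe_toFinset, finsum_mem_coe_finset, finsum_mem_coe_finset, Finset.sum_mul]

lemma V_zero (a b : ℤ) (h1 : a - 1 ≤ b) (u : ℤ) :
    V a b 0 u = if u = a then {([] : List Pt)} else ∅ := by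
  ext l
  constructor
  · rintro ⟨hsteps, hsum, -, -⟩
    have hlen : (l.length : ℤ) ≤ l.sum.1 + l.sum.2 := length_le l hsteps
    have h2 : a + l.sum.1 = u := by
      have := congrArg Prod.fst hsum; simpa using this
    have h3 : b + l.sum.2 = a + b + ((0:ℕ):ℤ) - u := by
      have := congrArg Prod.snd hsum; simpa using this
    push_cast at h3
    have hl0 : l.length = 0 := by omega
    have hnil : l = [] := List.length_eq_zero_iff.1 hl0
    subst hnil
    simp only [List.sum_nil] at h2
    have hua : u = a := by
      have : (0 : Pt).1 = 0 := rfl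
      omega
    rw [if_pos hua]
    exact rfl
  · intro hl
    by_cases h : u = a
    · rw [if_pos h] at hl
      rw [Set.mem_singleton_iff] at hl
      subst hl
      refine ⟨fun s hs => absurd hs List.not_mem_nil, ?_, ?_, trivial⟩
      · have : ((a,b) : Pt) + [].sum = (a, b) := by simp
        rw [this, h]
        have : a + b + ((0:ℕ):ℤ) - a = b := by push_cast; ring
        rw [this]
      · intro p hp
        simp only [pathPoints, List.mem_singleton] at hp
        subst hp
        simpa using h1
    · rw [if_neg h] at hl
      exact absurd hl (Set.notMem_empty l)

lemma V_invalid (a b : ℤ) (m : ℕ) (u : ℤ) (h : a + b + (m:ℤ) + 1 < 2*u) :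
    V a b m u = ∅ := by
  ext l
  simp only [Set.mem_empty_iff_false, iff_false]
  rintro ⟨-, hsum, hpts, -⟩
  have hend := hpts _ (endpoint_mem (a,b) l)
  rw [hsum] at hend
  simp only at hend
  omega

lemma sum_comp {a b u v : ℤ} {w : Pt} (h : ((a,b) : Pt) + w = (u,v)) :
    a + w.1 = u ∧ b + w.2 = v := by
  constructor
  · have := congrArg Prod.fst h; simpa using this
  · have := congrArg Prod.snd h; simpa using this

lemma mk_sum {a b u v : ℤ} {w : Pt} (h1 : a + w.1 = u) (h2 : b + w.2 = v) :
    ((a,b) : Pt) + w = (u,v) := by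
  have : ((a,b) : Pt) + w = (a + w.1, b + w.2) := rfl
  rw [this, h1, h2]

lemma V_succ (a b : ℤ) (hab : (a+b) % 2 = 0) (m : ℕ) (u : ℤ)
    (hv : 2*u ≤ a + b + (m:ℤ) + 2) :
    V a b (m+1) u =
      ((fun l => l ++ [((0:ℤ),(1:ℤ))]) '' V a b m u) ∪
      ((fun l => l ++ [((1:ℤ),(0:ℤ))]) '' V a b m (u-1)) ∪
      (if 2*u = a + b + (m:ℤ) + 1 then
        (fun l => l ++ [((1:ℤ),(1:ℤ))]) '' V a b (m-1) (u-1) else ∅) := by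
  ext l
  constructor
  · rintro ⟨hsteps, hsum, hpts, hdiag⟩
    have hne : l ≠ [] := by
      rintro rfl
      obtain ⟨h1, h2⟩ := sum_comp hsum
      have z1 : ((0 : Pt)).1 = 0 := rfl
      have z2 : ((0 : Pt)).2 = 0 := rfl
      simp only [List.sum_nil, z1, z2, add_zero] at h1 h2
      push_cast at h2
      omega
    obtain ⟨l', s, rfl⟩ := l.eq_nil_or_concat'.resolve_left hne
    have hst' : StepsOK l' := fun x hx => hsteps x (List.mem_append_left _ hx)
    have hs := hsteps s (List.mem_append_right _ (List.mem_singleton_self s))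
    have hpts' : ∀ p ∈ pathPoints (a,b) l', p.1 - 1 ≤ p.2 := by
      intro p hp
      exact hpts p (by rw [pathPoints_append]; exact List.mem_append_left _ hp)
    obtain ⟨hdiag', hD⟩ := (diagOK_append l' (a,b) s).1 hdiag
    rw [show (l' ++ [s]).sum = l'.sum + s by simp] at hsum
    obtain ⟨h1, h2⟩ := sum_comp hsum
    simp only [Prod.fst_add, Prod.snd_add] at h1 h2
    push_cast at h2
    rcases hs with rfl | rfl | rfl
    · -- horizontal step (1,0)
      refine Or.inl (Or.inr ⟨l', ⟨hst', ?_, hpts', hdiag'⟩, rfl⟩)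
      exact mk_sum (by simp only at h1; omega)
        (by simp only at h2; push_cast; omega)
    · -- vertical step (0,1)
      refine Or.inl (Or.inl ⟨l', ⟨hst', ?_, hpts', hdiag'⟩, rfl⟩)
      exact mk_sum (by simp only at h1; omega)
        (by simp only at h2; push_cast; omega)
    · -- diagonal step (1,1)
      have hdg : b + l'.sum.2 = a + l'.sum.1 := by
        have := hD rfl
        simpa using this
      have hcond : 2*u = a + b + (m:ℤ) + 1 := by simp only at h1 h2; omega
      refine Or.inr ?_
      rw [if_pos hcond]
      obtain ⟨k, rfl⟩ : ∃ k, m = k+1 := ⟨m-1, by omega⟩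
      refine ⟨l', ⟨hst', ?_, hpts', hdiag'⟩, rfl⟩
      rw [show (k+1-1 : ℕ) = k from rfl]
      exact mk_sum (by simp only at h1; omega)
        (by simp only at h2; push_cast at hcond ⊢; omega)
  · intro hl
    rcases hl with (⟨l', hl', rfl⟩ | ⟨l', hl', rfl⟩) | hl
    · -- vertical append
      obtain ⟨hst', hsum', hpts', hdiag'⟩ := hl'
      obtain ⟨e1, e2⟩ := sum_comp hsum'
      refine ⟨?_, ?_, ?_, ?_⟩
      · intro x hx
        rcases List.mem_append.1 hx with hx | hx
        · exact hst' x hx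
        · rw [List.mem_singleton.1 hx]; exact Or.inr (Or.inl rfl)
      · rw [show (l' ++ [((0:ℤ),(1:ℤ))]).sum = l'.sum + (0,1) by simp]
        exact mk_sum (by simp only [Prod.fst_add]; omega)
          (by simp only [Prod.snd_add]; push_cast at e2 ⊢; omega)
      · intro p hp
        rw [pathPoints_append] at hp
        rcases List.mem_append.1 hp with hp | hp
        · exact hpts' p hp
        · rw [List.mem_singleton.1 hp]
          simp only [Prod.fst_add, Prod.snd_add]
          push_cast at e2
          omega
      · rw [diagOK_append]
        exact ⟨hdiag', fun h => absurd h (by simp)⟩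
    · -- horizontal append
      obtain ⟨hst', hsum', hpts', hdiag'⟩ := hl'
      obtain ⟨e1, e2⟩ := sum_comp hsum'
      refine ⟨?_, ?_, ?_, ?_⟩
      · intro x hx
        rcases List.mem_append.1 hx with hx | hx
        · exact hst' x hx
        · rw [List.mem_singleton.1 hx]; exact Or.inl rfl
      · rw [show (l' ++ [((1:ℤ),(0:ℤ))]).sum = l'.sum + (1,0) by simp]
        exact mk_sum (by simp only [Prod.fst_add]; omega)
          (by simp only [Prod.snd_add]; push_cast at e2 ⊢; omega)
      · intro p hp
        rw [pathPoints_append] at hp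
        rcases List.mem_append.1 hp with hp | hp
        · exact hpts' p hp
        · rw [List.mem_singleton.1 hp]
          simp only [Prod.fst_add, Prod.snd_add]
          push_cast at e2
          omega
      · rw [diagOK_append]
        exact ⟨hdiag', fun h => absurd h (by simp)⟩
    · -- diagonal append
      by_cases hcond : 2*u = a + b + (m:ℤ) + 1
      swap
      · rw [if_neg hcond] at hl
        exact absurd hl (Set.notMem_empty l)
      rw [if_pos hcond] at hl
      obtain ⟨l', hl', rfl⟩ := hl
      obtain ⟨k, rfl⟩ : ∃ k, m = k+1 := ⟨m-1, by omega⟩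
      rw [show (k+1-1 : ℕ) = k from rfl] at hl'
      obtain ⟨hst', hsum', hpts', hdiag'⟩ := hl'
      obtain ⟨e1, e2⟩ := sum_comp hsum'
      push_cast at e2 hcond
      refine ⟨?_, ?_, ?_, ?_⟩
      · intro x hx
        rcases List.mem_append.1 hx with hx | hx
        · exact hst' x hx
        · rw [List.mem_singleton.1 hx]; exact Or.inr (Or.inr rfl)
      · rw [show (l' ++ [((1:ℤ),(1:ℤ))]).sum = l'.sum + (1,1) by simp]
        exact mk_sum (by simp only [Prod.fst_add]; omega)
          (by simp only [Prod.snd_add]; push_cast; omega)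
      · intro p hp
        rw [pathPoints_append] at hp
        rcases List.mem_append.1 hp with hp | hp
        · exact hpts' p hp
        · rw [List.mem_singleton.1 hp]
          simp only [Prod.fst_add, Prod.snd_add]
          omega
      · rw [diagOK_append]
        refine ⟨hdiag', fun _ => ?_⟩
        simp only [Prod.fst_add, Prod.snd_add]
        omega

lemma Xpm_eq_zz_even (n m : ℕ) (hm : m % 2 = 0) : Xpm n ((m:ℤ)/2) (-1) = zz n m := by
  rw [Xpm, zz, wE]
  by_cases h : m / 2 < n
  · rw [dif_pos ⟨by positivity, by omega⟩, dif_pos h]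
    congr 1
    rw [single_mk_eq (show ((m:ℤ)/2).toNat = m/2 by omega) (by omega) h, hm]
    norm_num
  · rw [dif_neg (by omega), dif_neg h, AddMonoidAlgebra.one_def]

lemma Xpm_eq_zz_odd (n m : ℕ) (hm : m % 2 = 1) : Xpm n (((m:ℤ)+1)/2 - 1) 1 = zz n m := by
  have hk : ((m:ℤ)+1)/2 - 1 = (m:ℤ)/2 := by omega
  rw [hk, Xpm, zz, wE]
  by_cases h : m / 2 < n
  · rw [dif_pos ⟨by positivity, by omega⟩, dif_pos h]
    congr 1
    rw [single_mk_eq (show ((m:ℤ)/2).toNat = m/2 by omega) (by omega) h, hm]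
    norm_num
  · rw [dif_neg (by omega), dif_neg h, AddMonoidAlgebra.one_def]

lemma stepW_horiz (n : ℕ) (a b : ℤ) (p : Pt) (m : ℕ)
    (hp : p.1 + p.2 - a - b = (m:ℤ)) :
    stepW n a b p ((1:ℤ),(0:ℤ)) = zz n m := by
  rw [stepW, if_pos rfl, hp]
  rcases Nat.even_or_odd m with he | he
  · have h1 : m % 2 = 0 := Nat.even_iff.1 he
    rw [if_pos (by omega), Xpm_eq_zz_even n m h1]
  · have h1 : m % 2 = 1 := Nat.odd_iff.1 he
    rw [if_neg (by omega), Xpm_eq_zz_odd n m h1]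

lemma stepW_vert (n : ℕ) (a b : ℤ) (p : Pt) : stepW n a b p ((0:ℤ),(1:ℤ)) = 1 := by
  rw [stepW, if_neg (by simp)]

lemma stepW_diag (n : ℕ) (a b : ℤ) (p : Pt) : stepW n a b p ((1:ℤ),(1:ℤ)) = 1 := by
  rw [stepW, if_neg (by intro h; exact absurd (congrArg Prod.snd h) (by norm_num))]

lemma key (n : ℕ) (a b : ℤ) (hab : (a+b) % 2 = 0) (h1 : a - 1 ≤ b) :
    ∀ m : ℕ, ∀ u : ℤ, (∑ᶠ l ∈ V a b m u, pathW n a b (a,b) l) = myF n a b m u := by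
  intro m
  induction m using Nat.strong_induction_on with
  | _ m IH =>
  match m with
  | 0 =>
    intro u
    rw [V_zero a b h1 u]
    by_cases h : u = a
    · rw [if_pos h, finsum_mem_singleton,
        show myF n a b 0 u = (if u = a then 1 else 0) from rfl, if_pos h]
      rfl
    · rw [if_neg h, finsum_mem_empty,
        show myF n a b 0 u = (if u = a then 1 else 0) from rfl, if_neg h]
  | (k+1) =>
    intro u
    rw [myF_succ n a b hab k u]
    by_cases hv : a + b + ((k+1:ℕ):ℤ) + 1 < 2*u
    · rw [if_pos hv, V_invalid a b (k+1) u hv, finsum_mem_empty]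
    · rw [if_neg hv]
      push_cast at hv
      rw [V_succ a b hab k u (by omega)]
      have hinjU : Set.InjOn (fun l => l ++ [((0:ℤ),(1:ℤ))]) (V a b k u) :=
        fun x _ y _ h => List.append_cancel_right h
      have hinjR : Set.InjOn (fun l => l ++ [((1:ℤ),(0:ℤ))]) (V a b k (u-1)) :=
        fun x _ y _ h => List.append_cancel_right h
      have hinjD : Set.InjOn (fun l => l ++ [((1:ℤ),(1:ℤ))]) (V a b (k-1) (u-1)) :=
        fun x _ y _ h => List.append_cancel_right h
      have hfinU := (V_finite a b k u).image (fun l => l ++ [((0:ℤ),(1:ℤ))])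
      have hfinR := (V_finite a b k (u-1)).image (fun l => l ++ [((1:ℤ),(0:ℤ))])
      have hfinD : (if 2*u = a + b + (k:ℤ) + 1 then
          (fun l => l ++ [((1:ℤ),(1:ℤ))]) '' V a b (k-1) (u-1) else ∅).Finite := by
        split
        · exact (V_finite a b (k-1) (u-1)).image _
        · exact Set.finite_empty
      have hdisj1 : Disjoint ((fun l => l ++ [((0:ℤ),(1:ℤ))]) '' V a b k u)
          ((fun l => l ++ [((1:ℤ),(0:ℤ))]) '' V a b k (u-1)) := by
        rw [Set.disjoint_left]
        rintro x ⟨l1, -, rfl⟩ ⟨l2, -, hx⟩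
        have := (List.append_singleton_inj.1 hx).2
        simp at this
      have hdisj2 : Disjoint (((fun l => l ++ [((0:ℤ),(1:ℤ))]) '' V a b k u) ∪
          ((fun l => l ++ [((1:ℤ),(0:ℤ))]) '' V a b k (u-1)))
          (if 2*u = a + b + (k:ℤ) + 1 then
            (fun l => l ++ [((1:ℤ),(1:ℤ))]) '' V a b (k-1) (u-1) else ∅) := by
        split
        · rw [Set.disjoint_left]
          rintro x (⟨l1, -, rfl⟩ | ⟨l1, -, rfl⟩) ⟨l2, -, hx⟩ <;>
          · have h0 := (List.append_singleton_inj.1 hx).2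
            have h2 := congrArg Prod.fst h0
            have h3 := congrArg Prod.snd h0
            simp only [Prod.fst_one, Prod.snd_one] at h2 h3
            omega
        · exact Set.disjoint_empty _
      rw [finsum_mem_union hdisj2 (hfinU.union hfinR) hfinD,
        finsum_mem_union hdisj1 hfinU hfinR]
      congr 1
      · congr 1
        · -- vertical part
          rw [finsum_mem_image hinjU,
            finsum_mem_congr rfl (fun l hl => by
              rw [pathW_append, stepW_vert, mul_one]),
            IH k (by omega) u]
        · -- horizontal part
          rw [finsum_mem_image hinjR,
            finsum_mem_congr rfl (fun l hl => ?_),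
            finsum_mem_mul_fin _ (V_finite a b k (u-1)) _ (zz n k),
            IH k (by omega) (u-1), mul_comm]
          rw [pathW_append]
          congr 1
          obtain ⟨-, hsum', -, -⟩ := hl
          rw [hsum']
          exact stepW_horiz n a b _ k (by simp only; ring)
      · -- diagonal part
        by_cases hc : 2*u = a + b + (k:ℤ) + 1
        · rw [if_pos hc, if_pos (by push_cast; omega),
            finsum_mem_image hinjD,
            finsum_mem_congr rfl (fun l hl => by
              rw [pathW_append, stepW_diag, mul_one]),
            IH (k-1) (by omega) (u-1)]
        · rw [if_neg hc, if_neg (by push_cast; omega), finsum_mem_empty]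


/-- **(Corollary: odd orthogonal paths.)** For `a + b` even and `(a,b)`,
`(c, 2n+a+b-c)` strictly above `y = x - 1`, the generating function of lattice
paths from `(a,b)` to `(c, 2n+a+b-c)` with steps `(1,0), (0,1), (1,1)`, diagonal
steps only starting on `y = x` (weight `1`), staying weakly above `y = x - 1`, is
`e_{c-a}(x^±) + e_{c-b-1}(x^±)`. -/
theorem stmt6 (n : ℕ) (a b c : ℤ) (hab : (a + b) % 2 = 0)
    (h1 : a - 1 < b) (h2 : c - 1 < 2 * (n : ℤ) + a + b - c) :
    (∑ᶠ (l : List Pt) (_ :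
        (∀ s ∈ l, s = ((1:ℤ),(0:ℤ)) ∨ s = ((0:ℤ),(1:ℤ)) ∨ s = ((1:ℤ),(1:ℤ))) ∧
        (a, b) + l.sum = (c, 2 * (n : ℤ) + a + b - c) ∧
        (∀ p ∈ pathPoints (a, b) l, p.1 - 1 ≤ p.2) ∧
        DiagOK (a, b) l),
      pathW n a b (a, b) l)
      = epm n (c - a) + epm n (c - b - 1) := by
  have hpt : ((c, 2 * (n:ℤ) + a + b - c) : Pt) = (c, a + b + ((2*n : ℕ):ℤ) - c) := by
    rw [Prod.mk.injEq]
    exact ⟨rfl, by push_cast; ring⟩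
  have hstep : (∑ᶠ (l : List Pt) (_ :
        (∀ s ∈ l, s = ((1:ℤ),(0:ℤ)) ∨ s = ((0:ℤ),(1:ℤ)) ∨ s = ((1:ℤ),(1:ℤ))) ∧
        (a, b) + l.sum = (c, 2 * (n : ℤ) + a + b - c) ∧
        (∀ p ∈ pathPoints (a, b) l, p.1 - 1 ≤ p.2) ∧
        DiagOK (a, b) l),
      pathW n a b (a, b) l)
      = ∑ᶠ l ∈ V a b (2*n) c, pathW n a b (a,b) l := by
    apply finsum_congr
    intro l
    apply finsum_congr_Prop
    · intro _
      rfl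
    · rw [hpt]
      rfl
  rw [hstep, key n a b hab (by omega) (2*n) c,
    myF_eq n a b hab (by omega) (2*n) c (by push_cast; omega),
    epm_eq_Esym, epm_eq_Esym]
end
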